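/- arXiv:2306.06447 — 7 statements merged into one kernel-verified Lean document; each statement's English description precedes it below -/
import Mathlib

section
/- Upper Lipschitz-type estimate for the p-power map, 1 < p ≤ 2: for all a, b ∈ ℝ^N not both zero, ‖ ‖a‖^{p−2}a − ‖b‖^{p−2}b ‖ ≤ (3 − p) ‖b − a‖ ∫₀¹ ‖a + τ(b − a)‖^{p−2} dτ; in particular the left-hand side is at most 2 ‖b − a‖ ∫₀¹ ‖a + τ(b − a)‖^{p−2} dτ. -/
open MeasureTheory intervalIntegral Set Real Filter

local notation "⟪" x ", " y "⟫" => @inner ℝ _ _ x y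

lemma absRpow_intervalIntegrable {r : ℝ} (hr : -1 < r) (s t : ℝ) :
    IntervalIntegrable (fun x : ℝ => |x| ^ r) volume s t := by
  suffices H : ∀ c : ℝ, IntervalIntegrable (fun x : ℝ => |x| ^ r) volume 0 c from
    (H s).symm.trans (H t)
  have Hpos : ∀ c : ℝ, 0 ≤ c → IntervalIntegrable (fun x : ℝ => |x| ^ r) volume 0 c := by
    intro c hc
    have h1 := intervalIntegrable_rpow' (a := 0) (b := c) hr
    rw [intervalIntegrable_iff, uIoc_of_le hc] at h1 ⊢
    exact h1.congr_fun (fun x hx => by rw [abs_of_pos hx.1]) measurableSet_Ioc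
  intro c
  rcases le_total 0 c with hc | hc
  · exact Hpos c hc
  · rw [IntervalIntegrable.iff_comp_neg, neg_zero]
    simpa [abs_neg] using Hpos (-c) (by linarith)

section Main

variable {N : ℕ}

-- continuity of the p-power map
lemma pPow_norm (p : ℝ) (hp₁ : 1 < p) (y : EuclideanSpace ℝ (Fin N)) :
    ‖(‖y‖ ^ (p - 2)) • y‖ = ‖y‖ ^ (p - 1) := by
  rcases eq_or_ne y 0 with rfl | hy
  · simp [Real.zero_rpow (sub_pos.mpr hp₁).ne']
  · rw [norm_smul, Real.norm_of_nonneg (Real.rpow_nonneg (norm_nonneg _) _),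
      ← Real.rpow_add_one (norm_ne_zero_iff.mpr hy)]
    ring_nf

lemma pPow_continuous (p : ℝ) (hp₁ : 1 < p) :
    Continuous (fun y : EuclideanSpace ℝ (Fin N) => (‖y‖ ^ (p - 2)) • y) := by
  rw [continuous_iff_continuousAt]
  intro y
  rcases eq_or_ne y 0 with rfl | hy
  · have htend : Tendsto (fun y : EuclideanSpace ℝ (Fin N) => ‖y‖ ^ (p - 1))
        (nhds 0) (nhds 0) := by
      have hc : ContinuousAt (fun y : EuclideanSpace ℝ (Fin N) => ‖y‖ ^ (p - 1)) 0 :=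
        (continuous_norm.continuousAt).rpow_const (Or.inr (by linarith))
      simpa [ContinuousAt, Real.zero_rpow (sub_pos.mpr hp₁).ne'] using hc
    have := squeeze_zero_norm (fun y => (pPow_norm p hp₁ y).le) htend
    simpa [ContinuousAt] using this
  · exact ((continuous_norm.continuousAt).rpow_const
      (Or.inl (norm_ne_zero_iff.mpr hy))).smul continuousAt_id

end Main

set_option maxHeartbeats 1000000 in
/-- Upper Lipschitz-type estimate for the `p`-power map, `1 < p ≤ 2`. -/
theorem pPower_upper_estimate (p : ℝ) (hp₁ : 1 < p) (hp₂ : p ≤ 2) (N : ℕ)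
    (a b : EuclideanSpace ℝ (Fin N)) (hab : ¬(a = 0 ∧ b = 0)) :
    ‖‖a‖ ^ (p - 2) • a - ‖b‖ ^ (p - 2) • b‖
        ≤ (3 - p) * ‖b - a‖ * ∫ τ in (0:ℝ)..1, ‖a + τ • (b - a)‖ ^ (p - 2) ∧
    ‖‖a‖ ^ (p - 2) • a - ‖b‖ ^ (p - 2) • b‖
        ≤ 2 * ‖b - a‖ * ∫ τ in (0:ℝ)..1, ‖a + τ • (b - a)‖ ^ (p - 2) := by
  set v := b - a with hv
  by_cases hv0 : v = 0
  · have hba : b = a := by rw [← sub_eq_zero]; exact hv0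
    subst hba
    constructor <;> simp [hv0]
  -- main case
  have hr : -1 < p - 2 := by linarith
  have hrle : p - 2 ≤ 0 := by linarith
  have hvn : (0:ℝ) < ‖v‖ := norm_pos_iff.mpr hv0
  set c : ℝ := -(⟪a, v⟫) / ‖v‖ ^ 2 with hc
  have hw : ⟪a + c • v, v⟫ = 0 := by
    rw [inner_add_left, real_inner_smul_left, real_inner_self_eq_norm_sq, hc]
    field_simp
    ring
  have hlow : ∀ τ : ℝ, |τ - c| * ‖v‖ ≤ ‖a + τ • v‖ := by
    intro τ
    have hdecomp : a + τ • v = (a + c • v) + (τ - c) • v := by module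
    have hsq := norm_add_sq_real (a + c • v) ((τ - c) • v)
    rw [real_inner_smul_right, hw, mul_zero, norm_smul, Real.norm_eq_abs] at hsq
    calc |τ - c| * ‖v‖ = √((|τ - c| * ‖v‖) ^ 2) := (Real.sqrt_sq (by positivity)).symm
      _ ≤ √(‖a + τ • v‖ ^ 2) := by
          apply Real.sqrt_le_sqrt
          rw [hdecomp, hsq]
          nlinarith [sq_nonneg ‖a + c • v‖]
      _ = ‖a + τ • v‖ := Real.sqrt_sq (norm_nonneg _)
  have hInt : IntervalIntegrable (fun τ : ℝ => ‖a + τ • v‖ ^ (p - 2)) volume 0 1 := by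
    have hx_cont : Continuous (fun τ : ℝ => a + τ • v) :=
      continuous_const.add (continuous_id.smul continuous_const)
    have hg : IntervalIntegrable (fun τ : ℝ => ‖v‖ ^ (p - 2) * |τ - c| ^ (p - 2))
        volume 0 1 := by
      have h1 := (absRpow_intervalIntegrable hr (0 - c) (1 - c)).comp_sub_right c
      have h2 := h1.const_mul (‖v‖ ^ (p - 2))
      simpa using h2
    refine hg.mono_fun ?_ ?_
    · exact ((hx_cont.norm.measurable).pow measurable_const).aestronglyMeasurable
    · have hae : ∀ᵐ τ : ℝ ∂volume, τ ≠ c := by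
        rw [ae_iff]
        simp only [ne_eq, not_not, Set.setOf_eq_eq_singleton]
        exact measure_singleton c
      refine (hae.filter_mono (ae_mono Measure.restrict_le_self)).mono ?_
      intro τ hτ
      show ‖‖a + τ • v‖ ^ (p - 2)‖ ≤ ‖‖v‖ ^ (p - 2) * |τ - c| ^ (p - 2)‖
      rw [Real.norm_of_nonneg (Real.rpow_nonneg (norm_nonneg _) _),
          Real.norm_of_nonneg (by positivity)]
      have h2 : τ - c ≠ 0 := sub_ne_zero.mpr hτ
      have h1 : 0 < |τ - c| * ‖v‖ := by positivity
      calc ‖a + τ • v‖ ^ (p - 2) ≤ (|τ - c| * ‖v‖) ^ (p - 2) :=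
            Real.rpow_le_rpow_of_nonpos h1 (hlow τ) hrle
        _ = ‖v‖ ^ (p - 2) * |τ - c| ^ (p - 2) := by
            rw [Real.mul_rpow (abs_nonneg _) (norm_nonneg _)]; ring
  -- auxiliary continuous map τ ↦ a + τ • v
  have hx_cont : Continuous (fun τ : ℝ => a + τ • v) :=
    continuous_const.add (continuous_id.smul continuous_const)
  set D : ℝ → EuclideanSpace ℝ (Fin N) := fun τ =>
    ((p - 2) * ‖a + τ • v‖ ^ (p - 4) * ⟪a + τ • v, v⟫) • (a + τ • v)
      + (‖a + τ • v‖ ^ (p - 2)) • v with hD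
  have hxd : ∀ τ : ℝ, HasDerivAt (fun t : ℝ => a + t • v) v τ := by
    intro τ
    simpa using ((hasDerivAt_id τ).smul_const v).const_add a
  have hfd : ∀ τ : ℝ, a + τ • v ≠ 0 →
      HasDerivAt (fun t : ℝ => (‖a + t • v‖ ^ (p - 2)) • (a + t • v)) (D τ) τ := by
    intro τ hxt
    have hn : (0:ℝ) < ‖a + τ • v‖ := norm_pos_iff.mpr hxt
    have hne : ‖a + τ • v‖ ≠ 0 := hn.ne'
    have hnd : HasDerivAt (fun t : ℝ => ‖a + t • v‖)
        (⟪a + τ • v, v⟫ / ‖a + τ • v‖) τ := by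
      have keyf : (fun t : ℝ => ‖a + t • v‖) = fun t : ℝ => √(⟪a + t • v, a + t • v⟫) := by
        funext t
        rw [real_inner_self_eq_norm_mul_norm, Real.sqrt_mul_self (norm_nonneg _)]
      rw [keyf]
      have hinner : HasDerivAt (fun t : ℝ => ⟪a + t • v, a + t • v⟫)
          (⟪a + τ • v, v⟫ + ⟪v, a + τ • v⟫) τ :=
        HasDerivAt.inner (𝕜 := ℝ) (hxd τ) (hxd τ)
      have hq : ⟪a + τ • v, a + τ • v⟫ ≠ 0 := by
        rw [real_inner_self_eq_norm_mul_norm]; exact (mul_pos hn hn).ne'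
      have hsq := hinner.sqrt hq
      convert hsq using 1
      rw [real_inner_comm v (a + τ • v),
        real_inner_self_eq_norm_mul_norm, Real.sqrt_mul_self (norm_nonneg _)]
      field_simp
      ring
    have hrd : HasDerivAt (fun t : ℝ => ‖a + t • v‖ ^ (p - 2))
        ((⟪a + τ • v, v⟫ / ‖a + τ • v‖) * (p - 2) * ‖a + τ • v‖ ^ (p - 2 - 1)) τ :=
      hnd.rpow_const (Or.inl hne)
    have hthis := hrd.smul (hxd τ)
    have h4 : ‖a + τ • v‖ ^ (p - 2 - 1) = ‖a + τ • v‖ ^ (p - 4) * ‖a + τ • v‖ := by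
      rw [← Real.rpow_add_one hne]
      congr 1; ring
    have heq : D τ = ‖a + τ • v‖ ^ (p - 2) • v
        + (⟪a + τ • v, v⟫ / ‖a + τ • v‖ * (p - 2) * ‖a + τ • v‖ ^ (p - 2 - 1))
          • (a + τ • v) := by
      have hscal : (p - 2) * ‖a + τ • v‖ ^ (p - 4) * ⟪a + τ • v, v⟫
          = ⟪a + τ • v, v⟫ / ‖a + τ • v‖ * (p - 2) * ‖a + τ • v‖ ^ (p - 2 - 1) := by
        rw [h4]; field_simp
      simp only [hD]
      rw [hscal, add_comm]
    rw [heq]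
    exact hthis
  have hDb : ∀ τ : ℝ, ‖D τ‖ ≤ (3 - p) * ‖v‖ * ‖a + τ • v‖ ^ (p - 2) := by
    intro τ
    rcases eq_or_ne (a + τ • v) 0 with hx0 | hx0
    · have hDτ : D τ = ((0:ℝ) ^ (p - 2)) • v := by
        simp only [hD]; rw [hx0]; simp
      rw [hDτ, hx0, norm_smul, norm_zero,
        Real.norm_of_nonneg (Real.rpow_nonneg le_rfl _)]
      have h0 : (0:ℝ) ≤ (0:ℝ) ^ (p - 2) := Real.rpow_nonneg le_rfl _
      nlinarith [norm_nonneg v,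
        mul_nonneg (mul_nonneg (by linarith : (0:ℝ) ≤ 2 - p) (norm_nonneg v)) h0]
    · have hn : (0:ℝ) < ‖a + τ • v‖ := norm_pos_iff.mpr hx0
      have hne : ‖a + τ • v‖ ≠ 0 := hn.ne'
      have h2 : |⟪a + τ • v, v⟫| ≤ ‖a + τ • v‖ * ‖v‖ := abs_real_inner_le_norm _ _
      have h4 : ‖a + τ • v‖ ^ (p - 4) * ‖a + τ • v‖ * ‖a + τ • v‖
          = ‖a + τ • v‖ ^ (p - 2) := by
        rw [← Real.rpow_add_one hne, ← Real.rpow_add_one hne]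
        congr 1; ring
      have h1 : ‖D τ‖ ≤ |(p - 2) * ‖a + τ • v‖ ^ (p - 4) * ⟪a + τ • v, v⟫| * ‖a + τ • v‖
          + ‖a + τ • v‖ ^ (p - 2) * ‖v‖ := by
        simp only [hD]
        refine (norm_add_le _ _).trans ?_
        rw [norm_smul, norm_smul, Real.norm_eq_abs,
          Real.norm_of_nonneg (Real.rpow_nonneg (norm_nonneg _) _)]
      have h3 : |(p - 2) * ‖a + τ • v‖ ^ (p - 4) * ⟪a + τ • v, v⟫|
          = (2 - p) * ‖a + τ • v‖ ^ (p - 4) * |⟪a + τ • v, v⟫| := by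
        rw [abs_mul, abs_mul, abs_of_nonneg (Real.rpow_nonneg (norm_nonneg _) _),
          abs_of_nonpos (by linarith : p - 2 ≤ 0)]
        ring
      have h5 : (2 - p) * ‖a + τ • v‖ ^ (p - 4) * |⟪a + τ • v, v⟫|
          ≤ (2 - p) * ‖a + τ • v‖ ^ (p - 4) * (‖a + τ • v‖ * ‖v‖) :=
        mul_le_mul_of_nonneg_left h2
          (mul_nonneg (by linarith) (Real.rpow_nonneg (norm_nonneg _) _))
      calc ‖D τ‖ ≤ |(p - 2) * ‖a + τ • v‖ ^ (p - 4) * ⟪a + τ • v, v⟫| * ‖a + τ • v‖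
            + ‖a + τ • v‖ ^ (p - 2) * ‖v‖ := h1
        _ ≤ ((2 - p) * ‖a + τ • v‖ ^ (p - 4) * (‖a + τ • v‖ * ‖v‖)) * ‖a + τ • v‖
            + ‖a + τ • v‖ ^ (p - 2) * ‖v‖ := by
            refine add_le_add_left (mul_le_mul_of_nonneg_right ?_ hn.le) _
            rw [h3]; exact h5
        _ = (3 - p) * ‖v‖ * ‖a + τ • v‖ ^ (p - 2) := by
            linear_combination (2 - p) * ‖v‖ * h4
  have hDi : IntervalIntegrable D volume 0 1 := by
    have hg := hInt.const_mul ((3 - p) * ‖v‖)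
    refine hg.mono_fun ?_ ?_
    · have m2 : Measurable (fun τ : ℝ => ‖a + τ • v‖) := hx_cont.norm.measurable
      have mx : Measurable (fun τ : ℝ => a + τ • v) := hx_cont.measurable
      have mi : Measurable (fun τ : ℝ => ⟪a + τ • v, v⟫) :=
        (hx_cont.inner continuous_const).measurable
      have mc1 : Measurable (fun τ : ℝ =>
          (p - 2) * ‖a + τ • v‖ ^ (p - 4) * ⟪a + τ • v, v⟫) :=
        ((measurable_const.mul (m2.pow measurable_const)).mul mi)
      have mc2 : Measurable (fun τ : ℝ => ‖a + τ • v‖ ^ (p - 2)) :=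
        m2.pow measurable_const
      exact ((mc1.smul mx).add (mc2.smul measurable_const)).aestronglyMeasurable
    · refine Eventually.of_forall fun τ => ?_
      have hnn : (0:ℝ) ≤ (3 - p) * ‖v‖ * ‖a + τ • v‖ ^ (p - 2) :=
        mul_nonneg (mul_nonneg (by linarith) (norm_nonneg _))
          (Real.rpow_nonneg (norm_nonneg _) _)
      simpa [Real.norm_of_nonneg hnn] using hDb τ
  have hcont' : Continuous (fun t : ℝ => (‖a + t • v‖ ^ (p - 2)) • (a + t • v)) :=
    (pPow_continuous p hp₁).comp hx_cont
  have key : ∫ τ in (0:ℝ)..1, D τ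
      = (‖a + (1:ℝ) • v‖ ^ (p - 2)) • (a + (1:ℝ) • v)
        - (‖a + (0:ℝ) • v‖ ^ (p - 2)) • (a + (0:ℝ) • v) := by
    by_cases hz : ∃ t₀ ∈ Ioo (0:ℝ) 1, a + t₀ • v = 0
    · obtain ⟨t₀, ht₀, hxt₀⟩ := hz
      have huniq : ∀ t : ℝ, a + t • v = 0 → t = t₀ := by
        intro t ht
        have h2 : t • v = t₀ • v := add_left_cancel (ht.trans hxt₀.symm)
        have h1 : (t - t₀) • v = 0 := by rw [sub_smul, h2, sub_self]
        rcases smul_eq_zero.mp h1 with h | h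
        · exact sub_eq_zero.mp h
        · exact absurd h hv0
      have hsub1 : IntervalIntegrable D volume 0 t₀ :=
        hDi.mono_set (by
          rw [uIcc_of_le ht₀.1.le, uIcc_of_le zero_le_one]
          exact Icc_subset_Icc le_rfl ht₀.2.le)
      have hsub2 : IntervalIntegrable D volume t₀ 1 :=
        hDi.mono_set (by
          rw [uIcc_of_le ht₀.2.le, uIcc_of_le zero_le_one]
          exact Icc_subset_Icc ht₀.1.le le_rfl)
      rw [← integral_add_adjacent_intervals hsub1 hsub2,
        integral_eq_sub_of_hasDeriv_right_of_le ht₀.1.le hcont'.continuousOn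
          (fun t ht => (hfd t fun h => (ne_of_lt ht.2) (huniq t h)).hasDerivWithinAt) hsub1,
        integral_eq_sub_of_hasDeriv_right_of_le ht₀.2.le hcont'.continuousOn
          (fun t ht => (hfd t fun h => (ne_of_gt ht.1) (huniq t h)).hasDerivWithinAt) hsub2]
      abel
    · push_neg at hz
      exact integral_eq_sub_of_hasDeriv_right_of_le zero_le_one hcont'.continuousOn
        (fun t ht => (hfd t (hz t ht)).hasDerivWithinAt) hDi
  have hx0 : a + (0:ℝ) • v = a := by simp
  have hx1 : a + (1:ℝ) • v = b := by rw [hv]; simp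
  have hL : ‖‖a‖ ^ (p - 2) • a - ‖b‖ ^ (p - 2) • b‖ = ‖∫ τ in (0:ℝ)..1, D τ‖ := by
    rw [key, hx0, hx1, norm_sub_rev]
  have main : ‖‖a‖ ^ (p - 2) • a - ‖b‖ ^ (p - 2) • b‖
      ≤ (3 - p) * ‖v‖ * ∫ τ in (0:ℝ)..1, ‖a + τ • v‖ ^ (p - 2) := by
    rw [hL]
    calc ‖∫ τ in (0:ℝ)..1, D τ‖ ≤ ∫ τ in (0:ℝ)..1, ‖D τ‖ :=
          norm_integral_le_integral_norm zero_le_one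
      _ ≤ ∫ τ in (0:ℝ)..1, (3 - p) * ‖v‖ * ‖a + τ • v‖ ^ (p - 2) :=
          integral_mono_on zero_le_one hDi.norm (hInt.const_mul _) (fun τ _ => hDb τ)
      _ = (3 - p) * ‖v‖ * ∫ τ in (0:ℝ)..1, ‖a + τ • v‖ ^ (p - 2) :=
          integral_const_mul _ _
  refine ⟨main, main.trans ?_⟩
  have hnn : 0 ≤ ∫ τ in (0:ℝ)..1, ‖a + τ • v‖ ^ (p - 2) :=
    integral_nonneg zero_le_one (fun u _ => Real.rpow_nonneg (norm_nonneg _) _)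
  nlinarith [mul_nonneg hvn.le hnn]
end

section
/- Lower monotonicity estimate for the p-power map, 1 < p ≤ 2: for all a, b ∈ ℝ^N, ‖ ‖a‖^{p−2}a − ‖b‖^{p−2}b ‖ ≥ (p − 1) ‖b − a‖ (1 + ‖a‖² + ‖b‖²)^{(p−2)/2}. -/
open Set Real


-- MVT-type helper with one exceptional point
lemma mono_except_point {f f' : ℝ → ℝ} {t₀ : ℝ} (hc : ContinuousOn f (Icc 0 1))
    (hd : ∀ t ∈ Ioo (0:ℝ) 1, t ≠ t₀ → HasDerivAt f (f' t) t)
    (h0 : ∀ t ∈ Ioo (0:ℝ) 1, t ≠ t₀ → 0 ≤ f' t) : f 0 ≤ f 1 := by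
  by_cases ht : t₀ ∈ Ioo (0:ℝ) 1
  · have h1 : MonotoneOn f (Icc 0 t₀) := by
      apply monotoneOn_of_hasDerivWithinAt_nonneg (convex_Icc _ _)
        (hc.mono (Icc_subset_Icc le_rfl ht.2.le))
      · intro x hx
        rw [interior_Icc] at hx
        exact ((hd x ⟨hx.1, hx.2.trans ht.2⟩ hx.2.ne).hasDerivWithinAt)
      · intro x hx
        rw [interior_Icc] at hx
        exact h0 x ⟨hx.1, hx.2.trans ht.2⟩ hx.2.ne
    have h2 : MonotoneOn f (Icc t₀ 1) := by
      apply monotoneOn_of_hasDerivWithinAt_nonneg (convex_Icc _ _)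
        (hc.mono (Icc_subset_Icc ht.1.le le_rfl))
      · intro x hx
        rw [interior_Icc] at hx
        exact ((hd x ⟨ht.1.trans hx.1, hx.2⟩ hx.1.ne').hasDerivWithinAt)
      · intro x hx
        rw [interior_Icc] at hx
        exact h0 x ⟨ht.1.trans hx.1, hx.2⟩ hx.1.ne'
    calc f 0 ≤ f t₀ := h1 ⟨le_rfl, ht.1.le⟩ ⟨ht.1.le, le_rfl⟩ ht.1.le
      _ ≤ f 1 := h2 ⟨le_rfl, ht.2.le⟩ ⟨ht.2.le, le_rfl⟩ ht.2.le
  · have h1 : MonotoneOn f (Icc 0 1) := by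
      apply monotoneOn_of_hasDerivWithinAt_nonneg (convex_Icc _ _) hc
      · intro x hx
        rw [interior_Icc] at hx
        exact ((hd x hx (fun h => ht (h ▸ hx))).hasDerivWithinAt)
      · intro x hx
        rw [interior_Icc] at hx
        exact h0 x hx (fun h => ht (h ▸ hx))
    exact h1 ⟨le_rfl, one_pos.le⟩ ⟨one_pos.le, le_rfl⟩ one_pos.le

set_option maxHeartbeats 1000000

local notation "⟪" x ", " y "⟫" => @inner ℝ _ _ x y

lemma pPower_key (p : ℝ) (hp₁ : 1 < p) (hp₂ : p < 2) (N : ℕ)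
    (a b : EuclideanSpace ℝ (Fin N)) (hab : a ≠ b) :
    (p - 1) * ‖a - b‖ ^ 2 * (1 + ‖a‖ ^ 2 + ‖b‖ ^ 2) ^ ((p - 2) / 2)
      ≤ ⟪‖a‖ ^ (p - 2) • a - ‖b‖ ^ (p - 2) • b, a - b⟫ := by
  set v : EuclideanSpace ℝ (Fin N) := a - b with hvdef
  have hv0 : v ≠ 0 := sub_ne_zero.2 hab
  set q : ℝ := (p - 2) / 2 with hqdef
  have hq0 : q < 0 := by rw [hqdef]; linarith
  set M : ℝ := 1 + ‖a‖ ^ 2 + ‖b‖ ^ 2 with hMdef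
  set B : ℝ := ‖b‖ ^ 2 with hBdef
  set C : ℝ := ⟪b, v⟫ with hCdef
  set V : ℝ := ‖v‖ ^ 2 with hVdef
  have hV : 0 < V := by
    rw [hVdef]
    exact pow_pos (norm_pos_iff.2 hv0) 2
  set φ : ℝ → ℝ := fun t => V * t ^ 2 + 2 * C * t + B with hφdef
  set ψ : ℝ → ℝ := fun t => C + V * t with hψdef
  set g : ℝ → ℝ := fun t => φ t ^ q * ψ t with hgdef
  -- basic identities
  have hφ : ∀ t : ℝ, φ t = ‖b + t • v‖ ^ 2 := by
    intro t
    rw [hφdef]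
    simp only
    rw [norm_add_sq_real, norm_smul, real_inner_smul_right, mul_pow, hBdef, hCdef, hVdef,
      Real.norm_eq_abs, sq_abs]
    ring
  have hψ : ∀ t : ℝ, ψ t = ⟪b + t • v, v⟫ := by
    intro t
    rw [hψdef]
    simp only
    rw [inner_add_left, real_inner_smul_left, hCdef, hVdef, real_inner_self_eq_norm_sq]
    ring
  have hφnn : ∀ t : ℝ, 0 ≤ φ t := fun t => by rw [hφ t]; positivity
  have hCS : ∀ t : ℝ, ψ t ^ 2 ≤ φ t * V := by
    intro t
    rw [hφ t, hψ t, hVdef, sq]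
    have := real_inner_mul_inner_self_le (b + t • v) v
    rwa [real_inner_self_eq_norm_sq, real_inner_self_eq_norm_sq] at this
  -- uniqueness of the zero of φ
  have huniq : ∀ s t : ℝ, φ s = 0 → φ t = 0 → s = t := by
    intro s t hs ht
    rw [hφ s, pow_eq_zero_iff two_ne_zero, norm_eq_zero] at hs
    rw [hφ t, pow_eq_zero_iff two_ne_zero, norm_eq_zero] at ht
    have h2 : (s - t) • v = 0 := by
      rw [sub_smul]
      have : b + s • v - (b + t • v) = 0 := by rw [hs, ht, sub_self]
      rw [← this]; abel
    rcases smul_eq_zero.1 h2 with h | h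
    · exact sub_eq_zero.1 h
    · exact absurd h hv0
  obtain ⟨t₀, ht₀⟩ : ∃ t₀ : ℝ, ∀ t : ℝ, t ≠ t₀ → φ t ≠ 0 := by
    by_cases h : ∃ t, φ t = 0
    · exact ⟨h.choose, fun t ht hφt => ht (huniq t h.choose hφt h.choose_spec)⟩
    · exact ⟨0, fun t _ hφt => h ⟨t, hφt⟩⟩
  -- the derivative of g away from the zero of φ
  set g' : ℝ → ℝ := fun t => q * φ t ^ (q - 1) * (2 * ψ t) * ψ t + φ t ^ q * V with hg'def
  have hderiv : ∀ t : ℝ, φ t ≠ 0 → HasDerivAt g (g' t) t := by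
    intro t hφt
    have hφd : HasDerivAt φ (2 * ψ t) t := by
      have h1 := (((hasDerivAt_pow 2 t).const_mul V).add
        ((hasDerivAt_id t).const_mul (2 * C))).add_const B
      refine h1.congr_deriv ?_
      rw [hψdef]; push_cast; ring
    have hrp : HasDerivAt (fun x : ℝ => x ^ q) (q * φ t ^ (q - 1)) (φ t) :=
      Real.hasDerivAt_rpow_const (Or.inl hφt)
    have hcomp : HasDerivAt (fun s => φ s ^ q) (q * φ t ^ (q - 1) * (2 * ψ t)) t :=
      hrp.comp t hφd
    have hψd : HasDerivAt ψ V t := by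
      have h1 := ((hasDerivAt_id t).const_mul V).const_add C
      rw [mul_one] at h1
      exact h1
    exact hcomp.mul hψd
  -- φ is bounded by M on [0,1]
  have hφM : ∀ t ∈ Icc (0:ℝ) 1, φ t ≤ M := by
    intro t ht
    rw [hφ t]
    have hx : b + t • v = (1 - t) • b + t • a := by rw [hvdef]; module
    have h1 : ‖b + t • v‖ ≤ (1 - t) * ‖b‖ + t * ‖a‖ := by
      rw [hx]
      refine (norm_add_le _ _).trans ?_
      rw [norm_smul, norm_smul, Real.norm_eq_abs, Real.norm_eq_abs,
        abs_of_nonneg (by linarith [ht.2] : (0:ℝ) ≤ 1 - t), abs_of_nonneg ht.1]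
    have h2 : ‖b + t • v‖ ^ 2 ≤ ((1 - t) * ‖b‖ + t * ‖a‖) ^ 2 :=
      pow_le_pow_left₀ (norm_nonneg _) h1 2
    have ht1 := ht.1; have ht2 := ht.2
    have hna := norm_nonneg a; have hnb := norm_nonneg b
    rw [hMdef, hBdef]
    nlinarith [sq_nonneg (‖a‖ - ‖b‖), mul_nonneg ht.1 (sub_nonneg.2 ht.2),
      sq_nonneg (‖a‖ + ‖b‖), mul_nonneg (mul_nonneg ht.1 (sub_nonneg.2 ht.2)) (sq_nonneg (‖a‖ - ‖b‖))]
  -- lower bound for the derivative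
  have hg'c : ∀ t ∈ Icc (0:ℝ) 1, φ t ≠ 0 → (p - 1) * V * M ^ q ≤ g' t := by
    intro t ht hφt
    have hφpos : 0 < φ t := (hφnn t).lt_of_ne (Ne.symm hφt)
    have e1 : φ t ^ q = φ t ^ (q - 1) * φ t := by
      rw [← Real.rpow_add_one hφt (q - 1), sub_add_cancel]
    have h5 : φ t ^ (q - 1) * ψ t ^ 2 ≤ φ t ^ q * V :=
      calc φ t ^ (q - 1) * ψ t ^ 2 ≤ φ t ^ (q - 1) * (φ t * V) :=
            mul_le_mul_of_nonneg_left (hCS t) (Real.rpow_nonneg (hφnn t) _)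
        _ = φ t ^ q * V := by rw [e1]; ring
    have h6 : (p - 2) * (φ t ^ q * V) ≤ (p - 2) * (φ t ^ (q - 1) * ψ t ^ 2) :=
      mul_le_mul_of_nonpos_left h5 (by linarith)
    have h7 : M ^ q ≤ φ t ^ q :=
      Real.rpow_le_rpow_of_nonpos hφpos (hφM t ht) hq0.le
    have h8 : (p - 1) * V * M ^ q ≤ (p - 1) * V * φ t ^ q :=
      mul_le_mul_of_nonneg_left h7 (by nlinarith)
    have h9 : g' t = (p - 2) * (φ t ^ (q - 1) * ψ t ^ 2) + φ t ^ q * V := by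
      rw [hg'def]; simp only; rw [hqdef]; ring
    nlinarith [h6, h8, h9]
  -- continuity of g
  have hφcont : Continuous φ := by
    rw [hφdef]
    exact ((continuous_const.mul (continuous_pow 2)).add
      (continuous_const.mul continuous_id)).add continuous_const
  have hgcont : ∀ t : ℝ, ContinuousAt g t := by
    intro t
    by_cases hφt : φ t = 0
    · have hbound : ∀ s : ℝ, ‖g s‖ ≤ Real.sqrt V * φ s ^ ((p - 1) / 2) := by
        intro s
        rw [hgdef]; simp only [Real.norm_eq_abs, abs_mul]
        have h1 : |φ s ^ q| = φ s ^ q := abs_of_nonneg (Real.rpow_nonneg (hφnn s) q)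
        have h2 : |ψ s| ≤ Real.sqrt (φ s * V) := by
          rw [← Real.sqrt_sq_eq_abs]
          exact Real.sqrt_le_sqrt (hCS s)
        calc |φ s ^ q| * |ψ s| ≤ φ s ^ q * Real.sqrt (φ s * V) := by
              rw [h1]
              exact mul_le_mul_of_nonneg_left h2 (Real.rpow_nonneg (hφnn s) q)
          _ = Real.sqrt V * φ s ^ ((p - 1) / 2) := by
              rw [Real.sqrt_mul (hφnn s), Real.sqrt_eq_rpow,
                show φ s ^ q * (φ s ^ ((1:ℝ)/2) * Real.sqrt V)
                  = (φ s ^ q * φ s ^ ((1:ℝ)/2)) * Real.sqrt V by ring,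
                ← Real.rpow_add' (hφnn s) (by rw [hqdef]; intro h; linarith),
                show q + (1:ℝ)/2 = (p-1)/2 by rw [hqdef]; ring]
              ring
      have hgt : g t = 0 := by
        rw [hgdef]; simp only [hφt, Real.zero_rpow hq0.ne, zero_mul]
      have hblim : Filter.Tendsto (fun s => Real.sqrt V * φ s ^ ((p - 1) / 2)) (nhds t)
          (nhds 0) := by
        have hc : ContinuousAt (fun s => Real.sqrt V * φ s ^ ((p - 1) / 2)) t := by
          exact (continuousAt_const.mul
            ((Real.continuousAt_rpow_const (φ t) _ (Or.inr (by linarith))).comp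
              hφcont.continuousAt))
        have hval : Real.sqrt V * φ t ^ ((p - 1) / 2) = 0 := by
          rw [hφt, Real.zero_rpow (by intro h; linarith : (p-1)/2 ≠ 0), mul_zero]
        rw [← hval]
        exact hc
      rw [ContinuousAt, hgt]
      exact squeeze_zero_norm hbound hblim
    · exact (hderiv t hφt).continuousAt
  -- endpoint values
  have hpow : ∀ x : EuclideanSpace ℝ (Fin N), (‖x‖ ^ 2) ^ q = ‖x‖ ^ (p - 2) := by
    intro x
    rw [← Real.rpow_natCast ‖x‖ 2, ← Real.rpow_mul (norm_nonneg x)]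
    congr 1
    rw [hqdef]; push_cast; ring
  have hg1 : g 1 = ⟪‖a‖ ^ (p - 2) • a, v⟫ := by
    have hx1 : b + (1:ℝ) • v = a := by rw [hvdef]; module
    rw [hgdef]; simp only
    rw [hφ 1, hψ 1, hx1, hpow a, real_inner_smul_left]
  have hg0 : g 0 = ⟪‖b‖ ^ (p - 2) • b, v⟫ := by
    have hx0 : b + (0:ℝ) • v = b := by rw [hvdef]; module
    rw [hgdef]; simp only
    rw [hφ 0, hψ 0, hx0, hpow b, real_inner_smul_left]
  -- assemble via the mean value estimate
  rw [inner_sub_left, ← hg1, ← hg0]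
  have key := mono_except_point (f := fun t => g t - (p - 1) * V * M ^ q * t)
    (f' := fun t => g' t - (p - 1) * V * M ^ q) (t₀ := t₀)
    (by
      apply ContinuousOn.sub
      · exact (continuous_iff_continuousAt.2 hgcont).continuousOn
      · exact (continuous_const.mul continuous_id).continuousOn)
    (by
      intro t ht hne
      have hd := (hderiv t (ht₀ t hne)).sub
        (((hasDerivAt_id t).const_mul ((p - 1) * V * M ^ q)))
      rw [mul_one] at hd
      exact hd)
    (by
      intro t ht hne
      have := hg'c t (Ioo_subset_Icc_self ht) (ht₀ t hne)
      simp only [sub_nonneg]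
      linarith)
  simp only [mul_zero, mul_one, sub_zero] at key
  linarith

/-- Lower monotonicity estimate for the `p`-power map, `1 < p ≤ 2`. -/
theorem pPower_lower_estimate (p : ℝ) (hp₁ : 1 < p) (hp₂ : p ≤ 2) (N : ℕ)
    (a b : EuclideanSpace ℝ (Fin N)) :
    (p - 1) * ‖b - a‖ * (1 + ‖a‖ ^ 2 + ‖b‖ ^ 2) ^ ((p - 2) / 2)
      ≤ ‖‖a‖ ^ (p - 2) • a - ‖b‖ ^ (p - 2) • b‖ := by
  rcases lt_or_eq_of_le hp₂ with hp2 | hp2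
  · by_cases hab : a = b
    · subst hab
      simp
    · have hkey := pPower_key p hp₁ hp2 N a b hab
      have hCS2 : ⟪‖a‖ ^ (p - 2) • a - ‖b‖ ^ (p - 2) • b, a - b⟫
          ≤ ‖‖a‖ ^ (p - 2) • a - ‖b‖ ^ (p - 2) • b‖ * ‖a - b‖ := real_inner_le_norm _ _
      have hvpos : 0 < ‖a - b‖ := norm_pos_iff.2 (sub_ne_zero.2 hab)
      have hM : (0:ℝ) ≤ (1 + ‖a‖ ^ 2 + ‖b‖ ^ 2) ^ ((p - 2) / 2) :=
        Real.rpow_nonneg (by positivity) _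
      have hrev : ‖b - a‖ = ‖a - b‖ := norm_sub_rev b a
      rw [hrev]
      rw [← mul_le_mul_iff_left₀ hvpos]
      calc (p - 1) * ‖a - b‖ * (1 + ‖a‖ ^ 2 + ‖b‖ ^ 2) ^ ((p - 2) / 2) * ‖a - b‖
          = (p - 1) * ‖a - b‖ ^ 2 * (1 + ‖a‖ ^ 2 + ‖b‖ ^ 2) ^ ((p - 2) / 2) := by ring
        _ ≤ ⟪‖a‖ ^ (p - 2) • a - ‖b‖ ^ (p - 2) • b, a - b⟫ := hkey
        _ ≤ ‖‖a‖ ^ (p - 2) • a - ‖b‖ ^ (p - 2) • b‖ * ‖a - b‖ := hCS2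
  · subst hp2
    simp [Real.rpow_zero]
    rw [norm_sub_rev]
    norm_num
end

section
/- Non-simultaneous vanishing: let 1 < p < ∞, q = p/(p−1), N ≥ 1, and let u, v : [0, ∞) → ℝ^N be differentiable with u′(t) = ‖v(t)‖^{q−2} v(t) and v′(t) = −‖u(t)‖^{p−2} u(t) for all t ≥ 0. If (u(0), v(0)) ≠ (0, 0), then for every t ≥ 0 one has (u(t), v(t)) ≠ (0, 0). -/
open Real Set

private lemma energy_deriv {E : Type*} [NormedAddCommGroup E] [InnerProductSpace ℝ E]
    {p q : ℝ} (hp : 1 < p) (hq : 1 < q)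
    {u v : ℝ → E}
    (hu : ∀ t ∈ Set.Ici (0:ℝ), HasDerivWithinAt u (‖v t‖ ^ (q - 2) • v t) (Set.Ici 0) t)
    (hv : ∀ t ∈ Set.Ici (0:ℝ), HasDerivWithinAt v (-(‖u t‖ ^ (p - 2) • u t)) (Set.Ici 0) t)
    {t : ℝ} (ht : t ∈ Set.Ici (0:ℝ)) :
    HasDerivWithinAt (fun s => q * ‖u s‖ ^ p + p * ‖v s‖ ^ q) 0 (Set.Ici 0) t := by
  have d1 : HasDerivWithinAt (fun s => ‖u s‖ ^ p)
      (((p * ‖u t‖ ^ (p - 2)) • innerSL ℝ (u t)) (‖v t‖ ^ (q - 2) • v t)) (Set.Ici 0) t :=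
    (hasFDerivAt_norm_rpow (u t) hp).comp_hasDerivWithinAt t (hu t ht)
  have d2 : HasDerivWithinAt (fun s => ‖v s‖ ^ q)
      (((q * ‖v t‖ ^ (q - 2)) • innerSL ℝ (v t)) (-(‖u t‖ ^ (p - 2) • u t))) (Set.Ici 0) t :=
    (hasFDerivAt_norm_rpow (v t) hq).comp_hasDerivWithinAt t (hv t ht)
  have := ((d1.const_mul q).add (d2.const_mul p))
  convert this using 1
  · rfl
  · rfl
  · rfl
  simp only [ContinuousLinearMap.smul_apply, innerSL_apply_apply, inner_smul_right, map_neg,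
    smul_eq_mul, real_inner_smul_right]
  rw [real_inner_comm (v t) (u t)]
  ring

/-- Non-simultaneous vanishing for the first-order Hamiltonian system. -/
theorem non_simultaneous_vanishing (p q : ℝ) (hp : 1 < p) (hq : q = p / (p - 1))
    (N : ℕ) (hN : 1 ≤ N)
    (u v : ℝ → EuclideanSpace ℝ (Fin N))
    (hu : ∀ t ∈ Set.Ici (0:ℝ), HasDerivWithinAt u (‖v t‖ ^ (q - 2) • v t) (Set.Ici 0) t)
    (hv : ∀ t ∈ Set.Ici (0:ℝ), HasDerivWithinAt v (-(‖u t‖ ^ (p - 2) • u t)) (Set.Ici 0) t)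
    (h0 : ¬(u 0 = 0 ∧ v 0 = 0)) :
    ∀ t ≥ (0:ℝ), ¬(u t = 0 ∧ v t = 0) := by
  have hp1 : (0:ℝ) < p - 1 := by linarith
  have hq1 : 1 < q := by
    rw [hq, lt_div_iff₀ hp1]; linarith
  set E : ℝ → ℝ := fun s => q * ‖u s‖ ^ p + p * ‖v s‖ ^ q with hE
  have hder : ∀ t ∈ Set.Ici (0:ℝ), HasDerivWithinAt E 0 (Set.Ici 0) t :=
    fun t ht => energy_deriv hp hq1 hu hv ht
  intro t ht ⟨hut, hvt⟩
  have hconst : E t = E 0 := by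
    have hcont : ContinuousOn E (Set.Icc 0 t) := fun x hx =>
      ((hder x hx.1).continuousWithinAt).mono (fun y hy => hy.1)
    have := constant_of_has_deriv_right_zero hcont (fun x hx =>
      (hder x hx.1).mono (fun y hy => le_trans hx.1 hy))
    exact this t (Set.mem_Icc.2 ⟨ht, le_refl t⟩)
  have hEt : E t = 0 := by simp [hE, hut, hvt, Real.zero_rpow (by positivity : p ≠ 0),
    Real.zero_rpow (by positivity : q ≠ 0)]
  have hq0 : (0:ℝ) < q := by linarith
  have hp0 : (0:ℝ) < p := by linarith
  have h1 : 0 ≤ q * ‖u 0‖ ^ p := by positivity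
  have h2 : 0 ≤ p * ‖v 0‖ ^ q := by positivity
  have hsum : q * ‖u 0‖ ^ p + p * ‖v 0‖ ^ q = 0 := by have := hconst ▸ hEt; simpa [hE] using this
  have hu0 : ‖u 0‖ ^ p = 0 := by nlinarith
  have hv0 : ‖v 0‖ ^ q = 0 := by nlinarith
  apply h0
  constructor
  · have := (Real.rpow_eq_zero_iff_of_nonneg (norm_nonneg _)).1 hu0
    exact norm_eq_zero.1 this.1
  · have := (Real.rpow_eq_zero_iff_of_nonneg (norm_nonneg _)).1 hv0
    exact norm_eq_zero.1 this.1
end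

section
/- Local uniqueness at a zero with nonzero velocity (Lemma of del Pino): let 1 < p < ∞, N ≥ 1, c ∈ ℝ^N with c ≠ 0, t_0 ≥ 0, and ε_0 > 0. Suppose u, z : [t_0, t_0 + ε_0] → ℝ^N are continuously differentiable, the maps t ↦ ‖u′(t)‖^{p−2} u′(t) and t ↦ ‖z′(t)‖^{p−2} z′(t) are differentiable with derivatives −‖u(t)‖^{p−2} u(t) and −‖z(t)‖^{p−2} z(t) respectively, and u(t_0) = z(t_0) = 0, u′(t_0) = z′(t_0) = c. Then there exists ε ∈ (0, ε_0] such that u(t) = z(t) for all t ∈ [t_0, t_0 + ε]. -/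
open Real Set

lemma rpow_le_max {m M t r : ℝ} (hm : 0 < m) (h1 : m ≤ t) (h2 : t ≤ M) :
    t ^ r ≤ max (m ^ r) (M ^ r) := by
  rcases le_or_gt 0 r with hr | hr
  · exact le_trans (Real.rpow_le_rpow (by linarith) h2 hr) (le_max_right _ _)
  · exact le_trans (Real.rpow_le_rpow_of_nonpos hm h1 hr.le) (le_max_left _ _)

lemma scalar_diff {r m M x y : ℝ} (hm : 0 < m) (hmx : m ≤ x) (hxy : x ≤ y) (hyM : y ≤ M) :
    |y ^ r - x ^ r| * x ≤ |r| * max (m ^ r) (M ^ r) * (y - x) := by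
  have hx : 0 < x := lt_of_lt_of_le hm hmx
  rcases eq_or_lt_of_le hxy with h | h
  · subst h; simp
  · obtain ⟨ξ, hξ, hslope⟩ := exists_hasDerivAt_eq_slope (fun t => t ^ r)
      (fun t => r * t ^ (r - 1)) h
      (by
        apply ContinuousOn.rpow_const continuousOn_id
        intro t ht
        exact Or.inl (ne_of_gt (lt_of_lt_of_le hx ht.1)))
      (by
        intro t ht
        exact Real.hasDerivAt_rpow_const (Or.inl (ne_of_gt (lt_trans hx ht.1))))
    have hξx : x < ξ := hξ.1
    have hξy : ξ < y := hξ.2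
    have hξ0 : 0 < ξ := lt_trans hx hξx
    have heq : y ^ r - x ^ r = r * ξ ^ (r - 1) * (y - x) := by
      rw [eq_div_iff (by linarith : y - x ≠ 0)] at hslope
      linarith [hslope]
    have hkey : ξ ^ (r - 1) * x ≤ max (m ^ r) (M ^ r) := by
      rcases le_or_gt 1 r with h1 | h1
      · have : ξ ^ (r - 1) ≤ y ^ (r - 1) :=
          Real.rpow_le_rpow hξ0.le hξy.le (by linarith)
        have hy0 : 0 < y := lt_trans hx h
        calc ξ ^ (r - 1) * x ≤ y ^ (r - 1) * y := by
              apply mul_le_mul this (by linarith) hx.le (Real.rpow_nonneg hy0.le _)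
          _ = y ^ r := by
              rw [← Real.rpow_add_one hy0.ne' (r - 1)]; ring_nf
          _ ≤ max (m ^ r) (M ^ r) := rpow_le_max hm (le_trans hmx hxy) hyM
      · have : ξ ^ (r - 1) ≤ x ^ (r - 1) :=
          Real.rpow_le_rpow_of_nonpos hx hξx.le (by linarith)
        calc ξ ^ (r - 1) * x ≤ x ^ (r - 1) * x := by
              apply mul_le_mul_of_nonneg_right this hx.le
          _ = x ^ r := by
              rw [← Real.rpow_add_one hx.ne' (r - 1)]; ring_nf
          _ ≤ max (m ^ r) (M ^ r) := rpow_le_max hm hmx (le_trans hxy hyM)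
    rw [heq, abs_mul, abs_of_nonneg (by linarith : (0:ℝ) ≤ y - x), abs_mul,
      abs_of_nonneg (Real.rpow_nonneg hξ0.le _)]
    calc |r| * ξ ^ (r - 1) * (y - x) * x = |r| * (ξ ^ (r - 1) * x) * (y - x) := by ring
      _ ≤ |r| * max (m ^ r) (M ^ r) * (y - x) := by
          apply mul_le_mul_of_nonneg_right _ (by linarith)
          exact mul_le_mul_of_nonneg_left hkey (abs_nonneg r)

lemma phi_lip_aux {E : Type*} [NormedAddCommGroup E] [NormedSpace ℝ E]
    {r m M : ℝ} (hm : 0 < m) (a b : E)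
    (ham : m ≤ ‖a‖) (haM : ‖a‖ ≤ M) (hbm : m ≤ ‖b‖) (hba : ‖b‖ ≤ ‖a‖) :
    ‖(‖a‖ ^ r) • a - (‖b‖ ^ r) • b‖ ≤ (1 + |r|) * max (m ^ r) (M ^ r) * ‖a - b‖ := by
  have hbM : ‖b‖ ≤ M := le_trans hba haM
  have key : (‖a‖ ^ r) • a - (‖b‖ ^ r) • b
      = (‖a‖ ^ r) • (a - b) + (‖a‖ ^ r - ‖b‖ ^ r) • b := by
    rw [smul_sub, sub_smul]; abel
  rw [key]
  have hmax : (0:ℝ) ≤ max (m ^ r) (M ^ r) :=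
    le_trans (Real.rpow_nonneg hm.le r) (le_max_left _ _)
  calc ‖(‖a‖ ^ r) • (a - b) + (‖a‖ ^ r - ‖b‖ ^ r) • b‖
      ≤ ‖(‖a‖ ^ r) • (a - b)‖ + ‖(‖a‖ ^ r - ‖b‖ ^ r) • b‖ := norm_add_le _ _
    _ = (‖a‖ ^ r) * ‖a - b‖ + |‖a‖ ^ r - ‖b‖ ^ r| * ‖b‖ := by
        rw [norm_smul, norm_smul, Real.norm_eq_abs, Real.norm_eq_abs,
          abs_of_nonneg (Real.rpow_nonneg (norm_nonneg a) r)]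
    _ ≤ max (m ^ r) (M ^ r) * ‖a - b‖ + |r| * max (m ^ r) (M ^ r) * (‖a‖ - ‖b‖) := by
        apply add_le_add
        · exact mul_le_mul_of_nonneg_right (rpow_le_max hm ham haM) (norm_nonneg _)
        · exact scalar_diff hm hbm hba haM
    _ ≤ max (m ^ r) (M ^ r) * ‖a - b‖ + |r| * max (m ^ r) (M ^ r) * ‖a - b‖ := by
        have h1 : ‖a‖ - ‖b‖ ≤ ‖a - b‖ := norm_sub_norm_le a b
        apply add_le_add_right
        apply mul_le_mul_of_nonneg_left h1
        exact mul_nonneg (abs_nonneg r) hmax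
    _ = (1 + |r|) * max (m ^ r) (M ^ r) * ‖a - b‖ := by ring

lemma phi_lip {E : Type*} [NormedAddCommGroup E] [NormedSpace ℝ E]
    {r m M : ℝ} (hm : 0 < m) (a b : E)
    (ham : m ≤ ‖a‖) (haM : ‖a‖ ≤ M) (hbm : m ≤ ‖b‖) (hbM : ‖b‖ ≤ M) :
    ‖(‖a‖ ^ r) • a - (‖b‖ ^ r) • b‖ ≤ (1 + |r|) * max (m ^ r) (M ^ r) * ‖a - b‖ := by
  rcases le_total ‖b‖ ‖a‖ with h | h
  · exact phi_lip_aux hm a b ham haM hbm h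
  · rw [norm_sub_rev, norm_sub_rev a b]
    exact phi_lip_aux hm b a hbm hbM ham h

lemma norm_phi {E : Type*} [NormedAddCommGroup E] [NormedSpace ℝ E]
    {p : ℝ} {v : E} (hv : 0 < ‖v‖) : ‖(‖v‖ ^ (p - 2)) • v‖ = ‖v‖ ^ (p - 1) := by
  rw [norm_smul, Real.norm_eq_abs, abs_of_nonneg (Real.rpow_nonneg (norm_nonneg v) _),
    ← Real.rpow_add_one hv.ne' (p - 2)]
  ring_nf

lemma inv_phi {E : Type*} [NormedAddCommGroup E] [NormedSpace ℝ E]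
    (p : ℝ) (hp : 1 < p) (v : E) :
    (‖(‖v‖ ^ (p - 2)) • v‖ ^ ((2 - p) / (p - 1))) • ((‖v‖ ^ (p - 2)) • v) = v := by
  rcases eq_or_ne v 0 with rfl | hv
  · simp
  · have hv' : 0 < ‖v‖ := norm_pos_iff.mpr hv
    rw [norm_phi hv', smul_smul, ← Real.rpow_mul hv'.le]
    rw [← Real.rpow_add hv']
    have : (p - 1) * ((2 - p) / (p - 1)) + (p - 2) = 0 := by
      rw [mul_comm, div_mul_cancel₀ _ (by linarith : p - 1 ≠ 0)]; ring
    rw [this, Real.rpow_zero, one_smul]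



set_option maxHeartbeats 2000000 in
/-- Local uniqueness at a zero with nonzero velocity (Lemma of del Pino). -/
theorem local_uniqueness_at_zero (p : ℝ) (hp : 1 < p)
    (N : ℕ) (hN : 1 ≤ N) (c : EuclideanSpace ℝ (Fin N)) (hc : c ≠ 0)
    (t₀ : ℝ) (ht₀ : 0 ≤ t₀) (ε₀ : ℝ) (hε₀ : 0 < ε₀)
    (u z u' z' : ℝ → EuclideanSpace ℝ (Fin N))
    (hu : ∀ t ∈ Set.Icc t₀ (t₀ + ε₀), HasDerivWithinAt u (u' t) (Set.Icc t₀ (t₀ + ε₀)) t)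
    (hz : ∀ t ∈ Set.Icc t₀ (t₀ + ε₀), HasDerivWithinAt z (z' t) (Set.Icc t₀ (t₀ + ε₀)) t)
    (hu' : ContinuousOn u' (Set.Icc t₀ (t₀ + ε₀)))
    (hz' : ContinuousOn z' (Set.Icc t₀ (t₀ + ε₀)))
    (huode : ∀ t ∈ Set.Icc t₀ (t₀ + ε₀),
      HasDerivWithinAt (fun s => ‖u' s‖ ^ (p - 2) • u' s)
        (-(‖u t‖ ^ (p - 2) • u t)) (Set.Icc t₀ (t₀ + ε₀)) t)
    (hzode : ∀ t ∈ Set.Icc t₀ (t₀ + ε₀),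
      HasDerivWithinAt (fun s => ‖z' s‖ ^ (p - 2) • z' s)
        (-(‖z t‖ ^ (p - 2) • z t)) (Set.Icc t₀ (t₀ + ε₀)) t)
    (hu0 : u t₀ = 0) (hz0 : z t₀ = 0) (hu'0 : u' t₀ = c) (hz'0 : z' t₀ = c) :
    ∃ ε : ℝ, 0 < ε ∧ ε ≤ ε₀ ∧ ∀ t ∈ Set.Icc t₀ (t₀ + ε), u t = z t := by
  have hc' : 0 < ‖c‖ := norm_pos_iff.mpr hc
  set I := Set.Icc t₀ (t₀ + ε₀) with hIdef
  have ht₀I : t₀ ∈ I := ⟨le_refl _, by linarith⟩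
  -- Step A: continuity gives δ
  obtain ⟨δ₁, hδ₁, hδ₁'⟩ := Metric.continuousWithinAt_iff.mp (hu' t₀ ht₀I) (‖c‖ / 4)
    (by positivity)
  obtain ⟨δ₂, hδ₂, hδ₂'⟩ := Metric.continuousWithinAt_iff.mp (hz' t₀ ht₀I) (‖c‖ / 4)
    (by positivity)
  set δ : ℝ := min ε₀ (min (δ₁ / 2) (δ₂ / 2)) with hδdef
  have hδpos : 0 < δ := by
    apply lt_min hε₀; exact lt_min (by linarith) (by linarith)
  have hδε₀ : δ ≤ ε₀ := min_le_left _ _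
  have hδa : δ ≤ δ₁ / 2 := le_trans (min_le_right _ _) (min_le_left _ _)
  have hδb : δ ≤ δ₂ / 2 := le_trans (min_le_right _ _) (min_le_right _ _)
  set J := Set.Icc t₀ (t₀ + δ) with hJdef
  have hJI : J ⊆ I := Set.Icc_subset_Icc_right (by linarith)
  have hdist : ∀ t ∈ J, dist t t₀ ≤ δ := by
    intro t ht
    rw [Real.dist_eq, abs_of_nonneg (by linarith [ht.1] : (0:ℝ) ≤ t - t₀)]
    linarith [ht.2]
  have hub : ∀ t ∈ J, ‖u' t - c‖ ≤ ‖c‖ / 4 := by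
    intro t ht
    have := hδ₁' (hJI ht) (lt_of_le_of_lt (hdist t ht) (by linarith))
    rw [hu'0, dist_eq_norm] at this; linarith
  have hzb : ∀ t ∈ J, ‖z' t - c‖ ≤ ‖c‖ / 4 := by
    intro t ht
    have := hδ₂' (hJI ht) (lt_of_le_of_lt (hdist t ht) (by linarith))
    rw [hz'0, dist_eq_norm] at this; linarith
  -- velocity norm bounds
  have hvel : ∀ (v : ℝ → EuclideanSpace ℝ (Fin N)),
      (∀ t ∈ J, ‖v t - c‖ ≤ ‖c‖ / 4) →
      ∀ t ∈ J, 3 / 4 * ‖c‖ ≤ ‖v t‖ ∧ ‖v t‖ ≤ 5 / 4 * ‖c‖ := by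
    intro v hv t ht
    have h1 := abs_norm_sub_norm_le (v t) c
    have h2 := hv t ht
    rw [abs_le] at h1
    constructor <;> linarith [h1.1, h1.2]
  have hun := hvel u' hub
  have hzn := hvel z' hzb
  -- position bounds
  have key_pos : ∀ (v v' : ℝ → EuclideanSpace ℝ (Fin N)),
      (∀ t ∈ I, HasDerivWithinAt v (v' t) I t) → v t₀ = 0 →
      (∀ t ∈ J, ‖v' t - c‖ ≤ ‖c‖ / 4) →
      ∀ t ∈ J, 3 / 4 * ‖c‖ * (t - t₀) ≤ ‖v t‖ ∧ ‖v t‖ ≤ 5 / 4 * ‖c‖ * (t - t₀) := by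
    intro v v' hv hv0 hvb t ht
    have ht₀J : t₀ ∈ J := ⟨le_refl _, by linarith⟩
    have hder : ∀ s ∈ J, HasDerivWithinAt (fun s => v s - (s - t₀) • c) (v' s - c) J s := by
      intro s hs
      refine ((hv s (hJI hs)).mono hJI).sub ?_
      have h := (((hasDerivAt_id s).sub_const t₀).hasDerivWithinAt
        (s := J)).smul_const c
      simpa using h
    have hmv := (convex_Icc t₀ (t₀ + δ)).norm_image_sub_le_of_norm_hasDerivWithin_le
      hder hvb ht₀J ht
    simp only [hv0, sub_self, zero_smul, sub_zero] at hmv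
    have hnorm : ‖t - t₀‖ = t - t₀ := by
      rw [Real.norm_eq_abs, abs_of_nonneg (by linarith [ht.1])]
    rw [hnorm] at hmv
    have hsc : ‖(t - t₀) • c‖ = (t - t₀) * ‖c‖ := by
      rw [norm_smul, Real.norm_eq_abs, abs_of_nonneg (by linarith [ht.1])]
    have htri := abs_norm_sub_norm_le (v t) ((t - t₀) • c)
    rw [abs_le] at htri
    constructor <;> [nlinarith [htri.1, htri.2]; nlinarith [htri.1, htri.2]]
  have hupos := key_pos u u' hu hu0 hub
  have hzpos := key_pos z z' hz hz0 hzb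
  -- bounds on the norms of the momenta
  set γ₁ : ℝ := (3 / 4 * ‖c‖) ^ (p - 1) with hγ₁def
  set γ₂ : ℝ := (5 / 4 * ‖c‖) ^ (p - 1) with hγ₂def
  have hγ₁pos : 0 < γ₁ := Real.rpow_pos_of_pos (by linarith) _
  have hwn : ∀ (v : ℝ → EuclideanSpace ℝ (Fin N)),
      (∀ t ∈ J, 3 / 4 * ‖c‖ ≤ ‖v t‖ ∧ ‖v t‖ ≤ 5 / 4 * ‖c‖) →
      ∀ t ∈ J, γ₁ ≤ ‖‖v t‖ ^ (p - 2) • v t‖ ∧ ‖‖v t‖ ^ (p - 2) • v t‖ ≤ γ₂ := by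
    intro v hv t ht
    have h := hv t ht
    have hvt : 0 < ‖v t‖ := by nlinarith [h.1]
    rw [norm_phi hvt]
    constructor
    · exact Real.rpow_le_rpow (by linarith) h.1 (by linarith)
    · exact Real.rpow_le_rpow (by linarith) h.2 (by linarith)
  have hwu := hwn u' hun
  have hwz := hwn z' hzn
  -- constants
  set maxC : ℝ := max ((3 / 4 * ‖c‖) ^ (p - 2)) ((5 / 4 * ‖c‖) ^ (p - 2)) with hmaxCdef
  set C₁ : ℝ := (1 + |p - 2|) * maxC with hC₁def
  set C₂ : ℝ := (1 + |(2 - p) / (p - 1)|) *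
    max (γ₁ ^ ((2 - p) / (p - 1))) (γ₂ ^ ((2 - p) / (p - 1))) with hC₂def
  have hmaxC0 : 0 ≤ maxC := le_trans (Real.rpow_nonneg (by linarith) _) (le_max_left _ _)
  have hC₁0 : 0 ≤ C₁ := mul_nonneg (by positivity) hmaxC0
  have hC₂0 : 0 ≤ C₂ := mul_nonneg (by positivity)
    (le_trans (Real.rpow_nonneg hγ₁pos.le _) (le_max_left _ _))
  set A : ℝ := C₁ * C₂ + 1 with hAdef
  have hA : 0 < A := by nlinarith
  set ε : ℝ := min δ (min 1 (1 / (2 * A))) with hεdef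
  have hεpos : 0 < ε := lt_min hδpos (lt_min one_pos (by positivity))
  have hεδ : ε ≤ δ := min_le_left _ _
  have hε1 : ε ≤ 1 := le_trans (min_le_right _ _) (min_le_left _ _)
  have hεA : ε ≤ 1 / (2 * A) := le_trans (min_le_right _ _) (min_le_right _ _)
  have hεε₀ : ε ≤ ε₀ := le_trans hεδ hδε₀
  set K := Set.Icc t₀ (t₀ + ε) with hKdef
  have hKJ : K ⊆ J := Set.Icc_subset_Icc_right (by linarith)
  have hKI : K ⊆ I := fun x hx => hJI (hKJ hx)
  have ht₀K : t₀ ∈ K := ⟨le_refl _, by linarith⟩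
  -- maximum of ‖u' - z'‖ on K
  obtain ⟨s₀, hs₀K, hmax⟩ := isCompact_Icc.exists_isMaxOn ⟨t₀, ht₀K⟩
    (((hu'.mono hKI).sub (hz'.mono hKI)).norm)
  set Mx : ℝ := ‖u' s₀ - z' s₀‖ with hMxdef
  have hMx0 : 0 ≤ Mx := norm_nonneg _
  have hMs : ∀ s ∈ K, ‖u' s - z' s‖ ≤ Mx := fun s hs => hmax hs
  -- distance bound
  have hd : ∀ s ∈ K, ‖u s - z s‖ ≤ Mx * (s - t₀) := by
    intro s hs
    have hmv := (convex_Icc t₀ (t₀ + ε)).norm_image_sub_le_of_norm_hasDerivWithin_le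
      (f := fun s => u s - z s) (f' := fun s => u' s - z' s)
      (fun x hx => ((hu x (hKI hx)).mono hKI).sub ((hz x (hKI hx)).mono hKI))
      hMs ht₀K hs
    simp only [hu0, hz0, sub_self, sub_zero] at hmv
    rwa [Real.norm_eq_abs, abs_of_nonneg (by linarith [hs.1])] at hmv
  -- bound on the difference of the nonlinear terms
  set B : ℝ := C₁ * Mx * ε ^ (p - 1) with hBdef
  have hB0 : 0 ≤ B := mul_nonneg (mul_nonneg hC₁0 hMx0) (Real.rpow_nonneg hεpos.le _)
  have hψ : ∀ s ∈ K, ‖‖u s‖ ^ (p - 2) • u s - ‖z s‖ ^ (p - 2) • z s‖ ≤ B := by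
    intro s hs
    rcases eq_or_lt_of_le hs.1 with h | h
    · rw [← h, hu0, hz0]
      simpa using hB0
    · have hst : 0 < s - t₀ := by linarith
      have hups := hupos s (hKJ hs)
      have hzps := hzpos s (hKJ hs)
      have hm : (0:ℝ) < 3 / 4 * ‖c‖ * (s - t₀) := by positivity
      have main := phi_lip (r := p - 2) hm (u s) (z s)
        hups.1 hups.2 hzps.1 hzps.2
      have hsplit : max ((3 / 4 * ‖c‖ * (s - t₀)) ^ (p - 2))
          ((5 / 4 * ‖c‖ * (s - t₀)) ^ (p - 2)) = maxC * (s - t₀) ^ (p - 2) := by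
        rw [Real.mul_rpow (by linarith) hst.le, Real.mul_rpow (by linarith) hst.le,
          hmaxCdef, max_mul_of_nonneg _ _ (Real.rpow_nonneg hst.le _)]
      rw [hsplit] at main
      have hx0 : (0:ℝ) ≤ (s - t₀) ^ (p - 2) := Real.rpow_nonneg hst.le _
      calc ‖‖u s‖ ^ (p - 2) • u s - ‖z s‖ ^ (p - 2) • z s‖
          ≤ (1 + |p - 2|) * (maxC * (s - t₀) ^ (p - 2)) * ‖u s - z s‖ := main
        _ ≤ (1 + |p - 2|) * (maxC * (s - t₀) ^ (p - 2)) * (Mx * (s - t₀)) := by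
            apply mul_le_mul_of_nonneg_left (hd s hs)
            positivity
        _ = C₁ * Mx * ((s - t₀) ^ (p - 2) * (s - t₀)) := by rw [hC₁def]; ring
        _ = C₁ * Mx * (s - t₀) ^ (p - 1) := by
            rw [← Real.rpow_add_one hst.ne' (p - 2)]; ring_nf
        _ ≤ C₁ * Mx * ε ^ (p - 1) := by
            apply mul_le_mul_of_nonneg_left _ (mul_nonneg hC₁0 hMx0)
            exact Real.rpow_le_rpow hst.le (by linarith [hs.2]) (by linarith)
  -- bound on the difference of the momenta
  have hwd : ∀ s ∈ K, ‖‖u' s‖ ^ (p - 2) • u' s - ‖z' s‖ ^ (p - 2) • z' s‖ ≤ B * (s - t₀) := by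
    intro s hs
    have hmv := (convex_Icc t₀ (t₀ + ε)).norm_image_sub_le_of_norm_hasDerivWithin_le
      (f := fun s => ‖u' s‖ ^ (p - 2) • u' s - ‖z' s‖ ^ (p - 2) • z' s)
      (f' := fun t => -(‖u t‖ ^ (p - 2) • u t) - -(‖z t‖ ^ (p - 2) • z t))
      (fun x hx => ((huode x (hKI hx)).mono hKI).sub ((hzode x (hKI hx)).mono hKI))
      (C := B)
      (fun x hx => by
        show ‖-(‖u x‖ ^ (p - 2) • u x) - -(‖z x‖ ^ (p - 2) • z x)‖ ≤ B
        have : -(‖u x‖ ^ (p - 2) • u x) - -(‖z x‖ ^ (p - 2) • z x)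
            = -(‖u x‖ ^ (p - 2) • u x - ‖z x‖ ^ (p - 2) • z x) := by abel
        rw [this, norm_neg]
        exact hψ x hx)
      ht₀K hs
    simp only [hu'0, hz'0, sub_self, sub_zero] at hmv
    rwa [Real.norm_eq_abs, abs_of_nonneg (by linarith [hs.1])] at hmv
  -- inverse estimate at the maximum point
  have hinv : Mx ≤ C₂ * ‖‖u' s₀‖ ^ (p - 2) • u' s₀ - ‖z' s₀‖ ^ (p - 2) • z' s₀‖ := by
    have hinvu := inv_phi p hp (u' s₀)
    have hinvz := inv_phi p hp (z' s₀)
    have hwus := hwu s₀ (hKJ hs₀K)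
    have hwzs := hwz s₀ (hKJ hs₀K)
    calc Mx = ‖(‖‖u' s₀‖ ^ (p - 2) • u' s₀‖ ^ ((2 - p) / (p - 1))) • (‖u' s₀‖ ^ (p - 2) • u' s₀)
          - (‖‖z' s₀‖ ^ (p - 2) • z' s₀‖ ^ ((2 - p) / (p - 1))) • (‖z' s₀‖ ^ (p - 2) • z' s₀)‖ := by
          rw [hinvu, hinvz]
      _ ≤ C₂ * ‖‖u' s₀‖ ^ (p - 2) • u' s₀ - ‖z' s₀‖ ^ (p - 2) • z' s₀‖ :=
          phi_lip (r := (2 - p) / (p - 1)) hγ₁pos _ _ hwus.1 hwus.2 hwzs.1 hwzs.2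
  -- contraction
  have hεp : ε ^ p ≤ ε := by
    have := Real.rpow_le_rpow_of_exponent_ge hεpos hε1 (by linarith : (1:ℝ) ≤ p)
    rwa [Real.rpow_one] at this
  have hchain : Mx ≤ C₂ * C₁ * Mx * ε ^ p := by
    have h1 := hwd s₀ hs₀K
    have h2 : B * (s₀ - t₀) ≤ B * ε := by
      apply mul_le_mul_of_nonneg_left _ hB0
      linarith [hs₀K.2]
    have h3 : C₂ * (B * (s₀ - t₀)) ≤ C₂ * (B * ε) := mul_le_mul_of_nonneg_left h2 hC₂0
    have h4 : C₂ * ‖‖u' s₀‖ ^ (p - 2) • u' s₀ - ‖z' s₀‖ ^ (p - 2) • z' s₀‖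
        ≤ C₂ * (B * (s₀ - t₀)) := mul_le_mul_of_nonneg_left h1 hC₂0
    have h5 : C₂ * (B * ε) = C₂ * C₁ * Mx * (ε ^ (p - 1) * ε) := by rw [hBdef]; ring
    have h6 : ε ^ (p - 1) * ε = ε ^ p := by
      rw [← Real.rpow_add_one hεpos.ne' (p - 1)]; ring_nf
    rw [h6] at h5
    linarith [hinv, h4, h3]
  have hMx_zero : Mx = 0 := by
    have h7 : Mx * ε ^ p ≤ Mx * ε := mul_le_mul_of_nonneg_left hεp hMx0
    have h8 : C₂ * C₁ ≤ A := by nlinarith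
    have h9 : C₂ * C₁ * Mx * ε ^ p ≤ A * (Mx * ε) := by
      have := mul_le_mul h8 h7 (by positivity) hA.le
      nlinarith [this]
    have h10 : A * (Mx * ε) ≤ A * (Mx * (1 / (2 * A))) := by
      apply mul_le_mul_of_nonneg_left _ hA.le
      exact mul_le_mul_of_nonneg_left hεA hMx0
    have h11 : A * (Mx * (1 / (2 * A))) = Mx / 2 := by
      field_simp
    nlinarith [hchain, h9, h10, h11, hMx0]
  refine ⟨ε, hεpos, hεε₀, fun t ht => ?_⟩
  have := hd t ht
  rw [hMx_zero, zero_mul] at this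
  have hzero : u t - z t = 0 := by
    have := norm_le_zero_iff.mp this
    exact this
  exact sub_eq_zero.mp hzero
end

section
/- Global uniqueness for the vectorial p-Laplacian initial value problem: let 1 < p < ∞, Λ ≠ 0, N ≥ 1, and a, b ∈ ℝ^N. Suppose u, z : [0, ∞) → ℝ^N are continuously differentiable, the maps t ↦ ‖u′(t)‖^{p−2} u′(t) and t ↦ ‖z′(t)‖^{p−2} z′(t) are differentiable with derivatives −Λ ‖u(t)‖^{p−2} u(t) and −Λ ‖z(t)‖^{p−2} z(t) respectively, and u(0) = z(0) = a, u′(0) = z′(0) = b. Then u(t) = z(t) for all t ≥ 0. -/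
open Set Real Filter Topology MeasureTheory intervalIntegral

set_option linter.unusedSectionVars false
set_option maxHeartbeats 1000000

noncomputable section

variable {E : Type*} [NormedAddCommGroup E] [InnerProductSpace ℝ E]

noncomputable def Phi (α : ℝ) (x : E) : E := ‖x‖ ^ α • x

lemma Phi_zero (α : ℝ) : Phi α (0 : E) = 0 := smul_zero _

lemma norm_Phi_ne {α : ℝ} {x : E} (hx : x ≠ 0) : ‖Phi α x‖ = ‖x‖ ^ (α + 1) := by
  rw [Phi, norm_smul, Real.norm_eq_abs, abs_of_nonneg (Real.rpow_nonneg (norm_nonneg x) α),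
    Real.rpow_add_one (norm_ne_zero_iff.2 hx) α]

lemma norm_Phi {α : ℝ} (hα : -1 < α) (x : E) : ‖Phi α x‖ = ‖x‖ ^ (α + 1) := by
  rcases eq_or_ne x 0 with rfl | hx
  · simp [Phi_zero, Real.zero_rpow (by linarith : α + 1 ≠ 0)]
  · exact norm_Phi_ne hx

lemma Phi_comp {β γ : ℝ} (h : (β + 1) * (γ + 1) = 1) (x : E) : Phi γ (Phi β x) = x := by
  rcases eq_or_ne x 0 with rfl | hx
  · simp [Phi_zero]
  · have hpos : (0:ℝ) < ‖x‖ := norm_pos_iff.2 hx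
    show (‖Phi β x‖ ^ γ) • Phi β x = x
    rw [norm_Phi_ne hx, Phi, smul_smul, ← Real.rpow_mul (norm_nonneg x),
      ← Real.rpow_add hpos]
    have : (β + 1) * γ + β = 0 := by linear_combination h
    rw [this, Real.rpow_zero, one_smul]

lemma hasFDerivAt_norm_rpow_const {α : ℝ} {x : E} (hx : x ≠ 0) :
    HasFDerivAt (fun y : E => ‖y‖ ^ α) ((α * ‖x‖ ^ (α - 2)) • innerSL ℝ x) x := by
  have hne : (‖x‖:ℝ) ^ 2 ≠ 0 := pow_ne_zero _ (norm_ne_zero_iff.2 hx)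
  have h3 := ((hasStrictFDerivAt_norm_sq x).rpow_const (p := α/2) (Or.inl hne)).hasFDerivAt
  convert h3 using 1
  · funext y
    rw [← Real.rpow_natCast ‖y‖ 2, ← Real.rpow_mul (norm_nonneg y)]
    congr 1
    ring
  · rw [← Nat.cast_smul_eq_nsmul ℝ 2 ((innerSL ℝ) x), smul_smul]
    congr 1
    rw [← Real.rpow_natCast ‖x‖ 2, ← Real.rpow_mul (norm_nonneg x)]
    push_cast
    rw [show (2:ℝ) * (α/2 - 1) = α - 2 by ring]
    ring

lemma Phi_hasFDerivAt {α : ℝ} {x : E} (hx : x ≠ 0) :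
    HasFDerivAt (Phi α)
      ((‖x‖ ^ α) • ContinuousLinearMap.id ℝ E
        + ((α * ‖x‖ ^ (α - 2)) • innerSL ℝ x).smulRight x) x :=
  (hasFDerivAt_norm_rpow_const hx).smul (hasFDerivAt_id x)

lemma Phi_fderiv_norm_le {α : ℝ} {x : E} (hx : x ≠ 0) :
    ‖(‖x‖ ^ α) • ContinuousLinearMap.id ℝ E
        + ((α * ‖x‖ ^ (α - 2)) • innerSL ℝ x).smulRight x‖
      ≤ (1 + |α|) * ‖x‖ ^ α := by
  have hne : ‖x‖ ≠ 0 := norm_ne_zero_iff.2 hx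
  have hrn : (0:ℝ) ≤ ‖x‖ ^ α := Real.rpow_nonneg (norm_nonneg x) α
  refine le_trans (norm_add_le _ _) ?_
  have h1 : ‖(‖x‖ ^ α) • ContinuousLinearMap.id ℝ E‖ ≤ ‖x‖ ^ α := by
    refine le_trans (ContinuousLinearMap.opNorm_smul_le _ _) ?_
    rw [Real.norm_eq_abs, abs_of_nonneg hrn]
    exact mul_le_of_le_one_right hrn ContinuousLinearMap.norm_id_le
  have key : ‖x‖ ^ (α - 2) * ‖x‖ * ‖x‖ = ‖x‖ ^ α := by
    rw [← Real.rpow_add_one hne, ← Real.rpow_add_one hne]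
    congr 1
    ring
  have h2 : ‖((α * ‖x‖ ^ (α - 2)) • innerSL ℝ x).smulRight x‖ ≤ |α| * ‖x‖ ^ α := by
    rw [ContinuousLinearMap.norm_smulRight_apply]
    refine le_trans (mul_le_mul_of_nonneg_right (ContinuousLinearMap.opNorm_smul_le _ _) (norm_nonneg x)) ?_
    rw [innerSL_apply_norm, Real.norm_eq_abs, abs_mul,
      abs_of_nonneg (Real.rpow_nonneg (norm_nonneg x) _)]
    refine le_of_eq ?_
    calc |α| * ‖x‖ ^ (α - 2) * ‖x‖ * ‖x‖ = |α| * (‖x‖ ^ (α - 2) * ‖x‖ * ‖x‖) := by ring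
      _ = |α| * ‖x‖ ^ α := by rw [key]
  linarith

/-- weight comparison -/
lemma rpow_between {x S α : ℝ} (hx : 0 < x) (hS : 0 < S) (h1 : S/4 ≤ x) (h2 : x ≤ 4*S) :
    x ^ α ≤ 4 ^ |α| * S ^ α := by
  rcases le_or_gt 0 α with hα | hα
  · rw [abs_of_nonneg hα]
    calc x ^ α ≤ (4*S) ^ α := Real.rpow_le_rpow hx.le h2 hα
      _ = 4 ^ α * S ^ α := Real.mul_rpow (by norm_num) hS.le
  · rw [abs_of_neg hα]
    calc x ^ α ≤ (S/4) ^ α := Real.rpow_le_rpow_of_nonpos (by positivity) h1 hα.le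
      _ = S ^ α / 4 ^ α := Real.div_rpow hS.le (by norm_num : (0:ℝ) ≤ 4) α
      _ = 4 ^ (-α) * S ^ α := by rw [Real.rpow_neg (by norm_num)]; ring

lemma Phi_diff_le_aux {α : ℝ} (hα : -1 < α) {a b : E} (hba : ‖b‖ ≤ ‖a‖) :
    ‖Phi α a - Phi α b‖ ≤ (1 + |α|) * 4 ^ (|α| + 1) * (‖a‖ + ‖b‖) ^ α * ‖a - b‖ := by
  rcases eq_or_ne a 0 with rfl | ha
  · have hb : b = 0 := norm_le_zero_iff.1 (by simpa using hba)
    simp [hb, Phi_zero]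
  have hS : (0:ℝ) < ‖a‖ + ‖b‖ := by
    have := norm_pos_iff.2 ha; linarith [norm_nonneg b]
  have hSα : (0:ℝ) ≤ (‖a‖ + ‖b‖) ^ α := Real.rpow_nonneg hS.le α
  have hapos : (0:ℝ) < ‖a‖ := norm_pos_iff.2 ha
  have h4 : (0:ℝ) < 4 ^ |α| := Real.rpow_pos_of_pos (by norm_num) _
  have h44 : (4:ℝ) ^ (|α| + 1) = 4 ^ |α| * 4 := by
    rw [Real.rpow_add_one (by norm_num : (4:ℝ) ≠ 0)]
  by_cases hd : ‖a - b‖ ≤ ‖a‖ / 2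
  · -- MVT on the segment from b to a
    have key : ∀ y ∈ segment ℝ b a, y ≠ 0 ∧ ‖y‖ ^ α ≤ 4 ^ |α| * (‖a‖ + ‖b‖) ^ α := by
      intro y hy
      rw [segment_eq_image'] at hy
      obtain ⟨t, ht, rfl⟩ := hy
      have h1 : ‖b + t • (a - b)‖ ≥ ‖a‖ / 2 := by
        have : b + t • (a - b) = a + (1 - t) • (b - a) := by
          rw [smul_sub, smul_sub]; module
        rw [this]
        have h2 : ‖(1 - t) • (b - a)‖ ≤ ‖a - b‖ := by
          rw [norm_smul, Real.norm_eq_abs, abs_of_nonneg (by linarith [ht.2] : (0:ℝ) ≤ 1 - t),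
            norm_sub_rev]
          nlinarith [norm_nonneg (a - b), ht.1, ht.2]
        have h4' : ‖a‖ ≤ ‖a + (1 - t) • (b - a)‖ + ‖(1 - t) • (b - a)‖ := by
          have := norm_sub_le (a + (1 - t) • (b - a)) ((1 - t) • (b - a))
          simpa using this
        linarith
      have h2 : ‖b + t • (a - b)‖ ≤ ‖b‖ + ‖a - b‖ := by
        have := norm_smul t (a - b)
        calc ‖b + t • (a - b)‖ ≤ ‖b‖ + ‖t • (a - b)‖ := norm_add_le _ _
          _ ≤ ‖b‖ + ‖a - b‖ := by
            rw [norm_smul, Real.norm_eq_abs, abs_of_nonneg ht.1]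
            nlinarith [norm_nonneg (a - b), ht.2]
      have hy0 : b + t • (a - b) ≠ 0 := by
        intro h; rw [h, norm_zero] at h1; linarith
      refine ⟨hy0, rpow_between (norm_pos_iff.2 hy0) hS ?_ ?_⟩
      · linarith
      · linarith [norm_nonneg b]
    have mvt := Convex.norm_image_sub_le_of_norm_hasFDerivWithin_le
      (f := Phi α) (s := segment ℝ b a)
      (f' := fun y => (‖y‖ ^ α) • ContinuousLinearMap.id ℝ E
        + ((α * ‖y‖ ^ (α - 2)) • innerSL ℝ y).smulRight y)
      (C := (1 + |α|) * (4 ^ |α| * (‖a‖ + ‖b‖) ^ α))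
      (fun y hy => (Phi_hasFDerivAt (key y hy).1).hasFDerivWithinAt)
      (fun y hy => by
        refine le_trans (Phi_fderiv_norm_le (key y hy).1) ?_
        have := (key y hy).2
        nlinarith [abs_nonneg α])
      (convex_segment b a) (left_mem_segment ℝ b a) (right_mem_segment ℝ b a)
    calc ‖Phi α a - Phi α b‖ ≤ (1 + |α|) * (4 ^ |α| * (‖a‖ + ‖b‖) ^ α) * ‖a - b‖ := mvt
      _ ≤ (1 + |α|) * 4 ^ (|α| + 1) * (‖a‖ + ‖b‖) ^ α * ‖a - b‖ := by
          rw [h44]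
          nlinarith [abs_nonneg α, norm_nonneg (a - b), mul_nonneg (mul_nonneg h4.le hSα) (norm_nonneg (a - b))]
  · -- ‖a‖ < 2 * ‖a - b‖
    push_neg at hd
    have hbound : ‖Phi α a - Phi α b‖ ≤ 2 * ‖a‖ ^ (α + 1) := by
      have hbnorm : ‖b‖ ^ (α + 1) ≤ ‖a‖ ^ (α + 1) :=
        Real.rpow_le_rpow (norm_nonneg b) hba (by linarith)
      calc ‖Phi α a - Phi α b‖ ≤ ‖Phi α a‖ + ‖Phi α b‖ := norm_sub_le _ _
        _ = ‖a‖ ^ (α + 1) + ‖b‖ ^ (α + 1) := by rw [norm_Phi hα, norm_Phi hα]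
        _ ≤ 2 * ‖a‖ ^ (α + 1) := by linarith
    have haα : ‖a‖ ^ α ≤ 4 ^ |α| * (‖a‖ + ‖b‖) ^ α :=
      rpow_between hapos hS (by linarith [norm_nonneg b]) (by linarith [norm_nonneg b])
    have hsplit : ‖a‖ ^ (α + 1) = ‖a‖ ^ α * ‖a‖ := Real.rpow_add_one hapos.ne' α
    calc ‖Phi α a - Phi α b‖ ≤ 2 * (‖a‖ ^ α * ‖a‖) := by rw [← hsplit]; exact hbound
      _ ≤ 2 * ((4 ^ |α| * (‖a‖ + ‖b‖) ^ α) * (2 * ‖a - b‖)) := by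
          have hw : (0:ℝ) ≤ ‖a‖ ^ α := Real.rpow_nonneg (norm_nonneg a) α
          nlinarith [mul_nonneg h4.le hSα]
      _ ≤ (1 + |α|) * 4 ^ (|α| + 1) * (‖a‖ + ‖b‖) ^ α * ‖a - b‖ := by
          rw [h44]
          nlinarith [abs_nonneg α, mul_nonneg (mul_nonneg h4.le hSα) (norm_nonneg (a - b)), mul_nonneg hSα (norm_nonneg (a - b))]

lemma Phi_diff_le {α : ℝ} (hα : -1 < α) (a b : E) :
    ‖Phi α a - Phi α b‖ ≤ (1 + |α|) * 4 ^ (|α| + 1) * (‖a‖ + ‖b‖) ^ α * ‖a - b‖ := by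
  rcases le_total ‖b‖ ‖a‖ with h | h
  · exact Phi_diff_le_aux hα h
  · have := Phi_diff_le_aux hα (a := b) (b := a) h
    rwa [norm_sub_rev, add_comm ‖b‖, norm_sub_rev b a] at this

lemma Phi_continuous {α : ℝ} (hα : -1 < α) : Continuous (Phi α : E → E) := by
  rw [continuous_iff_continuousAt]
  intro x
  rcases eq_or_ne x 0 with rfl | hx
  · rw [ContinuousAt, Phi_zero]
    rw [tendsto_zero_iff_norm_tendsto_zero]
    have hc : ContinuousAt (fun y : E => ‖y‖ ^ (α + 1)) 0 :=
      (Real.continuousAt_rpow_const _ _ (Or.inr (by linarith))).comp continuous_norm.continuousAt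
    have : Tendsto (fun y : E => ‖y‖ ^ (α + 1)) (nhds 0) (nhds 0) := by
      simpa [Real.zero_rpow (by linarith : α + 1 ≠ 0)] using hc.tendsto
    exact this.congr (fun y => (norm_Phi hα y).symm)
  · have hc : ContinuousAt (fun y : E => ‖y‖ ^ α) x :=
      (Real.continuousAt_rpow_const _ _ (Or.inl (norm_ne_zero_iff.2 hx))).comp
        continuous_norm.continuousAt
    exact hc.smul continuousAt_id

variable [CompleteSpace E]

local notation "⟪" x ", " y "⟫" => @inner ℝ _ _ x y

/-- Fundamental theorem of calculus for our setting. -/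
lemma ftc_Ici {f f' : ℝ → E} {T t : ℝ} (hT : 0 ≤ T) (ht : T ≤ t)
    (hd : ∀ s ∈ Icc T t, HasDerivWithinAt f (f' s) (Ici 0) s)
    (hc : ContinuousOn f' (Icc T t)) :
    f t - f T = ∫ s in T..t, f' s := by
  refine (intervalIntegral.integral_eq_sub_of_hasDeriv_right_of_le ht ?_ ?_ ?_).symm
  · exact fun s hs => ((hd s hs).continuousWithinAt).mono
      (Icc_subset_Ici_self.trans (Ici_subset_Ici.2 hT))
  · intro x hx
    exact (hd x (Ioo_subset_Icc_self hx)).mono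
      (Ioi_subset_Ici_self.trans (Ici_subset_Ici.2 (hT.trans hx.1.le)))
  · have : ContinuousOn f' (uIcc T t) := by rwa [uIcc_of_le ht]
    exact this.intervalIntegrable

/-- norm of the integral bound -/
lemma norm_sub_le_integral {f f' : ℝ → E} {T t : ℝ} (hT : 0 ≤ T) (ht : T ≤ t)
    (hd : ∀ s ∈ Icc T t, HasDerivWithinAt f (f' s) (Ici 0) s)
    (hc : ContinuousOn f' (Icc T t)) {g : ℝ → ℝ}
    (hg : IntervalIntegrable g volume T t)
    (hb : ∀ s ∈ Icc T t, ‖f' s‖ ≤ g s) :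
    ‖f t - f T‖ ≤ ∫ s in T..t, g s := by
  rw [ftc_Ici hT ht hd hc]
  refine le_trans (intervalIntegral.norm_integral_le_integral_norm ht) ?_
  refine intervalIntegral.integral_mono_on ht ?_ hg hb
  have : ContinuousOn (fun s => ‖f' s‖) (uIcc T t) := by
    rw [uIcc_of_le ht]; exact continuous_norm.comp_continuousOn hc
  exact this.intervalIntegrable

/-- Energy is constant along solutions. -/
lemma energy_eq {p q Λ : ℝ} (hp : 1 < p) (hq : q = p / (p - 1)) {u u' : ℝ → E}
    (hu : ∀ t ∈ Ici (0:ℝ), HasDerivWithinAt u (u' t) (Ici 0) t)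
    (hode : ∀ t ∈ Ici (0:ℝ), HasDerivWithinAt (fun s => Phi (p-2) (u' s))
      (-(Λ • Phi (p-2) (u t))) (Ici 0) t)
    {t : ℝ} (ht : t ∈ Ici (0:ℝ)) :
    (1/q) * ‖Phi (p-2) (u' t)‖ ^ q + (Λ/p) * ‖u t‖ ^ p
      = (1/q) * ‖Phi (p-2) (u' 0)‖ ^ q + (Λ/p) * ‖u 0‖ ^ p := by
  have hp1 : (0:ℝ) < p - 1 := by linarith
  have hq1 : 1 < q := by
    rw [hq, lt_div_iff₀ hp1]; linarith
  have hpq : (p - 2 + 1) * (q - 2 + 1) = 1 := by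
    have : (p - 1) * (q - 1) = 1 := by
      rw [hq]; field_simp; ring
    linarith [this]
  set v : ℝ → E := fun s => Phi (p-2) (u' s) with hv
  have hderiv : ∀ s ∈ Ici (0:ℝ),
      HasDerivWithinAt (fun r => (1/q) * ‖v r‖ ^ q + (Λ/p) * ‖u r‖ ^ p) 0 (Ici 0) s := by
    intro s hs
    have h1 : HasDerivWithinAt (fun r => ‖v r‖ ^ q)
        (((q * ‖v s‖ ^ (q-2)) • innerSL ℝ (v s)) (-(Λ • Phi (p-2) (u s)))) (Ici 0) s :=
      (hasFDerivAt_norm_rpow (v s) hq1).comp_hasDerivWithinAt s (hode s hs)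
    have h2 : HasDerivWithinAt (fun r => ‖u r‖ ^ p)
        (((p * ‖u s‖ ^ (p-2)) • innerSL ℝ (u s)) (u' s)) (Ici 0) s :=
      (hasFDerivAt_norm_rpow (u s) hp).comp_hasDerivWithinAt s (hu s hs)
    have h3 := ((h1.const_mul (1/q)).add (h2.const_mul (Λ/p)))
    refine h3.congr_deriv (Eq.symm ?_)
    have hq0 : q ≠ 0 := by linarith
    have hp0 : p ≠ 0 := by linarith
    have key : ‖v s‖ ^ (q-2) * ⟪v s, Phi (p-2) (u s)⟫ = ⟪u' s, Phi (p-2) (u s)⟫ := by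
      rw [← real_inner_smul_left]
      congr 1
      exact Phi_comp hpq (u' s)
    have key2 : ‖u s‖ ^ (p-2) * ⟪u s, u' s⟫ = ⟪u' s, Phi (p-2) (u s)⟫ := by
      rw [← real_inner_smul_left]
      exact real_inner_comm _ _
    simp only [ContinuousLinearMap.smul_apply, innerSL_apply_apply, smul_eq_mul,
      inner_neg_right, real_inner_smul_right]
    field_simp
    linear_combination Λ * key - Λ * key2
  have := constant_of_has_deriv_right_zero
    (f := fun r => (1/q) * ‖v r‖ ^ q + (Λ/p) * ‖u r‖ ^ p) (a := 0) (b := t)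
    (fun s hs => ((hderiv s (Icc_subset_Ici_self hs)).continuousWithinAt).mono Icc_subset_Ici_self)
    (fun s hs => (hderiv s (Ico_subset_Ici_self hs)).mono (Ici_subset_Ici.2 hs.1))
  exact this t (right_mem_Icc.2 ht)

lemma norm_Phi_pow {p q : ℝ} (hp : 1 < p) (hq : q = p/(p-1)) (x : E) :
    ‖Phi (p-2) x‖ ^ q = ‖x‖ ^ p := by
  have hp1 : (0:ℝ) < p - 1 := by linarith
  rw [norm_Phi (by linarith : (-1:ℝ) < p-2), show p - 2 + 1 = p - 1 by ring,
    ← Real.rpow_mul (norm_nonneg x)]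
  congr 1
  rw [hq]; field_simp

lemma zero_forward {p q Λ : ℝ} (hp : 1 < p) (hq : q = p/(p-1)) (hΛ : Λ ≠ 0) {u u' : ℝ → E}
    (hu : ∀ t ∈ Ici (0:ℝ), HasDerivWithinAt u (u' t) (Ici 0) t)
    (hode : ∀ t ∈ Ici (0:ℝ), HasDerivWithinAt (fun s => Phi (p-2) (u' s))
      (-(Λ • Phi (p-2) (u t))) (Ici 0) t)
    {T : ℝ} (hT : 0 ≤ T) (huT : u T = 0) (hu'T : u' T = 0) :
    ∀ t, T ≤ t → u t = 0 := by
  intro t htT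
  have hp1 : (0:ℝ) < p - 1 := by linarith
  have hp0 : (0:ℝ) < p := by linarith
  have hq1 : 1 < q := by rw [hq, lt_div_iff₀ hp1]; linarith
  have hq0 : (0:ℝ) < q := by linarith
  have hE : ∀ s ∈ Ici (0:ℝ), (1/q) * ‖u' s‖ ^ p + (Λ/p) * ‖u s‖ ^ p = 0 := by
    intro s hs
    have h1 := energy_eq hp hq hu hode hs
    have h2 := energy_eq hp hq hu hode (mem_Ici.2 hT)
    rw [huT, hu'T, Phi_zero, norm_zero, Real.zero_rpow hq0.ne',
      Real.zero_rpow hp0.ne', mul_zero, mul_zero, add_zero] at h2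
    rw [norm_Phi_pow hp hq] at h1
    rw [h1, ← h2]
  rcases hΛ.lt_or_gt with hΛneg | hΛpos
  · -- Λ < 0 : Gronwall
    set K : ℝ := -Λ * q / p with hK
    have hKpos : 0 < K := by
      have : 0 < -Λ := by linarith
      rw [hK]; positivity
    set c : ℝ := K ^ (1/p) with hc
    have hcnn : 0 ≤ c := Real.rpow_nonneg hKpos.le _
    have hbd : ∀ s ∈ Ici (0:ℝ), ‖u' s‖ = c * ‖u s‖ := by
      intro s hs
      have h1 := hE s hs
      have h2 : ‖u' s‖ ^ p = K * ‖u s‖ ^ p := by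
        have ha : (1/q) * ‖u' s‖ ^ p = -((Λ/p) * ‖u s‖ ^ p) := by linarith
        have ha2 : q * ((1/q) * ‖u' s‖ ^ p) = q * (-((Λ/p) * ‖u s‖ ^ p)) := by rw [ha]
        rw [← mul_assoc, mul_one_div, div_self hq0.ne', one_mul] at ha2
        rw [ha2, hK]; ring
      have h3 : (‖u' s‖ ^ p) ^ (1/p) = ‖u' s‖ := by
        rw [← Real.rpow_mul (norm_nonneg _), mul_one_div, div_self hp0.ne', Real.rpow_one]
      have h4 : (‖u s‖ ^ p) ^ (1/p) = ‖u s‖ := by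
        rw [← Real.rpow_mul (norm_nonneg _), mul_one_div, div_self hp0.ne', Real.rpow_one]
      rw [← h3, h2, Real.mul_rpow hKpos.le (Real.rpow_nonneg (norm_nonneg _) _), h4]
    have hgr := norm_le_gronwallBound_of_norm_deriv_right_le (f := u) (f' := u')
      (δ := 0) (K := c) (ε := 0) (a := T) (b := t)
      (fun s hs => ((hu s (mem_Ici.2 (hT.trans hs.1))).continuousWithinAt).mono
        (fun y hy => mem_Ici.2 (hT.trans hy.1) : Icc T t ⊆ Ici 0))
      (fun s hs => (hu s (mem_Ici.2 (hT.trans hs.1))).mono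
        (Ici_subset_Ici.2 (hT.trans hs.1)))
      (by rw [huT]; simp)
      (fun s hs => by
        rw [add_zero, hbd s (mem_Ici.2 (hT.trans hs.1))])
    have := hgr t (right_mem_Icc.2 htT)
    rw [gronwallBound_ε0_δ0] at this
    exact norm_le_zero_iff.1 this
  · -- Λ > 0 : both energy terms are nonneg
    have h1 := hE t (mem_Ici.2 (hT.trans htT))
    have t1 : 0 ≤ (1/q) * ‖u' t‖ ^ p := by positivity
    have t2 : 0 ≤ (Λ/p) * ‖u t‖ ^ p := by positivity
    have h2 : (Λ/p) * ‖u t‖ ^ p = 0 := by linarith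
    have h3 : ‖u t‖ ^ p = 0 := by
      have : Λ/p ≠ 0 := by positivity
      exact (mul_eq_zero.1 h2).resolve_left this
    have := (Real.rpow_eq_zero (norm_nonneg _) hp0.ne').1 h3
    exact norm_eq_zero.1 this

/-- The core double-Gronwall bootstrap. -/
lemma gronwall_core {w ω w' ω' : ℝ → E} {k1 k2 : ℝ → ℝ} {T h : ℝ}
    (hT : 0 ≤ T) (hh : 0 < h)
    (hw : ∀ s ∈ Icc T (T+h), HasDerivWithinAt w (w' s) (Ici 0) s)
    (hω : ∀ s ∈ Icc T (T+h), HasDerivWithinAt ω (ω' s) (Ici 0) s)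
    (hwc : ContinuousOn w' (Icc T (T+h))) (hωc : ContinuousOn ω' (Icc T (T+h)))
    (hwT : w T = 0) (hωT : ω T = 0)
    (hk1 : IntervalIntegrable k1 volume T (T+h))
    (hk2 : IntervalIntegrable k2 volume T (T+h))
    (hk1n : ∀ s ∈ Icc T (T+h), 0 ≤ k1 s) (hk2n : ∀ s ∈ Icc T (T+h), 0 ≤ k2 s)
    (hb1 : ∀ s ∈ Icc T (T+h), ‖ω' s‖ ≤ k1 s * ‖w s‖)
    (hb2 : ∀ s ∈ Icc T (T+h), ‖w' s‖ ≤ k2 s * ‖ω s‖)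
    (hsmall : (∫ s in T..T+h, k1 s) * (∫ s in T..T+h, k2 s) < 1) :
    ∀ s ∈ Icc T (T+h), w s = 0 := by
  have hTh : T ≤ T + h := by linarith
  have hsub : Icc T (T+h) ⊆ Ici (0:ℝ) := fun y hy => mem_Ici.2 (hT.trans hy.1)
  have hwcont : ContinuousOn w (Icc T (T+h)) :=
    fun s hs => ((hw s hs).continuousWithinAt).mono hsub
  have hωcont : ContinuousOn ω (Icc T (T+h)) :=
    fun s hs => ((hω s hs).continuousWithinAt).mono hsub
  obtain ⟨sw, hsw, hmw⟩ := isCompact_Icc.exists_isMaxOn (nonempty_Icc.2 hTh)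
    (continuous_norm.comp_continuousOn hwcont)
  obtain ⟨sω, hsω, hmω⟩ := isCompact_Icc.exists_isMaxOn (nonempty_Icc.2 hTh)
    (continuous_norm.comp_continuousOn hωcont)
  set W : ℝ := ‖w sw‖ with hWdef
  set Om : ℝ := ‖ω sω‖ with hOmdef
  have hWnn : 0 ≤ W := norm_nonneg _
  have hOmnn : 0 ≤ Om := norm_nonneg _
  have hWb : ∀ s ∈ Icc T (T+h), ‖w s‖ ≤ W := fun s hs => hmw hs
  have hOmb : ∀ s ∈ Icc T (T+h), ‖ω s‖ ≤ Om := fun s hs => hmω hs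
  set I1 : ℝ := ∫ s in T..T+h, k1 s with hI1
  set I2 : ℝ := ∫ s in T..T+h, k2 s with hI2
  have hI1nn : 0 ≤ I1 := intervalIntegral.integral_nonneg hTh (fun s hs => hk1n s hs)
  have hI2nn : 0 ≤ I2 := intervalIntegral.integral_nonneg hTh (fun s hs => hk2n s hs)
  -- bound for a pair (f, f', k, M)
  have main : ∀ (f f' : ℝ → E) (k : ℝ → ℝ) (M : ℝ), 0 ≤ M →
      (∀ s ∈ Icc T (T+h), HasDerivWithinAt f (f' s) (Ici 0) s) →
      ContinuousOn f' (Icc T (T+h)) → f T = 0 →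
      IntervalIntegrable k volume T (T+h) →
      (∀ s ∈ Icc T (T+h), 0 ≤ k s) →
      (∀ s ∈ Icc T (T+h), ‖f' s‖ ≤ k s * M) →
      ∀ s ∈ Icc T (T+h), ‖f s‖ ≤ (∫ r in T..T+h, k r) * M := by
    intro f f' k M hM hf hfc hfT hki hkn hkb s hs
    have hsubs : Icc T s ⊆ Icc T (T+h) := Icc_subset_Icc le_rfl hs.2
    have husub : uIcc T s ⊆ uIcc T (T+h) := by
      rw [uIcc_of_le hs.1, uIcc_of_le hTh]; exact hsubs
    have h0 : ‖f s - f T‖ ≤ ∫ r in T..s, k r * M := by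
      refine norm_sub_le_integral hT hs.1 (fun r hr => hf r (hsubs hr))
        (hfc.mono hsubs) ?_ (fun r hr => hkb r (hsubs hr))
      exact (hki.mono_set husub).mul_const M
    have h1 : (∫ r in T..s, k r * M) = (∫ r in T..s, k r) * M := by
      exact intervalIntegral.integral_mul_const M k
    have h2 : (∫ r in T..s, k r) ≤ ∫ r in T..T+h, k r := by
      refine intervalIntegral.integral_mono_interval le_rfl hs.1 hs.2 ?_ hki
      filter_upwards [MeasureTheory.ae_restrict_mem measurableSet_Ioc] with r hr
      exact hkn r (Ioc_subset_Icc_self hr)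
    rw [hfT, sub_zero] at h0
    calc ‖f s‖ ≤ (∫ r in T..s, k r) * M := by rw [← h1]; exact h0
      _ ≤ (∫ r in T..T+h, k r) * M := by nlinarith [h2]
  have hWle : W ≤ I2 * Om :=
    main w w' k2 Om hOmnn hw hwc hwT hk2 hk2n
      (fun s hs => le_trans (hb2 s hs) (by nlinarith [hk2n s hs, hOmb s hs])) sw hsw
  have hOmle : Om ≤ I1 * W :=
    main ω ω' k1 W hWnn hω hωc hωT hk1 hk1n
      (fun s hs => le_trans (hb1 s hs) (by nlinarith [hk1n s hs, hWb s hs])) sω hsω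
  have hW0 : W = 0 := by nlinarith
  intro s hs
  have := hWb s hs
  rw [hW0] at this
  exact norm_le_zero_iff.1 this

/-- quantitative continuity within `Ici 0` at `T`. -/
lemma cwa_bound {F : ℝ → E} {T : ℝ} (hT : 0 ≤ T) (hF : ContinuousWithinAt F (Ici 0) T)
    {ε : ℝ} (hε : 0 < ε) : ∃ δ > 0, ∀ s ∈ Icc T (T + δ), ‖F s - F T‖ < ε := by
  obtain ⟨δ0, hδ0, H⟩ := Metric.tendsto_nhdsWithin_nhds.1 hF ε hε
  refine ⟨δ0/2, by positivity, fun s hs => ?_⟩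
  have h1 : dist s T < δ0 := by
    rw [Real.dist_eq, abs_of_nonneg (by linarith [hs.1])]
    linarith [hs.2]
  have := H (mem_Ici.2 (hT.trans hs.1)) h1
  rwa [dist_eq_norm] at this

/-- linear lower bound from a nonvanishing derivative. -/
lemma linear_lower {f f' : ℝ → E} {T δ : ℝ} (hT : 0 ≤ T)
    (hf : ∀ s ∈ Icc T (T + δ), HasDerivWithinAt f (f' s) (Ici 0) s)
    (hfT : f T = 0) {ξ : E}
    (hcl : ∀ s ∈ Icc T (T + δ), ‖f' s - ξ‖ ≤ ‖ξ‖/2) :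
    ∀ s ∈ Icc T (T + δ), (s - T) * (‖ξ‖/2) ≤ ‖f s‖ := by
  intro s hs
  have hTs : T ≤ s := hs.1
  have hTδ : T ≤ T + δ := le_trans hTs hs.2
  have hsub : Icc T (T + δ) ⊆ Ici (0:ℝ) := fun y hy => mem_Ici.2 (hT.trans hy.1)
  have hg : ∀ r ∈ Icc T (T + δ),
      HasDerivWithinAt (fun r => f r - (r - T) • ξ) (f' r - ξ) (Icc T (T + δ)) r := by
    intro r hr
    have h1 : HasDerivWithinAt (fun r : ℝ => (r - T) • ξ) ((1:ℝ) • ξ) (Icc T (T + δ)) r :=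
      (((hasDerivAt_id r).sub_const T).smul_const ξ).hasDerivWithinAt
    have h2 := ((hf r hr).mono hsub).sub h1
    rw [one_smul] at h2
    exact h2
  have mvt := Convex.norm_image_sub_le_of_norm_hasDerivWithin_le hg
    (fun r hr => hcl r hr) (convex_Icc T (T + δ)) (left_mem_Icc.2 hTδ) hs
  have e1 : ‖f s - (s - T) • ξ‖ ≤ ‖ξ‖/2 * (s - T) := by
    have h2 : ‖(f s - (s - T) • ξ) - (f T - (T - T) • ξ)‖ ≤ ‖ξ‖/2 * ‖s - T‖ := mvt
    rw [hfT, sub_self, zero_smul, sub_zero, sub_zero, Real.norm_eq_abs,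
      abs_of_nonneg (sub_nonneg.2 hTs)] at h2
    exact h2
  have e2 : ‖(s - T) • ξ‖ = (s - T) * ‖ξ‖ := by
    rw [norm_smul, Real.norm_eq_abs, abs_of_nonneg (sub_nonneg.2 hTs)]
  have e3 : ‖(s - T) • ξ‖ - ‖f s‖ ≤ ‖f s - (s - T) • ξ‖ := by
    rw [norm_sub_rev]
    exact norm_sub_norm_le _ _
  rw [e2] at e3
  linarith

/-- integrability of the weights we use. -/
lemma k_integrable {C α T a b : ℝ} (hα : -1 < α) :
    IntervalIntegrable (fun s => C * (s - T) ^ α) volume a b := by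
  have h1 : IntervalIntegrable (fun x : ℝ => x ^ α) volume (a - T) (b - T) :=
    intervalIntegrable_rpow' hα
  have h2 := (h1.comp_sub_right T)
  simpa using h2.const_mul C

lemma k_integral {C α T δ : ℝ} (hδ : 0 ≤ δ) (hα : -1 < α) :
    ∫ s in T..T+δ, C * (s - T) ^ α = C * δ ^ (α+1) / (α+1) := by
  rw [intervalIntegral.integral_const_mul]
  have h1 : (∫ s in T..T+δ, (s - T) ^ α) = ∫ x in (0:ℝ)..δ, x ^ α := by
    have := intervalIntegral.integral_comp_sub_right (a := T) (b := T + δ)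
      (fun x : ℝ => x ^ α) T
    simpa using this
  rw [h1, integral_rpow (Or.inl hα), Real.zero_rpow (by linarith : α + 1 ≠ 0)]
  ring

/-- choosing a small interval making the weight integral `< 1`. -/
lemma small_step {C α δ : ℝ} (hC : 0 ≤ C) (hα : -1 < α) (hδ : 0 < δ) :
    ∃ δ', 0 < δ' ∧ δ' ≤ δ ∧ C * δ' ^ (α+1) / (α+1) < 1 := by
  have hα1 : (0:ℝ) < α + 1 := by linarith
  have htd : Tendsto (fun d : ℝ => C * d ^ (α+1) / (α+1)) (nhds 0) (nhds 0) := by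
    have h1 : Tendsto (fun d : ℝ => d ^ (α+1)) (nhds 0) (nhds ((0:ℝ) ^ (α+1))) :=
      (Real.continuousAt_rpow_const 0 (α+1) (Or.inr hα1.le)).tendsto
    rw [Real.zero_rpow hα1.ne'] at h1
    have := (h1.const_mul C).div_const (α+1)
    simpa using this
  have hev2 : ∀ᶠ d in nhdsWithin (0:ℝ) (Ioi 0), C * d ^ (α+1) / (α+1) < 1 :=
    (htd.mono_left nhdsWithin_le_nhds).eventually_lt_const one_pos
  have hmem : Ioc (0:ℝ) δ ∈ nhdsWithin (0:ℝ) (Ioi 0) := Ioc_mem_nhdsGT hδ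
  obtain ⟨d, hd1, hd2⟩ := (hev2.and (eventually_of_mem hmem (fun x hx => hx))).exists
  exact ⟨d, hd2.1, hd2.2, hd1⟩


/-- Local forward uniqueness from a common point. -/
lemma local_unique {p q Λ : ℝ} (hp : 1 < p) (hq : q = p/(p-1)) (hΛ : Λ ≠ 0)
    {u z u' z' : ℝ → E}
    (hu : ∀ t ∈ Ici (0:ℝ), HasDerivWithinAt u (u' t) (Ici 0) t)
    (hz : ∀ t ∈ Ici (0:ℝ), HasDerivWithinAt z (z' t) (Ici 0) t)
    (hu'c : ContinuousOn u' (Ici 0)) (hz'c : ContinuousOn z' (Ici 0))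
    (huode : ∀ t ∈ Ici (0:ℝ), HasDerivWithinAt (fun s => Phi (p-2) (u' s))
      (-(Λ • Phi (p-2) (u t))) (Ici 0) t)
    (hzode : ∀ t ∈ Ici (0:ℝ), HasDerivWithinAt (fun s => Phi (p-2) (z' s))
      (-(Λ • Phi (p-2) (z t))) (Ici 0) t)
    {T : ℝ} (hT : 0 ≤ T) (heq : u T = z T) (heq' : u' T = z' T) :
    ∃ δ > 0, ∀ s ∈ Icc T (T + δ), u s = z s := by
  have hTmem : T ∈ Ici (0:ℝ) := mem_Ici.2 hT
  have hp1 : (0:ℝ) < p - 1 := by linarith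
  have hq1 : 1 < q := by rw [hq, lt_div_iff₀ hp1]; linarith
  have hpm1 : (-1:ℝ) < p - 2 := by linarith
  have hqm1 : (-1:ℝ) < q - 2 := by linarith
  have hpq : (p - 2 + 1) * (q - 2 + 1) = 1 := by
    have : (p - 1) * (q - 1) = 1 := by rw [hq]; field_simp; ring
    linarith [this]
  by_cases hzero : u T = 0 ∧ u' T = 0
  · refine ⟨1, one_pos, fun s hs => ?_⟩
    have hu0 := zero_forward hp hq hΛ hu huode hT hzero.1 hzero.2 s hs.1
    have hz0 := zero_forward hp hq hΛ hz hzode hT (heq ▸ hzero.1) (heq' ▸ hzero.2) s hs.1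
    rw [hu0, hz0]
  -- nondegenerate case
  set Cp : ℝ := (1 + |p-2|) * 4 ^ (|p-2| + 1) with hCpdef
  set Cq : ℝ := (1 + |q-2|) * 4 ^ (|q-2| + 1) with hCqdef
  have hCp : 0 < Cp := by
    have : (0:ℝ) < 4 ^ (|p-2| + 1) := Real.rpow_pos_of_pos (by norm_num) _
    nlinarith [abs_nonneg (p-2)]
  have hCq : 0 < Cq := by
    have : (0:ℝ) < 4 ^ (|q-2| + 1) := Real.rpow_pos_of_pos (by norm_num) _
    nlinarith [abs_nonneg (q-2)]
  set vU : ℝ → E := fun s => Phi (p-2) (u' s) with hvU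
  set vZ : ℝ → E := fun s => Phi (p-2) (z' s) with hvZ
  set w : ℝ → E := fun s => u s - z s with hwdef
  set wd : ℝ → E := fun s => u' s - z' s with hwddef
  set om : ℝ → E := fun s => vU s - vZ s with homdef
  set omd : ℝ → E := fun s => -(Λ • Phi (p-2) (u s)) - -(Λ • Phi (p-2) (z s)) with homddef
  have hw : ∀ s ∈ Ici (0:ℝ), HasDerivWithinAt w (wd s) (Ici 0) s :=
    fun s hs => (hu s hs).sub (hz s hs)
  have hom : ∀ s ∈ Ici (0:ℝ), HasDerivWithinAt om (omd s) (Ici 0) s :=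
    fun s hs => (huode s hs).sub (hzode s hs)
  have hucont : ContinuousOn u (Ici 0) := fun s hs => (hu s hs).continuousWithinAt
  have hzcont : ContinuousOn z (Ici 0) := fun s hs => (hz s hs).continuousWithinAt
  have hvUcont : ContinuousOn vU (Ici 0) :=
    (Phi_continuous hpm1).comp_continuousOn hu'c
  have hvZcont : ContinuousOn vZ (Ici 0) :=
    (Phi_continuous hpm1).comp_continuousOn hz'c
  have homdcont : ContinuousOn omd (Ici 0) := by
    have h1 : ContinuousOn (fun s => -(Λ • Phi (p-2) (u s))) (Ici 0) :=
      (((Phi_continuous hpm1).comp_continuousOn hucont).const_smul Λ).neg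
    have h2 : ContinuousOn (fun s => -(Λ • Phi (p-2) (z s))) (Ici 0) :=
      (((Phi_continuous hpm1).comp_continuousOn hzcont).const_smul Λ).neg
    exact h1.sub h2
  have hwdcont : ContinuousOn wd (Ici 0) := hu'c.sub hz'c
  -- pointwise difference bounds
  have hb1 : ∀ s ∈ Ici (0:ℝ),
      ‖omd s‖ ≤ |Λ| * Cp * ((‖u s‖ + ‖z s‖) ^ (p-2)) * ‖w s‖ := by
    intro s hs
    have e1 : omd s = (-Λ) • (Phi (p-2) (u s) - Phi (p-2) (z s)) := by
      show -(Λ • Phi (p-2) (u s)) - -(Λ • Phi (p-2) (z s))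
        = (-Λ) • (Phi (p-2) (u s) - Phi (p-2) (z s))
      module
    rw [e1, norm_smul, Real.norm_eq_abs, abs_neg]
    have := Phi_diff_le hpm1 (u s) (z s)
    calc |Λ| * ‖Phi (p-2) (u s) - Phi (p-2) (z s)‖
        ≤ |Λ| * (Cp * (‖u s‖ + ‖z s‖) ^ (p-2) * ‖u s - z s‖) := by
          exact mul_le_mul_of_nonneg_left this (abs_nonneg Λ)
      _ = |Λ| * Cp * ((‖u s‖ + ‖z s‖) ^ (p-2)) * ‖w s‖ := by rw [hwdef]; ring
  have hb2 : ∀ s ∈ Ici (0:ℝ),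
      ‖wd s‖ ≤ Cq * ((‖vU s‖ + ‖vZ s‖) ^ (q-2)) * ‖om s‖ := by
    intro s hs
    have e1 : wd s = Phi (q-2) (vU s) - Phi (q-2) (vZ s) := by
      show u' s - z' s = Phi (q-2) (Phi (p-2) (u' s)) - Phi (q-2) (Phi (p-2) (z' s))
      rw [Phi_comp hpq, Phi_comp hpq]
    rw [e1]
    have := Phi_diff_le hqm1 (vU s) (vZ s)
    calc ‖Phi (q-2) (vU s) - Phi (q-2) (vZ s)‖
        ≤ Cq * (‖vU s‖ + ‖vZ s‖) ^ (q-2) * ‖vU s - vZ s‖ := this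
      _ = Cq * ((‖vU s‖ + ‖vZ s‖) ^ (q-2)) * ‖om s‖ := by rw [homdef]
  -- side 1 : weight for omd
  have side1 : ∃ δ1 > 0, ∃ C1 α1 : ℝ, 0 ≤ C1 ∧ -1 < α1 ∧
      ∀ s ∈ Icc T (T + δ1), ‖omd s‖ ≤ (C1 * (s - T) ^ α1) * ‖w s‖ := by
    by_cases hx0 : u T = 0
    · have hd0 : u' T ≠ 0 := fun h => hzero ⟨hx0, h⟩
      by_cases hple : 2 ≤ p
      · -- bounded weight near 0
        obtain ⟨δa, hδa, Ha⟩ := cwa_bound hT (hucont T hTmem) (ε := 1/2) (by norm_num)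
        obtain ⟨δb, hδb, Hb⟩ := cwa_bound hT (hzcont T hTmem) (ε := 1/2) (by norm_num)
        refine ⟨min δa δb, lt_min hδa hδb, |Λ| * Cp, 0,
          mul_nonneg (abs_nonneg Λ) hCp.le, by norm_num,
          fun s hs => ?_⟩
        have hsa : s ∈ Icc T (T + δa) :=
          ⟨hs.1, hs.2.trans (by simp [min_le_left])⟩
        have hsb : s ∈ Icc T (T + δb) :=
          ⟨hs.1, hs.2.trans (by simp [min_le_right])⟩
        have h1 : ‖u s‖ ≤ 1/2 := by
          have := Ha s hsa; rw [hx0, sub_zero] at this; linarith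
        have h2 : ‖z s‖ ≤ 1/2 := by
          have := Hb s hsb; rw [← heq, hx0, sub_zero] at this; linarith
        have hwt : (‖u s‖ + ‖z s‖) ^ (p-2) ≤ 1 :=
          Real.rpow_le_one (by positivity) (by linarith) (by linarith)
        have hmain := hb1 s (mem_Ici.2 (hT.trans hs.1))
        rw [Real.rpow_zero, mul_one]
        calc ‖omd s‖ ≤ |Λ| * Cp * ((‖u s‖ + ‖z s‖) ^ (p-2)) * ‖w s‖ := hmain
          _ ≤ |Λ| * Cp * 1 * ‖w s‖ :=
              mul_le_mul_of_nonneg_right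
                (mul_le_mul_of_nonneg_left hwt (mul_nonneg (abs_nonneg Λ) hCp.le))
                (norm_nonneg _)
          _ = |Λ| * Cp * ‖w s‖ := by ring
      · -- singular weight , p < 2
        push_neg at hple
        have hd0n : (0:ℝ) < ‖u' T‖ := norm_pos_iff.2 hd0
        obtain ⟨δa, hδa, Ha⟩ := cwa_bound hT (hu'c T hTmem) (ε := ‖u' T‖/2) (by positivity)
        set c : ℝ := ‖u' T‖/2 with hcdef
        have hclow : ∀ s ∈ Icc T (T + δa), (s - T) * c ≤ ‖u s‖ := by
          have := linear_lower hT (fun s hs => hu s (mem_Ici.2 (hT.trans hs.1))) hx0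
            (ξ := u' T) (fun s hs => (Ha s hs).le)
          exact this
        have hc0 : (0:ℝ) < c := by rw [hcdef]; positivity
        refine ⟨δa, hδa, |Λ| * Cp * c ^ (p-2), p - 2,
          mul_nonneg (mul_nonneg (abs_nonneg Λ) hCp.le) (Real.rpow_nonneg hc0.le _),
          hpm1, fun s hs => ?_⟩
        rcases eq_or_lt_of_le hs.1 with heqs | hlt
        · rw [← heqs]
          have homdT : omd T = 0 := by
            show -(Λ • Phi (p-2) (u T)) - -(Λ • Phi (p-2) (z T)) = 0
            rw [heq]; simp
          rw [homdT, norm_zero, sub_self, Real.zero_rpow (by linarith : p - 2 ≠ 0)]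
          simp
        · have hsum : (0:ℝ) < ‖u s‖ + ‖z s‖ := by
            have := hclow s hs
            have hc : 0 < c := by positivity
            nlinarith [norm_nonneg (z s)]
          have hlow2 : (s - T) * c ≤ ‖u s‖ + ‖z s‖ := by
            have := hclow s hs; linarith [norm_nonneg (z s)]
          have hwt : (‖u s‖ + ‖z s‖) ^ (p-2) ≤ ((s - T) * c) ^ (p-2) :=
            Real.rpow_le_rpow_of_nonpos
              (mul_pos (by linarith : (0:ℝ) < s - T) hc0) hlow2 (by linarith)
          have hsplit : ((s - T) * c) ^ (p-2) = (s - T) ^ (p-2) * c ^ (p-2) :=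
            Real.mul_rpow (by linarith) hc0.le
          have hmain := hb1 s (mem_Ici.2 (hT.trans hs.1))
          have hwn : (0:ℝ) ≤ ‖w s‖ := norm_nonneg _
          have hLCp : (0:ℝ) ≤ |Λ| * Cp := mul_nonneg (abs_nonneg Λ) hCp.le
          calc ‖omd s‖ ≤ |Λ| * Cp * ((‖u s‖ + ‖z s‖) ^ (p-2)) * ‖w s‖ := hmain
            _ ≤ |Λ| * Cp * ((s - T) ^ (p-2) * c ^ (p-2)) * ‖w s‖ := by
                rw [← hsplit]
                exact mul_le_mul_of_nonneg_right
                  (mul_le_mul_of_nonneg_left hwt hLCp) hwn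
            _ = (|Λ| * Cp * c ^ (p-2) * (s - T) ^ (p-2)) * ‖w s‖ := by ring
    · -- u T ≠ 0 : constant weight
      have hx0n : (0:ℝ) < ‖u T‖ := norm_pos_iff.2 hx0
      obtain ⟨δa, hδa, Ha⟩ := cwa_bound hT (hucont T hTmem) (ε := ‖u T‖/4) (by positivity)
      obtain ⟨δb, hδb, Hb⟩ := cwa_bound hT (hzcont T hTmem) (ε := ‖u T‖/4) (by positivity)
      refine ⟨min δa δb, lt_min hδa hδb, |Λ| * Cp * (4 ^ |p-2| * ‖u T‖ ^ (p-2)), 0,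
        mul_nonneg (mul_nonneg (abs_nonneg Λ) hCp.le)
          (mul_nonneg (Real.rpow_nonneg (by norm_num) _) (Real.rpow_nonneg (norm_nonneg _) _)),
        by norm_num, fun s hs => ?_⟩
      have hsa : s ∈ Icc T (T + δa) := ⟨hs.1, hs.2.trans (by simp [min_le_left])⟩
      have hsb : s ∈ Icc T (T + δb) := ⟨hs.1, hs.2.trans (by simp [min_le_right])⟩
      have h1 : ‖u s - u T‖ < ‖u T‖/4 := Ha s hsa
      have h2 : ‖z s - u T‖ < ‖u T‖/4 := by
        have := Hb s hsb; rwa [← heq] at this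
      have hu1 : ‖u T‖ - ‖u T‖/4 ≤ ‖u s‖ := by
        have := norm_sub_norm_le (u s) (u T)
        have h3 := abs_sub_abs_le_abs_sub (‖u s‖) (‖u T‖)
        have := norm_sub_norm_le (u T) (u s)
        rw [norm_sub_rev] at this
        linarith [this, h1]
      have hz1 : ‖u T‖ - ‖u T‖/4 ≤ ‖z s‖ := by
        have := norm_sub_norm_le (u T) (z s)
        rw [norm_sub_rev] at this
        linarith [this, h2]
      have hu2 : ‖u s‖ ≤ ‖u T‖ + ‖u T‖/4 := by
        have := norm_sub_norm_le (u s) (u T)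
        linarith [this, h1]
      have hz2 : ‖z s‖ ≤ ‖u T‖ + ‖u T‖/4 := by
        have := norm_sub_norm_le (z s) (u T)
        linarith [this, h2]
      have hsum : (0:ℝ) < ‖u s‖ + ‖z s‖ := by linarith
      have hwt : (‖u s‖ + ‖z s‖) ^ (p-2) ≤ 4 ^ |p-2| * ‖u T‖ ^ (p-2) :=
        rpow_between hsum hx0n (by linarith) (by linarith)
      have hmain := hb1 s (mem_Ici.2 (hT.trans hs.1))
      rw [Real.rpow_zero, mul_one]
      have hwn : (0:ℝ) ≤ ‖w s‖ := norm_nonneg _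
      have hLCp : (0:ℝ) ≤ |Λ| * Cp := mul_nonneg (abs_nonneg Λ) hCp.le
      calc ‖omd s‖ ≤ |Λ| * Cp * ((‖u s‖ + ‖z s‖) ^ (p-2)) * ‖w s‖ := hmain
        _ ≤ |Λ| * Cp * (4 ^ |p-2| * ‖u T‖ ^ (p-2)) * ‖w s‖ :=
            mul_le_mul_of_nonneg_right (mul_le_mul_of_nonneg_left hwt hLCp) hwn
  -- side 2 : weight for wd
  have side2 : ∃ δ2 > 0, ∃ C2 α2 : ℝ, 0 ≤ C2 ∧ -1 < α2 ∧
      ∀ s ∈ Icc T (T + δ2), ‖wd s‖ ≤ (C2 * (s - T) ^ α2) * ‖om s‖ := by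
    by_cases hd0 : u' T = 0
    · have hx0 : u T ≠ 0 := fun h => hzero ⟨h, hd0⟩
      have hvUT : vU T = 0 := by
        show Phi (p-2) (u' T) = 0
        rw [hd0, Phi_zero]
      have hvZT : vZ T = 0 := by
        show Phi (p-2) (z' T) = 0
        rw [← heq', hd0, Phi_zero]
      by_cases hqle : 2 ≤ q
      · obtain ⟨δa, hδa, Ha⟩ := cwa_bound hT (hvUcont T hTmem) (ε := 1/2) (by norm_num)
        obtain ⟨δb, hδb, Hb⟩ := cwa_bound hT (hvZcont T hTmem) (ε := 1/2) (by norm_num)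
        refine ⟨min δa δb, lt_min hδa hδb, Cq, 0, hCq.le, by norm_num, fun s hs => ?_⟩
        have hsa : s ∈ Icc T (T + δa) := ⟨hs.1, hs.2.trans (by simp [min_le_left])⟩
        have hsb : s ∈ Icc T (T + δb) := ⟨hs.1, hs.2.trans (by simp [min_le_right])⟩
        have h1 : ‖vU s‖ ≤ 1/2 := by
          have := Ha s hsa; rw [hvUT, sub_zero] at this; linarith
        have h2 : ‖vZ s‖ ≤ 1/2 := by
          have := Hb s hsb; rw [hvZT, sub_zero] at this; linarith
        have hwt : (‖vU s‖ + ‖vZ s‖) ^ (q-2) ≤ 1 :=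
          Real.rpow_le_one (by positivity) (by linarith) (by linarith)
        have hmain := hb2 s (mem_Ici.2 (hT.trans hs.1))
        rw [Real.rpow_zero, mul_one]
        calc ‖wd s‖ ≤ Cq * ((‖vU s‖ + ‖vZ s‖) ^ (q-2)) * ‖om s‖ := hmain
          _ ≤ Cq * 1 * ‖om s‖ :=
              mul_le_mul_of_nonneg_right
                (mul_le_mul_of_nonneg_left hwt hCq.le) (norm_nonneg _)
          _ = Cq * ‖om s‖ := by ring
      · -- q < 2, singular
        push_neg at hqle
        set ξ : E := -(Λ • Phi (p-2) (u T)) with hξdef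
        have hξn : (0:ℝ) < ‖ξ‖ := by
          rw [hξdef, norm_neg, norm_smul, Real.norm_eq_abs, norm_Phi hpm1]
          have h1 : (0:ℝ) < |Λ| := abs_pos.2 hΛ
          have h2 : (0:ℝ) < ‖u T‖ ^ (p-2+1) :=
            Real.rpow_pos_of_pos (norm_pos_iff.2 hx0) _
          positivity
        have hFc : ContinuousWithinAt (fun s => -(Λ • Phi (p-2) (u s))) (Ici 0) T :=
          ((((Phi_continuous hpm1).comp_continuousOn hucont).const_smul Λ).neg) T hTmem
        obtain ⟨δa, hδa, Ha⟩ := cwa_bound hT hFc (ε := ‖ξ‖/2) (by positivity)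
        set c : ℝ := ‖ξ‖/2 with hcdef
        have hclow : ∀ s ∈ Icc T (T + δa), (s - T) * c ≤ ‖vU s‖ := by
          have := linear_lower hT
            (f := vU) (f' := fun s => -(Λ • Phi (p-2) (u s)))
            (fun s hs => huode s (mem_Ici.2 (hT.trans hs.1))) hvUT
            (ξ := ξ) (fun s hs => (Ha s hs).le)
          exact this
        have hc0 : (0:ℝ) < c := by rw [hcdef]; positivity
        refine ⟨δa, hδa, Cq * c ^ (q-2), q - 2,
          mul_nonneg hCq.le (Real.rpow_nonneg hc0.le _), hqm1, fun s hs => ?_⟩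
        rcases eq_or_lt_of_le hs.1 with heqs | hlt
        · rw [← heqs]
          have hwdT : wd T = 0 := by
            show u' T - z' T = 0
            rw [heq', sub_self]
          rw [hwdT, norm_zero, sub_self, Real.zero_rpow (by linarith : q - 2 ≠ 0)]
          simp
        · have hc : 0 < c := hc0
          have hsum : (0:ℝ) < ‖vU s‖ + ‖vZ s‖ := by
            have := hclow s hs
            nlinarith [norm_nonneg (vZ s)]
          have hlow2 : (s - T) * c ≤ ‖vU s‖ + ‖vZ s‖ := by
            have := hclow s hs; linarith [norm_nonneg (vZ s)]
          have hwt : (‖vU s‖ + ‖vZ s‖) ^ (q-2) ≤ ((s - T) * c) ^ (q-2) :=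
            Real.rpow_le_rpow_of_nonpos
              (mul_pos (by linarith : (0:ℝ) < s - T) hc) hlow2 (by linarith)
          have hsplit : ((s - T) * c) ^ (q-2) = (s - T) ^ (q-2) * c ^ (q-2) :=
            Real.mul_rpow (by linarith) hc.le
          have hmain := hb2 s (mem_Ici.2 (hT.trans hs.1))
          have hwn : (0:ℝ) ≤ ‖om s‖ := norm_nonneg _
          calc ‖wd s‖ ≤ Cq * ((‖vU s‖ + ‖vZ s‖) ^ (q-2)) * ‖om s‖ := hmain
            _ ≤ Cq * ((s - T) ^ (q-2) * c ^ (q-2)) * ‖om s‖ := by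
                rw [← hsplit]
                exact mul_le_mul_of_nonneg_right
                  (mul_le_mul_of_nonneg_left hwt hCq.le) hwn
            _ = (Cq * c ^ (q-2) * (s - T) ^ (q-2)) * ‖om s‖ := by ring
    · -- u' T ≠ 0 : constant weight
      set y0 : E := Phi (p-2) (u' T) with hy0def
      have hy0n : (0:ℝ) < ‖y0‖ := by
        rw [hy0def, norm_Phi hpm1]
        exact Real.rpow_pos_of_pos (norm_pos_iff.2 hd0) _
      have hvUT : vU T = y0 := rfl
      have hvZT : vZ T = y0 := by
        show Phi (p-2) (z' T) = y0
        rw [← heq']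
      obtain ⟨δa, hδa, Ha⟩ := cwa_bound hT (hvUcont T hTmem) (ε := ‖y0‖/4) (by positivity)
      obtain ⟨δb, hδb, Hb⟩ := cwa_bound hT (hvZcont T hTmem) (ε := ‖y0‖/4) (by positivity)
      refine ⟨min δa δb, lt_min hδa hδb, Cq * (4 ^ |q-2| * ‖y0‖ ^ (q-2)), 0,
        mul_nonneg hCq.le
          (mul_nonneg (Real.rpow_nonneg (by norm_num) _) (Real.rpow_nonneg (norm_nonneg _) _)),
        by norm_num, fun s hs => ?_⟩
      have hsa : s ∈ Icc T (T + δa) := ⟨hs.1, hs.2.trans (by simp [min_le_left])⟩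
      have hsb : s ∈ Icc T (T + δb) := ⟨hs.1, hs.2.trans (by simp [min_le_right])⟩
      have h1 : ‖vU s - y0‖ < ‖y0‖/4 := by
        have := Ha s hsa; rwa [hvUT] at this
      have h2 : ‖vZ s - y0‖ < ‖y0‖/4 := by
        have := Hb s hsb; rwa [hvZT] at this
      have hu1 : ‖y0‖ - ‖y0‖/4 ≤ ‖vU s‖ := by
        have := norm_sub_norm_le y0 (vU s)
        rw [norm_sub_rev] at this
        linarith [this, h1]
      have hz1 : ‖y0‖ - ‖y0‖/4 ≤ ‖vZ s‖ := by
        have := norm_sub_norm_le y0 (vZ s)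
        rw [norm_sub_rev] at this
        linarith [this, h2]
      have hu2 : ‖vU s‖ ≤ ‖y0‖ + ‖y0‖/4 := by
        have := norm_sub_norm_le (vU s) y0
        linarith [this, h1]
      have hz2 : ‖vZ s‖ ≤ ‖y0‖ + ‖y0‖/4 := by
        have := norm_sub_norm_le (vZ s) y0
        linarith [this, h2]
      have hsum : (0:ℝ) < ‖vU s‖ + ‖vZ s‖ := by linarith
      have hwt : (‖vU s‖ + ‖vZ s‖) ^ (q-2) ≤ 4 ^ |q-2| * ‖y0‖ ^ (q-2) :=
        rpow_between hsum hy0n (by linarith) (by linarith)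
      have hmain := hb2 s (mem_Ici.2 (hT.trans hs.1))
      rw [Real.rpow_zero, mul_one]
      have hwn : (0:ℝ) ≤ ‖om s‖ := norm_nonneg _
      calc ‖wd s‖ ≤ Cq * ((‖vU s‖ + ‖vZ s‖) ^ (q-2)) * ‖om s‖ := hmain
        _ ≤ Cq * (4 ^ |q-2| * ‖y0‖ ^ (q-2)) * ‖om s‖ :=
            mul_le_mul_of_nonneg_right (mul_le_mul_of_nonneg_left hwt hCq.le) hwn
  -- combine the two sides
  obtain ⟨δ1, hδ1, C1, α1, hC1, hα1, hbd1⟩ := side1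
  obtain ⟨δ2, hδ2, C2, α2, hC2, hα2, hbd2⟩ := side2
  obtain ⟨δ1', h1'pos, h1'le, h1'int⟩ := small_step hC1 hα1 (lt_min hδ1 hδ2)
  obtain ⟨δ2', h2'pos, h2'le, h2'int⟩ := small_step hC2 hα2 (lt_min hδ1 hδ2)
  set δ : ℝ := min δ1' δ2' with hδdef
  have hδpos : 0 < δ := lt_min h1'pos h2'pos
  have hδle1 : δ ≤ δ1 := le_trans (min_le_left _ _) (h1'le.trans (min_le_left _ _))
  have hδle2 : δ ≤ δ2 := le_trans (min_le_left _ _) (h1'le.trans (min_le_right _ _))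
  have hIcc1 : Icc T (T + δ) ⊆ Icc T (T + δ1) := Icc_subset_Icc le_rfl (by linarith)
  have hIcc2 : Icc T (T + δ) ⊆ Icc T (T + δ2) := Icc_subset_Icc le_rfl (by linarith)
  have hIccIci : Icc T (T + δ) ⊆ Ici (0:ℝ) := fun y hy => mem_Ici.2 (hT.trans hy.1)
  -- the integral identities
  have hmono : ∀ (C α : ℝ), 0 ≤ C → -1 < α → ∀ d1 d2 : ℝ, 0 < d1 → d1 ≤ d2 →
      C * d1 ^ (α+1) / (α+1) ≤ C * d2 ^ (α+1) / (α+1) := by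
    intro C α hC hα d1 d2 hd1 hd12
    have : d1 ^ (α+1) ≤ d2 ^ (α+1) := Real.rpow_le_rpow hd1.le hd12 (by linarith)
    have hα1' : (0:ℝ) < α + 1 := by linarith
    have h2 := mul_le_mul_of_nonneg_left this hC
    exact (div_le_div_iff_of_pos_right hα1').2 h2
  have hI1 : (∫ s in T..T+δ, C1 * (s - T) ^ α1) < 1 := by
    rw [k_integral hδpos.le hα1]
    exact lt_of_le_of_lt (hmono C1 α1 hC1 hα1 δ δ1' hδpos (min_le_left _ _)) h1'int
  have hI2 : (∫ s in T..T+δ, C2 * (s - T) ^ α2) < 1 := by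
    rw [k_integral hδpos.le hα2]
    exact lt_of_le_of_lt (hmono C2 α2 hC2 hα2 δ δ2' hδpos (min_le_right _ _)) h2'int
  have hI1nn : 0 ≤ ∫ s in T..T+δ, C1 * (s - T) ^ α1 :=
    intervalIntegral.integral_nonneg (by linarith) (fun s hs =>
      mul_nonneg hC1 (Real.rpow_nonneg (by linarith [hs.1]) _))
  have hI2nn : 0 ≤ ∫ s in T..T+δ, C2 * (s - T) ^ α2 :=
    intervalIntegral.integral_nonneg (by linarith) (fun s hs =>
      mul_nonneg hC2 (Real.rpow_nonneg (by linarith [hs.1]) _))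
  have hcore := gronwall_core hT hδpos
    (fun s hs => hw s (hIccIci hs)) (fun s hs => hom s (hIccIci hs))
    (hwdcont.mono hIccIci) (homdcont.mono hIccIci)
    (by show u T - z T = 0; rw [heq, sub_self])
    (by show Phi (p-2) (u' T) - Phi (p-2) (z' T) = 0; rw [heq', sub_self])
    (k_integrable hα1) (k_integrable hα2)
    (fun s hs => mul_nonneg hC1 (Real.rpow_nonneg (by linarith [hs.1]) _))
    (fun s hs => mul_nonneg hC2 (Real.rpow_nonneg (by linarith [hs.1]) _))
    (fun s hs => hbd1 s (hIcc1 hs))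
    (fun s hs => hbd2 s (hIcc2 hs))
    (by nlinarith [hI1, hI2, hI1nn, hI2nn])
  refine ⟨δ, hδpos, fun s hs => ?_⟩
  have h9 : u s - z s = 0 := hcore s hs
  exact sub_eq_zero.1 h9


end

/-- Global uniqueness for the vectorial `p`-Laplacian initial value problem. -/
theorem global_uniqueness (p Λ : ℝ) (hp : 1 < p) (hΛ : Λ ≠ 0)
    (N : ℕ) (hN : 1 ≤ N) (a b : EuclideanSpace ℝ (Fin N))
    (u z u' z' : ℝ → EuclideanSpace ℝ (Fin N))
    (hu : ∀ t ∈ Set.Ici (0:ℝ), HasDerivWithinAt u (u' t) (Set.Ici 0) t)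
    (hz : ∀ t ∈ Set.Ici (0:ℝ), HasDerivWithinAt z (z' t) (Set.Ici 0) t)
    (hu' : ContinuousOn u' (Set.Ici 0))
    (hz' : ContinuousOn z' (Set.Ici 0))
    (huode : ∀ t ∈ Set.Ici (0:ℝ),
      HasDerivWithinAt (fun s => ‖u' s‖ ^ (p - 2) • u' s)
        (-(Λ • (‖u t‖ ^ (p - 2) • u t))) (Set.Ici 0) t)
    (hzode : ∀ t ∈ Set.Ici (0:ℝ),
      HasDerivWithinAt (fun s => ‖z' s‖ ^ (p - 2) • z' s)
        (-(Λ • (‖z t‖ ^ (p - 2) • z t))) (Set.Ici 0) t)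
    (hu0 : u 0 = a) (hz0 : z 0 = a) (hu'0 : u' 0 = b) (hz'0 : z' 0 = b) :
    ∀ t ≥ (0:ℝ), u t = z t := by
  intro t ht
  by_contra hne
  set S : Set ℝ := {s | 0 ≤ s ∧ u s ≠ z s} with hS
  have hSne : S.Nonempty := ⟨t, ht, hne⟩
  have hSbd : BddBelow S := ⟨0, fun s hs => hs.1⟩
  set T : ℝ := sInf S with hTdef
  have hT0 : 0 ≤ T := le_csInf hSne (fun s hs => hs.1)
  have hbelow : ∀ s, 0 ≤ s → s < T → u s = z s := by
    intro s h0 hsT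
    by_contra hne2
    exact absurd (csInf_le hSbd ⟨h0, hne2⟩) (not_le.2 hsT)
  have heq : u T = z T := by
    rcases eq_or_lt_of_le hT0 with h0 | hpos
    · rw [← h0, hu0, hz0]
    · have hUlim : Filter.Tendsto u (nhdsWithin T (Set.Ico 0 T)) (nhds (u T)) :=
        ((hu T (Set.mem_Ici.2 hT0)).continuousWithinAt).mono_left
          (nhdsWithin_mono T (fun y hy => Set.mem_Ici.2 hy.1))
      have hZlim : Filter.Tendsto z (nhdsWithin T (Set.Ico 0 T)) (nhds (z T)) :=
        ((hz T (Set.mem_Ici.2 hT0)).continuousWithinAt).mono_left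
          (nhdsWithin_mono T (fun y hy => Set.mem_Ici.2 hy.1))
      have hcongr : u =ᶠ[nhdsWithin T (Set.Ico 0 T)] z := by
        filter_upwards [self_mem_nhdsWithin] with y hy
        exact hbelow y hy.1 hy.2
      rw [nhdsWithin_Ico_eq_nhdsLT hpos] at hUlim hZlim hcongr
      exact tendsto_nhds_unique hUlim (hZlim.congr' hcongr.symm)
  have heq' : u' T = z' T := by
    rcases eq_or_lt_of_le hT0 with h0 | hpos
    · rw [← h0, hu'0, hz'0]
    · have hmid : ∀ s ∈ Set.Ioo (0:ℝ) T, u' s = z' s := by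
        intro s hs
        have hDu : HasDerivAt u (u' s) s :=
          (hu s (Set.mem_Ici.2 hs.1.le)).hasDerivAt (Ici_mem_nhds hs.1)
        have hDz : HasDerivAt z (z' s) s :=
          (hz s (Set.mem_Ici.2 hs.1.le)).hasDerivAt (Ici_mem_nhds hs.1)
        have hev : z =ᶠ[nhds s] u := by
          filter_upwards [Ioo_mem_nhds hs.1 hs.2] with y hy
          exact (hbelow y hy.1.le hy.2).symm
        exact (hDu.congr_of_eventuallyEq hev).unique hDz
      have hUlim : Filter.Tendsto u' (nhdsWithin T (Set.Ioo 0 T)) (nhds (u' T)) :=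
        (hu' T (Set.mem_Ici.2 hT0)).mono_left
          (nhdsWithin_mono T (fun y hy => Set.mem_Ici.2 hy.1.le))
      have hZlim : Filter.Tendsto z' (nhdsWithin T (Set.Ioo 0 T)) (nhds (z' T)) :=
        (hz' T (Set.mem_Ici.2 hT0)).mono_left
          (nhdsWithin_mono T (fun y hy => Set.mem_Ici.2 hy.1.le))
      have hcongr : u' =ᶠ[nhdsWithin T (Set.Ioo 0 T)] z' := by
        filter_upwards [self_mem_nhdsWithin] with y hy
        exact hmid y hy
      rw [nhdsWithin_Ioo_eq_nhdsLT hpos] at hUlim hZlim hcongr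
      exact tendsto_nhds_unique hUlim (hZlim.congr' hcongr.symm)
  obtain ⟨δ, hδ, hloc⟩ := local_unique hp rfl hΛ hu hz hu' hz' huode hzode hT0 heq heq'
  obtain ⟨s, hsS, hslt⟩ : ∃ s ∈ S, s < T + δ := by
    by_contra hcon
    push_neg at hcon
    have : T + δ ≤ T := le_csInf hSne hcon
    linarith
  have hsT : T ≤ s := csInf_le hSbd hsS
  exact hsS.2 (hloc s ⟨hsT, hslt.le⟩)
end

section
/- Classification of vectorial Dirichlet eigenfunctions in one dimension: let 1 < p < ∞, Λ > 0, N ≥ 1, and let ω : [0, ∞) → ℝ be continuously differentiable with t ↦ |ω′(t)|^{p−2} ω′(t) differentiable with derivative −|ω(t)|^{p−2} ω(t), ω(0) = 0, ω′(0) = 1. Suppose u : [0, 1] → ℝ^N is continuously differentiable, not identically 0, the map t ↦ ‖u′(t)‖^{p−2} u′(t) is differentiable with derivative −Λ ‖u(t)‖^{p−2} u(t), and u(0) = 0, u(1) = 0. Then u(t) = Λ^{−1/p} ω(Λ^{1/p} t) u′(0) for all t ∈ [0, 1], u′(0) ≠ 0, and ω(Λ^{1/p}) = 0; in particular u is a constant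 vector times a scalar eigenfunction. -/
open Set Real Topology Filter
open scoped RealInnerProductSpace

section Pointwise

variable {E : Type*} [NormedAddCommGroup E] [InnerProductSpace ℝ E]

lemma norm_rpow_smul {p : ℝ} (hp : 1 < p) (x : E) :
    ‖(‖x‖ ^ (p - 2) : ℝ) • x‖ = ‖x‖ ^ (p - 1) := by
  rcases eq_or_ne x 0 with rfl | hx
  · simp [Real.zero_rpow (by linarith : p - 1 ≠ 0)]
  · have hx' : (0:ℝ) < ‖x‖ := norm_pos_iff.mpr hx
    rw [norm_smul, Real.norm_eq_abs, abs_of_nonneg (Real.rpow_nonneg (norm_nonneg x) _),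
      ← Real.rpow_add_one hx'.ne' (p - 2)]
    congr 1; ring

lemma norm_rpow_smul_rpow {p : ℝ} (hp : 1 < p) (x : E) :
    ‖(‖x‖ ^ (p - 2) : ℝ) • x‖ ^ (p / (p - 1)) = ‖x‖ ^ p := by
  have h1 : p - 1 ≠ 0 := by linarith
  rw [norm_rpow_smul hp, ← Real.rpow_mul (norm_nonneg x)]
  congr 1
  field_simp

/-- Key identity: the inner-product factor in the derivative of `‖Φ‖ ^ q` collapses. -/
lemma inner_factor_eq {p : ℝ} (hp : 1 < p) (x y : E) :
    (p / (p - 1) * ‖(‖x‖ ^ (p - 2) : ℝ) • x‖ ^ (p / (p - 1) - 2)) *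
      ⟪((‖x‖ ^ (p - 2) : ℝ) • x), y⟫ = (p / (p - 1)) * ⟪x, y⟫ := by
  have h0 : p - 1 ≠ 0 := by linarith
  rcases eq_or_ne x 0 with rfl | hx
  · simp
  · have hx' : (0:ℝ) < ‖x‖ := norm_pos_iff.mpr hx
    rw [norm_rpow_smul hp, ← Real.rpow_mul (norm_nonneg x), real_inner_smul_left]
    have h1 : ((p - 1) * (p / (p - 1) - 2)) = 2 - p := by field_simp; ring
    rw [h1, mul_assoc, ← mul_assoc (‖x‖ ^ (2 - p)), ← Real.rpow_add hx']
    norm_num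

end Pointwise

section Energy

variable {E : Type*} [NormedAddCommGroup E] [InnerProductSpace ℝ E]

lemma one_lt_conj {p : ℝ} (hp : 1 < p) : 1 < p / (p - 1) := by
  rw [lt_div_iff₀ (by linarith)]; linarith

/-- Energy conservation for the vectorial p-Laplacian ODE. -/
lemma energy_conserved {p Λ T : ℝ} (hp : 1 < p) (hT : 0 < T) {u u' : ℝ → E}
    (hu : ∀ t ∈ Icc (0:ℝ) T, HasDerivWithinAt u (u' t) (Icc 0 T) t)
    (hode : ∀ t ∈ Icc (0:ℝ) T, HasDerivWithinAt (fun s => (‖u' s‖ ^ (p-2) : ℝ) • u' s)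
        (-(Λ • ((‖u t‖ ^ (p-2) : ℝ) • u t))) (Icc 0 T) t) :
    ∀ t ∈ Icc (0:ℝ) T, (p-1) * ‖u' t‖^p + Λ * ‖u t‖^p
      = (p-1) * ‖u' 0‖^p + Λ * ‖u 0‖^p := by
  have hq : 1 < p / (p - 1) := one_lt_conj hp
  set q := p / (p - 1) with hqdef
  set Φ := fun s => (‖u' s‖ ^ (p-2) : ℝ) • u' s with hΦ
  set G := fun t => (p-1) * ‖Φ t‖ ^ q + Λ * ‖u t‖ ^ p with hG
  have hGt : ∀ t, G t = (p-1) * ‖u' t‖^p + Λ * ‖u t‖^p := by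
    intro t
    simp only [hG, hΦ, hqdef, norm_rpow_smul_rpow hp]
  have hderiv : ∀ t ∈ Icc (0:ℝ) T, HasDerivWithinAt G 0 (Icc 0 T) t := by
    intro t ht
    have h1 : HasDerivWithinAt (fun s => ‖Φ s‖ ^ q)
        ((q * ‖Φ t‖ ^ (q - 2)) * ⟪Φ t, -(Λ • ((‖u t‖ ^ (p-2) : ℝ) • u t))⟫) (Icc 0 T) t := by
      have := (hasFDerivAt_norm_rpow (Φ t) hq).comp_hasDerivWithinAt t (hode t ht)
      convert this using 1
      · rfl
      · rfl
      · rfl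
      simp [innerSL_apply_apply]
    have h2 : HasDerivWithinAt (fun s => ‖u s‖ ^ p)
        ((p * ‖u t‖ ^ (p - 2)) * ⟪u t, u' t⟫) (Icc 0 T) t := by
      have := (hasFDerivAt_norm_rpow (u t) hp).comp_hasDerivWithinAt t (hu t ht)
      convert this using 1
      · rfl
      · rfl
      · rfl
      simp [innerSL_apply_apply]
    have h3 := (h1.const_mul (p-1)).add (h2.const_mul Λ)
    convert h3 using 1
    · rfl
    · rfl
    · rfl
    have key := inner_factor_eq hp (u' t) (-(Λ • ((‖u t‖ ^ (p-2) : ℝ) • u t)))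
    simp only [hΦ, mul_assoc] at key ⊢
    rw [key]
    have hinner : ⟪u' t, -(Λ • ((‖u t‖ ^ (p-2) : ℝ) • u t))⟫
        = -(Λ * (‖u t‖ ^ (p-2) * ⟪u t, u' t⟫)) := by
      rw [inner_neg_right, real_inner_smul_right, real_inner_smul_right, real_inner_comm]
    rw [hinner]
    have h0 : p - 1 ≠ 0 := by linarith
    have hpq : (p - 1) * q = p := by
      rw [hqdef]; field_simp
    linear_combination (Λ * (‖u t‖ ^ (p-2) * (inner ℝ (u t) (u' t) : ℝ))) * hpq
  have hcont : ContinuousOn G (Icc 0 T) := fun t ht => (hderiv t ht).continuousWithinAt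
  intro t ht
  have := constant_of_has_deriv_right_zero hcont (fun x hx =>
    (hderiv x (Ico_subset_Icc_self hx)).mono_of_mem_nhdsWithin (Icc_mem_nhdsGE_of_mem hx)) t ht
  rw [hGt t, hGt 0] at this
  exact this

/-- Conservation of angular momentum: `u` and `u'` stay parallel. -/
lemma angular_momentum {p Λ T : ℝ} (hp : 1 < p) (hT : 0 < T) {u u' : ℝ → E}
    (hu : ∀ t ∈ Icc (0:ℝ) T, HasDerivWithinAt u (u' t) (Icc 0 T) t)
    (hode : ∀ t ∈ Icc (0:ℝ) T, HasDerivWithinAt (fun s => (‖u' s‖ ^ (p-2) : ℝ) • u' s)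
        (-(Λ • ((‖u t‖ ^ (p-2) : ℝ) • u t))) (Icc 0 T) t)
    (hu0 : u 0 = 0) :
    ∀ t ∈ Icc (0:ℝ) T, ∀ a b : E,
      ⟪u t, a⟫ * ⟪u' t, b⟫ = ⟪u t, b⟫ * ⟪u' t, a⟫ := by
  set Φ := fun s => (‖u' s‖ ^ (p-2) : ℝ) • u' s with hΦ
  have hA : ∀ a b : E, ∀ t ∈ Icc (0:ℝ) T,
      ⟪u t, a⟫ * ⟪Φ t, b⟫ - ⟪u t, b⟫ * ⟪Φ t, a⟫ = 0 := by
    intro a b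
    set A := fun t => ⟪u t, a⟫ * ⟪Φ t, b⟫ - ⟪u t, b⟫ * ⟪Φ t, a⟫ with hA'
    have hinnera : ∀ c : E, ∀ t ∈ Icc (0:ℝ) T,
        HasDerivWithinAt (fun s => ⟪u s, c⟫) ⟪u' t, c⟫ (Icc 0 T) t := by
      intro c t ht
      have := (hu t ht).inner ℝ (hasDerivWithinAt_const t _ c)
      simpa using this
    have hinnerb : ∀ c : E, ∀ t ∈ Icc (0:ℝ) T,
        HasDerivWithinAt (fun s => ⟪Φ s, c⟫) ⟪-(Λ • ((‖u t‖ ^ (p-2) : ℝ) • u t)), c⟫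
          (Icc 0 T) t := by
      intro c t ht
      have := (hode t ht).inner ℝ (hasDerivWithinAt_const t _ c)
      simpa using this
    have hderiv : ∀ t ∈ Icc (0:ℝ) T, HasDerivWithinAt A 0 (Icc 0 T) t := by
      intro t ht
      have h1 := ((hinnera a t ht).mul (hinnerb b t ht)).sub
        ((hinnera b t ht).mul (hinnerb a t ht))
      convert h1 using 1
      · rfl
      · rfl
      · rfl
      simp only [hΦ, real_inner_smul_left, inner_neg_left, real_inner_smul_left]
      ring
    have hcont : ContinuousOn A (Icc 0 T) := fun t ht => (hderiv t ht).continuousWithinAt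
    intro t ht
    have := constant_of_has_deriv_right_zero hcont (fun x hx =>
      (hderiv x (Ico_subset_Icc_self hx)).mono_of_mem_nhdsWithin (Icc_mem_nhdsGE_of_mem hx)) t ht
    simpa [hA', hu0] using this
  intro t ht a b
  rcases eq_or_ne (u' t) 0 with h0 | h0
  · simp [h0]
  · have hc : (0:ℝ) < ‖u' t‖ ^ (p-2) := Real.rpow_pos_of_pos (norm_pos_iff.mpr h0) _
    have := hA a b t ht
    simp only [hΦ, real_inner_smul_left] at this
    have h2 : (‖u' t‖ ^ (p-2) : ℝ) * (⟪u t, a⟫ * ⟪u' t, b⟫ - ⟪u t, b⟫ * ⟪u' t, a⟫) = 0 := by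
      linarith [this]
    rcases mul_eq_zero.mp h2 with h | h
    · exact absurd h hc.ne'
    · linarith [h]

end Energy

section ODEUnique

/-- Local (one-sided) uniqueness for a scalar autonomous ODE with `C¹` right-hand side. -/
lemma ODE_local_unique {F : ℝ → ℝ} {x0 t0 t1 : ℝ} (hF : ContDiffAt ℝ 1 F x0)
    (h01 : t0 < t1) {f g : ℝ → ℝ}
    (hf : ContinuousOn f (Icc t0 t1)) (hg : ContinuousOn g (Icc t0 t1))
    (hf' : ∀ t ∈ Icc t0 t1, HasDerivWithinAt f (F (f t)) (Icc t0 t1) t)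
    (hg' : ∀ t ∈ Icc t0 t1, HasDerivWithinAt g (F (g t)) (Icc t0 t1) t)
    (h0 : f t0 = g t0) (hfx : f t0 = x0) :
    ∃ b ∈ Ioc t0 t1, ∀ t ∈ Icc t0 b, f t = g t := by
  obtain ⟨K, s, hs, hK⟩ := hF.exists_lipschitzOnWith
  have ht0 : t0 ∈ Icc t0 t1 := ⟨le_refl _, h01.le⟩
  have hsf : s ∈ 𝓝 (f t0) := by rwa [hfx]
  have hsg : s ∈ 𝓝 (g t0) := by rwa [← h0]
  have hmemf : f ⁻¹' s ∈ 𝓝[Icc t0 t1] t0 := (hf t0 ht0) hsf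
  have hmemg : g ⁻¹' s ∈ 𝓝[Icc t0 t1] t0 := (hg t0 ht0) hsg
  have hmem : f ⁻¹' s ∩ g ⁻¹' s ∈ 𝓝[Ici t0] t0 := by
    rw [← nhdsWithin_Icc_eq_nhdsGE h01]
    exact Filter.inter_mem hmemf hmemg
  obtain ⟨c, hc, hsub⟩ := mem_nhdsGE_iff_exists_Icc_subset.mp hmem
  refine ⟨min c t1, ⟨lt_min hc h01, min_le_right _ _⟩, ?_⟩
  have hbt1 : min c t1 ≤ t1 := min_le_right _ _
  have hIcc : Icc t0 (min c t1) ⊆ Icc t0 t1 := Icc_subset_Icc le_rfl hbt1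
  have key := ODE_solution_unique_of_mem_Icc_right (v := fun _ x => F x) (s := fun _ => s)
    (fun _ _ => hK) (hf.mono hIcc)
    (fun t ht => (hf' t (hIcc (Ico_subset_Icc_self ht))).mono_of_mem_nhdsWithin
      (Icc_mem_nhdsGE_of_mem ⟨ht.1, lt_of_lt_of_le ht.2 hbt1⟩))
    (fun t ht => (hsub ⟨ht.1, le_trans ht.2.le (min_le_left _ _)⟩).1)
    (hg.mono hIcc)
    (fun t ht => (hg' t (hIcc (Ico_subset_Icc_self ht))).mono_of_mem_nhdsWithin
      (Icc_mem_nhdsGE_of_mem ⟨ht.1, lt_of_lt_of_le ht.2 hbt1⟩))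
    (fun t ht => (hsub ⟨ht.1, le_trans ht.2.le (min_le_left _ _)⟩).2)
    h0
  exact fun t ht => key ht

end ODEUnique

section Scalar

/-- `|x| ^ (p-2) * x = x ^ (p-1)` for nonnegative `x`. -/
lemma opow_nonneg_eq {p : ℝ} (hp : 1 < p) {x : ℝ} (hx : 0 ≤ x) :
    |x| ^ (p-2) * x = x ^ (p-1) := by
  rcases eq_or_lt_of_le hx with h | h
  · rw [← h]
    simp [Real.zero_rpow (by linarith : p - 1 ≠ 0)]
  · rw [abs_of_pos h, ← Real.rpow_add_one h.ne' (p-2)]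
    congr 1; ring

lemma opow_neg_eq {p : ℝ} (x : ℝ) : |(-x)| ^ (p-2) * (-x) = -(|x| ^ (p-2) * x) := by
  rw [abs_neg]; ring

lemma abs_opow_eq {p : ℝ} (hp : 1 < p) (x : ℝ) : |(|x| ^ (p-2) * x)| = |x| ^ (p-1) := by
  rw [abs_mul, abs_of_nonneg (Real.rpow_nonneg (abs_nonneg x) _)]
  have := opow_nonneg_eq hp (abs_nonneg x)
  rwa [abs_abs] at this

lemma opow_strictMono {p : ℝ} (hp : 1 < p) : StrictMono (fun x : ℝ => |x| ^ (p-2) * x) := by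
  have key : ∀ x y : ℝ, 0 ≤ x → x < y → |x| ^ (p-2) * x < |y| ^ (p-2) * y := by
    intro x y hx hxy
    rw [opow_nonneg_eq hp hx, opow_nonneg_eq hp (hx.trans hxy.le)]
    exact Real.rpow_lt_rpow hx hxy (by linarith)
  intro x y hxy
  show |x| ^ (p-2) * x < |y| ^ (p-2) * y
  rcases le_or_gt 0 x with hx | hx
  · exact key x y hx hxy
  · rcases lt_or_ge x 0 with _ | h
    · rcases le_or_gt 0 y with hy | hy
      · have h1 : |x| ^ (p-2) * x < 0 := by
          have := key 0 (-x) le_rfl (by linarith)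
          simp only [abs_zero, mul_zero] at this
          rw [opow_neg_eq] at this
          linarith
        have h2 : 0 ≤ |y| ^ (p-2) * y := by
          rcases eq_or_lt_of_le hy with h | h
          · simp [← h]
          · have := key 0 y le_rfl h
            simp only [abs_zero, mul_zero] at this
            linarith
        linarith
      · have := key (-y) (-x) (by linarith) (by linarith)
        rw [opow_neg_eq, opow_neg_eq] at this
        linarith
    · linarith

/-- The scalar solution predicate, with energy. -/
structure SSol (p Λ E0 t0 t1 : ℝ) (ρ σ : ℝ → ℝ) : Prop where
  deriv : ∀ t ∈ Icc t0 t1, HasDerivWithinAt ρ (σ t) (Icc t0 t1) t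
  cont : ContinuousOn σ (Icc t0 t1)
  ode : ∀ t ∈ Icc t0 t1, HasDerivWithinAt (fun s => |σ s| ^ (p-2) * σ s)
      (-(Λ * (|ρ t| ^ (p-2) * ρ t))) (Icc t0 t1) t
  energy : ∀ t ∈ Icc t0 t1, (p-1) * |σ t| ^ p + Λ * |ρ t| ^ p = E0

lemma SSol.contρ {p Λ E0 t0 t1 : ℝ} {ρ σ : ℝ → ℝ} (h : SSol p Λ E0 t0 t1 ρ σ) :
    ContinuousOn ρ (Icc t0 t1) := fun t ht => (h.deriv t ht).continuousWithinAt

lemma SSol.contΦ {p Λ E0 t0 t1 : ℝ} {ρ σ : ℝ → ℝ} (h : SSol p Λ E0 t0 t1 ρ σ) :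
    ContinuousOn (fun s => |σ s| ^ (p-2) * σ s) (Icc t0 t1) :=
  fun t ht => (h.ode t ht).continuousWithinAt

lemma SSol.neg {p Λ E0 t0 t1 : ℝ} {ρ σ : ℝ → ℝ} (h : SSol p Λ E0 t0 t1 ρ σ) :
    SSol p Λ E0 t0 t1 (fun t => -(ρ t)) (fun t => -(σ t)) := by
  constructor
  · exact fun t ht => (h.deriv t ht).neg
  · exact h.cont.neg
  · intro t ht
    have := (h.ode t ht).neg
    have heq : ∀ s, |(-(σ s))| ^ (p-2) * (-(σ s)) = -(|σ s| ^ (p-2) * σ s) := fun s => opow_neg_eq _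
    refine HasDerivWithinAt.congr this (fun s _ => heq s) (heq t) |>.congr_deriv ?_
    rw [opow_neg_eq]; ring
  · intro t ht
    have := h.energy t ht
    simpa using this

end Scalar

section ScalarUnique

lemma exists_Icc_pos {t0 t1 : ℝ} (h01 : t0 < t1) {φ : ℝ → ℝ}
    (hφ : ContinuousOn φ (Icc t0 t1)) (h0 : 0 < φ t0) :
    ∃ b ∈ Ioc t0 t1, ∀ t ∈ Icc t0 b, 0 < φ t := by
  have hmem : φ ⁻¹' (Ioi 0) ∈ 𝓝[Ici t0] t0 := by
    rw [← nhdsWithin_Icc_eq_nhdsGE h01]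
    exact (hφ t0 ⟨le_rfl, h01.le⟩) (Ioi_mem_nhds h0)
  obtain ⟨c, hc, hsub⟩ := mem_nhdsGE_iff_exists_Icc_subset.mp hmem
  exact ⟨min c t1, ⟨lt_min hc h01, min_le_right _ _⟩,
    fun t ht => hsub ⟨ht.1, le_trans ht.2 (min_le_left _ _)⟩⟩

lemma contDiff_abs_rpow {p : ℝ} (hp : 1 < p) : ContDiff ℝ 1 (fun x : ℝ => |x| ^ p) := by
  have := contDiff_norm_rpow (E := ℝ) hp
  simpa [Real.norm_eq_abs] using this

lemma scalar_unique_caseA {p Λ E0 t0 t1 : ℝ} (hp : 1 < p) (hΛ : 0 < Λ)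
    (h01 : t0 < t1) {ρ1 σ1 ρ2 σ2 : ℝ → ℝ}
    (h1 : SSol p Λ E0 t0 t1 ρ1 σ1) (h2 : SSol p Λ E0 t0 t1 ρ2 σ2)
    (hρ0 : ρ1 t0 = ρ2 t0) (hσ0 : σ1 t0 = σ2 t0) (hs0 : 0 < σ1 t0) :
    ∃ b ∈ Ioc t0 t1, ∀ t ∈ Icc t0 b, ρ1 t = ρ2 t ∧ σ1 t = σ2 t := by
  have hp1 : (0:ℝ) < p - 1 := by linarith
  have hppos : (0:ℝ) < p := by linarith
  have ht0 : t0 ∈ Icc t0 t1 := ⟨le_rfl, h01.le⟩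
  set F := fun x : ℝ => ((E0 - Λ * |x| ^ p)/(p-1)) ^ (1/p) with hFdef
  obtain ⟨b1, hb1, hpos1⟩ := exists_Icc_pos h01 h1.cont hs0
  obtain ⟨b2, hb2, hpos2⟩ := exists_Icc_pos h01 h2.cont (by rw [← hσ0]; exact hs0)
  set b' := min b1 b2 with hb'def
  have hb' : b' ∈ Ioc t0 t1 := ⟨lt_min hb1.1 hb2.1, le_trans (min_le_left _ _) hb1.2⟩
  have hJ : Icc t0 b' ⊆ Icc t0 t1 := Icc_subset_Icc le_rfl hb'.2
  have hval : ∀ (ρ σ : ℝ → ℝ), SSol p Λ E0 t0 t1 ρ σ →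
      ∀ t ∈ Icc t0 b', 0 < σ t → σ t = F (ρ t) := by
    intro ρ σ h t ht hpos
    have hE := h.energy t (hJ ht)
    have h1' : σ t ^ p = (E0 - Λ * |ρ t| ^ p)/(p-1) := by
      rw [← abs_of_pos hpos]
      field_simp
      linarith
    calc σ t = (σ t ^ p) ^ (1/p) := by
          rw [one_div, Real.rpow_rpow_inv hpos.le hppos.ne']
      _ = F (ρ t) := by rw [h1', hFdef]
  -- positivity for ContDiffAt
  have hEt0 := h1.energy t0 ht0
  have habs : (0:ℝ) < |σ1 t0| ^ p := Real.rpow_pos_of_pos (abs_pos.mpr hs0.ne') _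
  have hs0' : (0:ℝ) < (E0 - Λ * |ρ1 t0| ^ p)/(p-1) := by
    have : (E0 - Λ * |ρ1 t0| ^ p)/(p-1) = |σ1 t0| ^ p := by field_simp; linarith
    rw [this]; exact habs
  have hFc : ContDiffAt ℝ 1 F (ρ1 t0) := by
    have hinner : ContDiffAt ℝ 1 (fun x : ℝ => (E0 - Λ * |x| ^ p)/(p-1)) (ρ1 t0) :=
      (((contDiff_const.sub (contDiff_const.mul (contDiff_abs_rpow hp))).div_const _)).contDiffAt
    exact ContDiffAt.comp (ρ1 t0)
      (Real.contDiffAt_rpow_const_of_ne (x := (E0 - Λ * |ρ1 t0| ^ p)/(p-1)) hs0'.ne') hinner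
  have hd1 : ∀ t ∈ Icc t0 b', HasDerivWithinAt ρ1 (F (ρ1 t)) (Icc t0 b') t := by
    intro t ht
    have hpos := hpos1 t ⟨ht.1, le_trans ht.2 (min_le_left _ _)⟩
    exact ((h1.deriv t (hJ ht)).mono hJ).congr_deriv (hval ρ1 σ1 h1 t ht hpos)
  have hd2 : ∀ t ∈ Icc t0 b', HasDerivWithinAt ρ2 (F (ρ2 t)) (Icc t0 b') t := by
    intro t ht
    have hpos := hpos2 t ⟨ht.1, le_trans ht.2 (min_le_right _ _)⟩
    exact ((h2.deriv t (hJ ht)).mono hJ).congr_deriv (hval ρ2 σ2 h2 t ht hpos)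
  obtain ⟨b, hb, heq⟩ := ODE_local_unique hFc hb'.1 (h1.contρ.mono hJ) (h2.contρ.mono hJ)
    hd1 hd2 hρ0 rfl
  refine ⟨b, ⟨hb.1, hb.2.trans hb'.2⟩, fun t ht => ?_⟩
  have ht' : t ∈ Icc t0 b' := ⟨ht.1, ht.2.trans hb.2⟩
  refine ⟨heq t ht, ?_⟩
  rw [hval ρ1 σ1 h1 t ht' (hpos1 t ⟨ht'.1, le_trans ht'.2 (min_le_left _ _)⟩),
    hval ρ2 σ2 h2 t ht' (hpos2 t ⟨ht'.1, le_trans ht'.2 (min_le_right _ _)⟩), heq t ht]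

lemma scalar_unique_caseB {p Λ E0 t0 t1 : ℝ} (hp : 1 < p) (hΛ : 0 < Λ)
    (h01 : t0 < t1) {ρ1 σ1 ρ2 σ2 : ℝ → ℝ}
    (h1 : SSol p Λ E0 t0 t1 ρ1 σ1) (h2 : SSol p Λ E0 t0 t1 ρ2 σ2)
    (hρ0 : ρ1 t0 = ρ2 t0) (hσ0 : σ1 t0 = σ2 t0) (hs0 : σ1 t0 = 0) (hr0 : 0 < ρ1 t0) :
    ∃ b ∈ Ioc t0 t1, ∀ t ∈ Icc t0 b, ρ1 t = ρ2 t ∧ σ1 t = σ2 t := by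
  have hp1 : (0:ℝ) < p - 1 := by linarith
  have hppos : (0:ℝ) < p := by linarith
  have hq : 1 < p / (p-1) := one_lt_conj hp
  set q := p / (p-1) with hqdef
  have hpq : (p - 1) * q = p := by rw [hqdef]; field_simp
  have ht0 : t0 ∈ Icc t0 t1 := ⟨le_rfl, h01.le⟩
  set H := fun y : ℝ => -(Λ * ((E0 - (p-1) * |y| ^ q)/Λ) ^ ((p-1)/p)) with hHdef
  obtain ⟨b1, hb1, hpos1⟩ := exists_Icc_pos h01 h1.contρ hr0
  obtain ⟨b2, hb2, hpos2⟩ := exists_Icc_pos h01 h2.contρ (by rw [← hρ0]; exact hr0)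
  set b' := min b1 b2 with hb'def
  have hb' : b' ∈ Ioc t0 t1 := ⟨lt_min hb1.1 hb2.1, le_trans (min_le_left _ _) hb1.2⟩
  have hJ : Icc t0 b' ⊆ Icc t0 t1 := Icc_subset_Icc le_rfl hb'.2
  -- the key pointwise identities
  have habsq : ∀ σv : ℝ, |(|σv| ^ (p-2) * σv)| ^ q = |σv| ^ p := by
    intro σv
    rw [abs_opow_eq hp, ← Real.rpow_mul (abs_nonneg _), hpq]
  have hrad : ∀ (ρ σ : ℝ → ℝ), SSol p Λ E0 t0 t1 ρ σ →
      ∀ t ∈ Icc t0 b', 0 < ρ t →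
        (E0 - (p-1) * |(|σ t| ^ (p-2) * σ t)| ^ q)/Λ = ρ t ^ p := by
    intro ρ σ h t ht hpos
    have hE := h.energy t (hJ ht)
    rw [habsq, ← abs_of_pos hpos]
    field_simp
    linarith
  have hval : ∀ (ρ σ : ℝ → ℝ), SSol p Λ E0 t0 t1 ρ σ →
      ∀ t ∈ Icc t0 b', 0 < ρ t →
        -(Λ * (|ρ t| ^ (p-2) * ρ t)) = H (|σ t| ^ (p-2) * σ t) := by
    intro ρ σ h t ht hpos
    rw [hHdef]
    simp only
    rw [hrad ρ σ h t ht hpos, opow_nonneg_eq hp hpos.le, ← Real.rpow_mul hpos.le]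
    have hexp : p * ((p-1)/p) = p - 1 := by field_simp
    rw [hexp]
  -- ContDiffAt of H at 0
  have hE0Λ : (0:ℝ) < E0/Λ := by
    have hE := h1.energy t0 ht0
    have h2' : |σ1 t0| ^ p = 0 := by
      rw [hs0]; simp [Real.zero_rpow hppos.ne']
    have h3' : (0:ℝ) < |ρ1 t0| ^ p := Real.rpow_pos_of_pos (abs_pos.mpr hr0.ne') _
    have : 0 < E0 := by nlinarith
    positivity
  have hΦ0 : |σ1 t0| ^ (p-2) * σ1 t0 = 0 := by rw [hs0]; ring
  have hinner0 : (E0 - (p-1) * |(0:ℝ)| ^ q)/Λ = E0/Λ := by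
    simp [Real.zero_rpow (by linarith : q ≠ 0)]
  have hHc : ContDiffAt ℝ 1 H 0 := by
    have hcd : ContDiffAt ℝ 1 (fun y : ℝ => (E0 - (p-1) * |y| ^ q)/Λ) 0 :=
      ((contDiff_const.sub (contDiff_const.mul (contDiff_abs_rpow hq))).div_const _).contDiffAt
    have houter : ContDiffAt ℝ 1 (fun z : ℝ => z ^ ((p-1)/p))
        ((E0 - (p-1) * |(0:ℝ)| ^ q)/Λ) := by
      rw [hinner0]
      exact Real.contDiffAt_rpow_const_of_ne hE0Λ.ne'
    exact ((contDiffAt_const (c := Λ)).mul (ContDiffAt.comp 0 houter hcd)).neg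
  -- derivative facts
  have hd : ∀ (ρ σ : ℝ → ℝ) (h : SSol p Λ E0 t0 t1 ρ σ)
      (hpos : ∀ t ∈ Icc t0 b', 0 < ρ t), ∀ t ∈ Icc t0 b',
      HasDerivWithinAt (fun s => |σ s| ^ (p-2) * σ s)
        (H (|σ t| ^ (p-2) * σ t)) (Icc t0 b') t := by
    intro ρ σ h hpos t ht
    exact ((h.ode t (hJ ht)).mono hJ).congr_deriv (hval ρ σ h t ht (hpos t ht))
  have hpos1' : ∀ t ∈ Icc t0 b', 0 < ρ1 t :=
    fun t ht => hpos1 t ⟨ht.1, le_trans ht.2 (min_le_left _ _)⟩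
  have hpos2' : ∀ t ∈ Icc t0 b', 0 < ρ2 t :=
    fun t ht => hpos2 t ⟨ht.1, le_trans ht.2 (min_le_right _ _)⟩
  have hΦ02 : |σ2 t0| ^ (p-2) * σ2 t0 = 0 := by rw [← hσ0, hs0]; ring
  obtain ⟨b, hb, heq⟩ := ODE_local_unique hHc hb'.1 (h1.contΦ.mono hJ) (h2.contΦ.mono hJ)
    (hd ρ1 σ1 h1 hpos1') (hd ρ2 σ2 h2 hpos2') (by rw [hΦ0, hΦ02]) hΦ0
  refine ⟨b, ⟨hb.1, hb.2.trans hb'.2⟩, fun t ht => ?_⟩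
  have ht' : t ∈ Icc t0 b' := ⟨ht.1, ht.2.trans hb.2⟩
  have hσeq : σ1 t = σ2 t := (opow_strictMono hp).injective (heq t ht)
  refine ⟨?_, hσeq⟩
  have e1 := hrad ρ1 σ1 h1 t ht' (hpos1' t ht')
  have e2 := hrad ρ2 σ2 h2 t ht' (hpos2' t ht')
  rw [heq t ht] at e1
  have : ρ1 t ^ p = ρ2 t ^ p := by rw [← e1, ← e2]
  calc ρ1 t = (ρ1 t ^ p) ^ p⁻¹ := (Real.rpow_rpow_inv (hpos1' t ht').le hppos.ne').symm
    _ = (ρ2 t ^ p) ^ p⁻¹ := by rw [this]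
    _ = ρ2 t := Real.rpow_rpow_inv (hpos2' t ht').le hppos.ne'

end ScalarUnique

section ScalarCombined

lemma scalar_local_unique {p Λ E0 t0 t1 : ℝ} (hp : 1 < p) (hΛ : 0 < Λ) (hE0 : 0 < E0)
    (h01 : t0 < t1) {ρ1 σ1 ρ2 σ2 : ℝ → ℝ}
    (h1 : SSol p Λ E0 t0 t1 ρ1 σ1) (h2 : SSol p Λ E0 t0 t1 ρ2 σ2)
    (hρ0 : ρ1 t0 = ρ2 t0) (hσ0 : σ1 t0 = σ2 t0) :
    ∃ b ∈ Ioc t0 t1, ∀ t ∈ Icc t0 b, ρ1 t = ρ2 t ∧ σ1 t = σ2 t := by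
  have hppos : (0:ℝ) < p := by linarith
  rcases lt_trichotomy (σ1 t0) 0 with hs | hs | hs
  · obtain ⟨b, hb, heq⟩ := scalar_unique_caseA hp hΛ h01 h1.neg h2.neg
      (by simp [hρ0]) (by simp [hσ0]) (by show (0:ℝ) < -(σ1 t0); linarith)
    refine ⟨b, hb, fun t ht => ?_⟩
    obtain ⟨e1, e2⟩ := heq t ht
    have e1' : -(ρ1 t) = -(ρ2 t) := e1
    have e2' : -(σ1 t) = -(σ2 t) := e2
    exact ⟨by linarith, by linarith⟩
  · -- σ1 t0 = 0, so ρ1 t0 ≠ 0 by energy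
    have hr0 : ρ1 t0 ≠ 0 := by
      intro h0
      have hE := h1.energy t0 ⟨le_rfl, h01.le⟩
      rw [hs, h0] at hE
      simp [Real.zero_rpow hppos.ne'] at hE
      linarith
    rcases lt_or_gt_of_ne hr0 with hr | hr
    · obtain ⟨b, hb, heq⟩ := scalar_unique_caseB hp hΛ h01 h1.neg h2.neg
        (by simp [hρ0]) (by simp [hσ0]) (by simp [hs]) (by show (0:ℝ) < -(ρ1 t0); linarith)
      refine ⟨b, hb, fun t ht => ?_⟩
      obtain ⟨e1, e2⟩ := heq t ht
      have e1' : -(ρ1 t) = -(ρ2 t) := e1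
      have e2' : -(σ1 t) = -(σ2 t) := e2
      exact ⟨by linarith, by linarith⟩
    · exact scalar_unique_caseB hp hΛ h01 h1 h2 hρ0 hσ0 hs hr
  · exact scalar_unique_caseA hp hΛ h01 h1 h2 hρ0 hσ0 hs

end ScalarCombined

section Span

variable {E : Type*} [NormedAddCommGroup E] [InnerProductSpace ℝ E]

/-- Span propagation: if `u` and `u'` are pointwise parallel and at `t0` both lie on the
line `ℝ∙e` (not both zero), then `u` stays on the line slightly to the right of `t0`. -/
lemma span_step {T : ℝ} {u u' : ℝ → E} {e : E} (he : ⟪e, e⟫ = 1)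
    (hu : ∀ t ∈ Icc (0:ℝ) T, HasDerivWithinAt u (u' t) (Icc 0 T) t)
    (hN : ∀ t ∈ Icc (0:ℝ) T, ∀ a b : E, ⟪u t, a⟫ * ⟪u' t, b⟫ = ⟪u t, b⟫ * ⟪u' t, a⟫)
    {t0 : ℝ} (ht0 : t0 ∈ Ico (0:ℝ) T) {r0 s0 : ℝ}
    (hu0 : u t0 = r0 • e) (hu'0 : u' t0 = s0 • e) (hne : r0 ≠ 0 ∨ s0 ≠ 0) :
    ∃ b ∈ Ioc t0 T, ∀ t ∈ Icc t0 b, u t = ⟪u t, e⟫ • e := by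
  have ht0T : t0 ∈ Icc (0:ℝ) T := ⟨ht0.1, ht0.2.le⟩
  set ρ : ℝ → ℝ := fun s => ⟪u s, e⟫ with hρdef
  have hρd : ∀ t ∈ Icc (0:ℝ) T, HasDerivWithinAt ρ ⟪u' t, e⟫ (Icc 0 T) t := by
    intro t ht
    have := (hu t ht).inner ℝ (hasDerivWithinAt_const t _ e)
    simpa using this
  have hρcont : ContinuousOn ρ (Icc 0 T) := fun t ht => (hρd t ht).continuousWithinAt
  have hρt0 : ρ t0 = r0 := by
    show ⟪u t0, e⟫ = r0
    rw [hu0, real_inner_smul_left, he, mul_one]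
  have hgd : ∀ f : E, ∀ t ∈ Icc (0:ℝ) T,
      HasDerivWithinAt (fun s => ⟪u s, f⟫) ⟪u' t, f⟫ (Icc 0 T) t := by
    intro f t ht
    have := (hu t ht).inner ℝ (hasDerivWithinAt_const t _ f)
    simpa using this
  have hg0 : ∀ f : E, ⟪e, f⟫ = 0 → ⟪u t0, f⟫ = 0 := by
    intro f hf
    rw [hu0, real_inner_smul_left, hf, mul_zero]
  -- produce b with ρ ≠ 0 on Ioc t0 b and the limit property
  obtain ⟨b, hbIoc, hρne, hTend⟩ :
      ∃ b ∈ Ioc t0 T, (∀ t ∈ Ioc t0 b, ρ t ≠ 0) ∧ ∀ f : E, ⟪e, f⟫ = 0 →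
        Filter.Tendsto (fun s => ⟪u s, f⟫ / ρ s) (𝓝[Ioc t0 b] t0) (𝓝 0) := by
    rcases eq_or_ne r0 0 with hr0 | hr0
    · -- use the slope argument; s0 ≠ 0
      have hs0 : s0 ≠ 0 := hne.resolve_left (by simp [hr0])
      have hρt0' : ρ t0 = 0 := by rw [hρt0, hr0]
      have hsub : Ioc t0 T ⊆ Icc (0:ℝ) T \ {t0} :=
        fun s hs => ⟨⟨le_trans ht0.1 hs.1.le, hs.2⟩, by simpa using (ne_of_gt hs.1)⟩
      have hslopeρ : Filter.Tendsto (slope ρ t0) (𝓝[Ioc t0 T] t0) (𝓝 ⟪u' t0, e⟫) :=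
        (hasDerivWithinAt_iff_tendsto_slope.mp (hρd t0 ht0T)).mono_left
          (nhdsWithin_mono _ hsub)
      have hval : ⟪u' t0, e⟫ = s0 := by rw [hu'0, real_inner_smul_left, he, mul_one]
      rw [hval] at hslopeρ
      have hmem : {s | slope ρ t0 s ≠ 0} ∈ 𝓝[Ioc t0 T] t0 :=
        hslopeρ (compl_singleton_mem_nhds hs0)
      rw [nhdsWithin_Ioc_eq_nhdsGT ht0.2] at hmem
      obtain ⟨c, hc, hcsub⟩ := mem_nhdsGT_iff_exists_Ioc_subset.mp hmem
      refine ⟨min c T, ⟨lt_min hc ht0.2, min_le_right _ _⟩, ?_, ?_⟩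
      · intro t ht
        have hslope := hcsub ⟨ht.1, le_trans ht.2 (min_le_left _ _)⟩
        intro h0
        apply hslope
        rw [slope_def_field, h0, hρt0']
        simp
      · intro f hf
        have hslopeg : Filter.Tendsto (slope (fun s => ⟪u s, f⟫) t0)
            (𝓝[Ioc t0 T] t0) (𝓝 ⟪u' t0, f⟫) :=
          (hasDerivWithinAt_iff_tendsto_slope.mp (hgd f t0 ht0T)).mono_left
            (nhdsWithin_mono _ hsub)
        have hvalf : ⟪u' t0, f⟫ = 0 := by
          rw [hu'0, real_inner_smul_left, hf, mul_zero]
        rw [hvalf] at hslopeg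
        have hmono : 𝓝[Ioc t0 (min c T)] t0 ≤ 𝓝[Ioc t0 T] t0 :=
          nhdsWithin_mono _ (Ioc_subset_Ioc le_rfl (min_le_right _ _))
        have hdiv := (hslopeg.mono_left hmono).div
          (hslopeρ.mono_left hmono) hs0
        rw [zero_div] at hdiv
        refine hdiv.congr' ?_
        filter_upwards [self_mem_nhdsWithin] with s hs
        have hst0 : s - t0 ≠ 0 := sub_ne_zero.mpr (ne_of_gt hs.1)
        have hρs : ρ s ≠ 0 := by
          intro h0
          have := hcsub ⟨hs.1, le_trans hs.2 (min_le_left _ _)⟩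
          apply this
          rw [slope_def_field, h0, hρt0']
          simp
        rw [Pi.div_apply, slope_def_field, slope_def_field, hρt0', hg0 f hf]
        field_simp
        ring
    · -- ρ t0 ≠ 0: continuity
      have hr0' : ρ t0 ≠ 0 := by rw [hρt0]; exact hr0
      obtain ⟨b, hb, hpos⟩ := exists_Icc_pos ht0.2
        ((hρcont.mono (Icc_subset_Icc ht0.1 le_rfl)).abs) (by simpa using abs_pos.mpr hr0')
      refine ⟨b, hb, fun t ht => ?_, fun f hf => ?_⟩
      · have := hpos t ⟨ht.1.le, ht.2⟩
        intro h0; rw [h0] at this; simp at this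
      · have hgcont : ContinuousOn (fun s => ⟪u s, f⟫) (Icc 0 T) :=
          fun t ht => (hgd f t ht).continuousWithinAt
        have ht0mem : t0 ∈ Icc t0 b := ⟨le_rfl, hb.1.le⟩
        have hcont : ContinuousWithinAt (fun s => ⟪u s, f⟫ / ρ s) (Icc t0 b) t0 :=
          (((hgcont.mono (Icc_subset_Icc ht0.1 hb.2)) t0 ht0mem).div
            (((hρcont.mono (Icc_subset_Icc ht0.1 hb.2))) t0 ht0mem) hr0')
        have hval0 : ⟪u t0, f⟫ / ρ t0 = 0 := by rw [hg0 f hf, zero_div]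
        have htd := hcont.tendsto
        rw [hval0] at htd
        exact htd.mono_left (nhdsWithin_mono _ Ioc_subset_Icc_self)
  -- common part
  have hIccsub : Icc t0 b ⊆ Icc (0:ℝ) T := Icc_subset_Icc ht0.1 hbIoc.2
  have hclaim : ∀ f : E, ⟪e, f⟫ = 0 → ∀ t ∈ Icc t0 b, ⟪u t, f⟫ = 0 := by
    intro f hf
    set g : ℝ → ℝ := fun s => ⟪u s, f⟫ with hgdef
    set φ : ℝ → ℝ := fun s => g s / ρ s with hφdef
    -- φ has zero derivative at points of Ioc t0 b
    have hφd : ∀ s ∈ Ioc t0 b, ∀ t ∈ Icc s b, HasDerivWithinAt φ 0 (Icc s b) t := by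
      intro s hs t ht
      have htIcc : t ∈ Icc (0:ℝ) T := hIccsub ⟨le_trans hs.1.le ht.1, ht.2⟩
      have hsub2 : Icc s b ⊆ Icc (0:ℝ) T := Icc_subset_Icc (le_trans ht0.1 hs.1.le) hbIoc.2
      have hρt : ρ t ≠ 0 := hρne t ⟨lt_of_lt_of_le hs.1 ht.1, ht.2⟩
      have hd := ((hgd f t htIcc).mono hsub2).div ((hρd t htIcc).mono hsub2) hρt
      have hnum : ⟪u' t, f⟫ * ρ t - g t * ⟪u' t, e⟫ = 0 := by
        have := hN t htIcc e f
        simp only [hρdef, hgdef] at *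
        linarith
      refine hd.congr_deriv ?_
      rw [hnum, zero_div]
    -- φ is constant on Ioc t0 b
    have hφconst : ∀ s ∈ Ioc t0 b, ∀ t ∈ Icc s b, φ t = φ s := by
      intro s hs t ht
      have hcont : ContinuousOn φ (Icc s b) := fun t ht => (hφd s hs t ht).continuousWithinAt
      exact constant_of_has_deriv_right_zero hcont (fun x hx =>
        (hφd s hs x (Ico_subset_Icc_self hx)).mono_of_mem_nhdsWithin
          (Icc_mem_nhdsGE_of_mem hx)) t ht
    -- each value on Ioc is 0
    have hφzero : ∀ s ∈ Ioc t0 b, φ s = 0 := by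
      intro s hs
      have hnb : (𝓝[Ioc t0 s] t0).NeBot := by
        rw [nhdsWithin_Ioc_eq_nhdsGT hs.1]
        infer_instance
      have h1 : Filter.Tendsto φ (𝓝[Ioc t0 s] t0) (𝓝 (φ s)) := by
        refine Filter.Tendsto.congr' ?_ tendsto_const_nhds
        filter_upwards [self_mem_nhdsWithin] with x hx
        exact hφconst x ⟨hx.1, le_trans hx.2 hs.2⟩ s ⟨hx.2, hs.2⟩
      have h2 : Filter.Tendsto φ (𝓝[Ioc t0 s] t0) (𝓝 0) :=
        (hTend f hf).mono_left (nhdsWithin_mono _ (Ioc_subset_Ioc le_rfl hs.2))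
      exact tendsto_nhds_unique h1 h2
    intro t ht
    rcases eq_or_lt_of_le ht.1 with heq | hlt
    · rw [← heq]; exact hg0 f hf
    · have := hφzero t ⟨hlt, ht.2⟩
      rcases div_eq_zero_iff.mp this with h | h
      · exact h
      · exact absurd h (hρne t ⟨hlt, ht.2⟩)
  refine ⟨b, hbIoc, fun t ht => ?_⟩
  have hperp : ⟪e, u t - ρ t • e⟫ = 0 := by
    rw [inner_sub_right, real_inner_smul_right, he, mul_one, real_inner_comm]
    simp [hρdef]
  have h0 := hclaim (u t - ρ t • e) hperp t ht
  have hnorm : ⟪u t - ρ t • e, u t - ρ t • e⟫ = 0 := by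
    rw [inner_sub_left, real_inner_smul_left, h0, hperp]
    ring
  have := inner_self_eq_zero.mp hnorm
  have : u t = ρ t • e := by rwa [sub_eq_zero] at this
  exact this

end Span

section Bridge

variable {E : Type*} [NormedAddCommGroup E] [InnerProductSpace ℝ E]

lemma SSol.mono {p Λ E0 t0 t1 s0 s1 : ℝ} {ρ σ : ℝ → ℝ} (h : SSol p Λ E0 t0 t1 ρ σ)
    (h0 : t0 ≤ s0) (h1 : s1 ≤ t1) (hss : s0 ≤ s1) :
    SSol p Λ E0 s0 s1 ρ σ := by
  have hsub : Icc s0 s1 ⊆ Icc t0 t1 := Icc_subset_Icc h0 h1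
  exact ⟨fun t ht => (h.deriv t (hsub ht)).mono hsub, h.cont.mono hsub,
    fun t ht => (h.ode t (hsub ht)).mono hsub, fun t ht => h.energy t (hsub ht)⟩

lemma opow_mul_const {p : ℝ} (hp : 1 < p) {a : ℝ} (ha : 0 < a) (x : ℝ) :
    |x * a| ^ (p-2) * (x * a) = (|x| ^ (p-2) * x) * a ^ (p-1) := by
  rw [abs_mul, abs_of_pos ha, Real.mul_rpow (abs_nonneg x) ha.le]
  have h : a ^ (p-2) * a = a ^ (p-1) := by
    rw [← Real.rpow_add_one ha.ne' (p-2)]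
    congr 1; ring
  calc |x| ^ (p-2) * a ^ (p-2) * (x * a) = |x| ^ (p-2) * x * (a ^ (p-2) * a) := by ring
    _ = |x| ^ (p-2) * x * a ^ (p-1) := by rw [h]

/-- On a span interval, the scalar components of a vector solution form a scalar solution. -/
lemma SSol_of_span {T t0 b p Λ E0 : ℝ} (hp : 1 < p) {u u' : ℝ → E} {e : E}
    (he : ⟪e, e⟫ = 1) (he1 : ‖e‖ = 1)
    (hu : ∀ t ∈ Icc (0:ℝ) T, HasDerivWithinAt u (u' t) (Icc 0 T) t)
    (hu' : ContinuousOn u' (Icc 0 T))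
    (huode : ∀ t ∈ Icc (0:ℝ) T, HasDerivWithinAt (fun s => (‖u' s‖ ^ (p-2) : ℝ) • u' s)
        (-(Λ • ((‖u t‖ ^ (p-2) : ℝ) • u t))) (Icc 0 T) t)
    (hEn : ∀ t ∈ Icc (0:ℝ) T, (p-1) * ‖u' t‖ ^ p + Λ * ‖u t‖ ^ p = E0)
    (ht0 : 0 ≤ t0) (hbT : b ≤ T) (htb : t0 < b)
    (hspan : ∀ t ∈ Icc t0 b, u t = ⟪u t, e⟫ • e)
    (hspan' : ∀ t ∈ Icc t0 b, u' t = ⟪u' t, e⟫ • e) :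
    SSol p Λ E0 t0 b (fun s => ⟪u s, e⟫) (fun s => ⟪u' s, e⟫) := by
  have hsub : Icc t0 b ⊆ Icc (0:ℝ) T := Icc_subset_Icc ht0 hbT
  have hnu' : ∀ t ∈ Icc t0 b, ‖u' t‖ = |⟪u' t, e⟫| := by
    intro t ht
    conv_lhs => rw [hspan' t ht]
    rw [norm_smul, he1, mul_one, Real.norm_eq_abs]
  have hnu : ∀ t ∈ Icc t0 b, ‖u t‖ = |⟪u t, e⟫| := by
    intro t ht
    conv_lhs => rw [hspan t ht]
    rw [norm_smul, he1, mul_one, Real.norm_eq_abs]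
  constructor
  · intro t ht
    have := ((hu t (hsub ht)).mono hsub).inner ℝ (hasDerivWithinAt_const t _ e)
    simpa using this
  · exact (hu'.inner continuousOn_const).mono hsub
  · intro t ht
    have hvec := ((huode t (hsub ht)).mono hsub).inner ℝ (hasDerivWithinAt_const t _ e)
    simp only [inner_zero_right, add_zero, inner_neg_left, real_inner_smul_left] at hvec
    have hfun : ∀ s ∈ Icc t0 b,
        |⟪u' s, e⟫| ^ (p-2) * ⟪u' s, e⟫ = (‖u' s‖ ^ (p-2) : ℝ) * ⟪u' s, e⟫ := by
      intro s hs
      rw [hnu' s hs]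
    have hval : 0 + -(Λ * (‖u t‖ ^ (p-2) * ⟪u t, e⟫))
        = -(Λ * (|⟪u t, e⟫| ^ (p-2) * ⟪u t, e⟫)) := by
      rw [hnu t ht, zero_add]
    refine (hvec.congr (fun s hs => (hfun s hs)) (hfun t ht)).congr_deriv hval
  · intro t ht
    have := hEn t (hsub ht)
    rwa [hnu t ht, hnu' t ht] at this

end Bridge

section Scaled

/-- The rescaled `ω` is a scalar solution with parameter `Λ` and energy `(p-1) a^p`. -/
lemma SSol_scaled {p Λ a : ℝ} (hp : 1 < p) (hΛ : 0 < Λ) (ha : 0 < a)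
    {ω ω' : ℝ → ℝ}
    (hω : ∀ t ∈ Ici (0:ℝ), HasDerivWithinAt ω (ω' t) (Ici 0) t)
    (hω' : ContinuousOn ω' (Ici 0))
    (hωode : ∀ t ∈ Ici (0:ℝ), HasDerivWithinAt (fun s => |ω' s| ^ (p - 2) * ω' s)
        (-(|ω t| ^ (p - 2) * ω t)) (Ici 0) t)
    (hω0 : ω 0 = 0) (hω'0 : ω' 0 = 1) :
    SSol p Λ ((p-1) * a ^ p) 0 1 (fun t => (Λ ^ (-(1/p)) * ω (Λ ^ (1/p) * t)) * a)
      (fun t => ω' (Λ ^ (1/p) * t) * a) := by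
  have hppos : (0:ℝ) < p := by linarith
  set lam := Λ ^ (1/p : ℝ) with hlamdef
  have hlam : 0 < lam := Real.rpow_pos_of_pos hΛ _
  have hlaminv : Λ ^ (-(1/p) : ℝ) = lam⁻¹ := by
    rw [hlamdef, ← Real.rpow_neg_one (Λ ^ (1/p : ℝ)), ← Real.rpow_mul hΛ.le]
    congr 1; ring
  have hlampow : lam ^ p = Λ := by
    rw [hlamdef, ← Real.rpow_mul hΛ.le, one_div, inv_mul_cancel₀ hppos.ne', Real.rpow_one]
  have hmap : MapsTo (fun t : ℝ => lam * t) (Icc (0:ℝ) 1) (Ici (0:ℝ)) :=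
    fun t ht => mul_nonneg hlam.le ht.1
  have hlin : ∀ t : ℝ, HasDerivWithinAt (fun s : ℝ => lam * s) lam (Icc (0:ℝ) 1) t := by
    intro t
    simpa using (((hasDerivAt_id t).const_mul lam).hasDerivWithinAt (s := Icc (0:ℝ) 1))
  have hd : ∀ t ∈ Icc (0:ℝ) 1, HasDerivWithinAt
      (fun t => (Λ ^ (-(1/p) : ℝ) * ω (lam * t)) * a) (ω' (lam * t) * a) (Icc 0 1) t := by
    intro t ht
    have hcomp : HasDerivWithinAt (fun s => ω (lam * s)) (ω' (lam * t) * lam) (Icc 0 1) t :=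
      HasDerivWithinAt.comp t (hω (lam * t) (hmap ht)) (hlin t) hmap
    have := (hcomp.const_mul (Λ ^ (-(1/p) : ℝ))).mul_const a
    refine this.congr_deriv ?_
    rw [hlaminv]
    field_simp
  have hc : ContinuousOn (fun t => ω' (lam * t) * a) (Icc (0:ℝ) 1) := by
    exact ((hω'.comp ((continuous_const.mul continuous_id).continuousOn) hmap).mul
      continuousOn_const)
  have ho : ∀ t ∈ Icc (0:ℝ) 1, HasDerivWithinAt
      (fun s => |ω' (lam * s) * a| ^ (p-2) * (ω' (lam * s) * a))
      (-(Λ * (|(Λ ^ (-(1/p) : ℝ) * ω (lam * t)) * a| ^ (p-2)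
        * ((Λ ^ (-(1/p) : ℝ) * ω (lam * t)) * a)))) (Icc 0 1) t := by
    intro t ht
    have hcomp : HasDerivWithinAt (fun s => |ω' (lam * s)| ^ (p-2) * ω' (lam * s))
        (-(|ω (lam * t)| ^ (p-2) * ω (lam * t)) * lam) (Icc 0 1) t :=
      HasDerivWithinAt.comp t (hωode (lam * t) (hmap ht)) (hlin t) hmap
    have hbase := hcomp.mul_const (a ^ (p-1) : ℝ)
    have hfun : ∀ s : ℝ, |ω' (lam * s) * a| ^ (p-2) * (ω' (lam * s) * a)
        = (|ω' (lam * s)| ^ (p-2) * ω' (lam * s)) * a ^ (p-1) := fun s =>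
      opow_mul_const hp ha _
    refine (hbase.congr (fun s _ => hfun s) (hfun t)).congr_deriv ?_
    -- deriv equality
    have harg : (Λ ^ (-(1/p) : ℝ) * ω (lam * t)) * a = ω (lam * t) * (lam⁻¹ * a) := by
      rw [hlaminv]; ring
    rw [harg, opow_mul_const hp (by positivity) (ω (lam * t))]
    have hpow : Λ * (lam⁻¹ * a) ^ (p-1) = lam * a ^ (p-1) := by
      rw [Real.mul_rpow (inv_nonneg.mpr hlam.le) ha.le, Real.inv_rpow hlam.le]
      have h2 : lam * lam ^ (p-1) = Λ := by
        calc lam * lam ^ (p-1) = lam ^ (1:ℝ) * lam ^ (p-1) := by rw [Real.rpow_one]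
          _ = lam ^ (1 + (p-1)) := (Real.rpow_add hlam _ _).symm
          _ = lam ^ p := by congr 1; ring
          _ = Λ := hlampow
      have h3 : lam ^ (p-1) ≠ 0 := (Real.rpow_pos_of_pos hlam (p-1)).ne'
      rw [← h2]
      field_simp
    calc -(|ω (lam * t)| ^ (p-2) * ω (lam * t)) * lam * a ^ (p-1)
        = -(|ω (lam * t)| ^ (p-2) * ω (lam * t) * (lam * a ^ (p-1))) := by ring
      _ = -(Λ * (|ω (lam * t)| ^ (p-2) * ω (lam * t) * (lam⁻¹ * a) ^ (p-1))) := by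
          rw [← hpow]; ring
  refine ⟨hd, hc, ho, ?_⟩
  have hen := energy_conserved (E := ℝ) hp one_pos hd ho
  intro t ht
  have h0ρ : (Λ ^ (-(1/p) : ℝ) * ω (lam * 0)) * a = 0 := by
    rw [mul_zero, hω0, mul_zero, zero_mul]
  have h0σ : ω' (lam * 0) * a = a := by rw [mul_zero, hω'0, one_mul]
  have hthis := hen t ht
  rw [h0ρ, h0σ] at hthis
  simp only [Real.norm_eq_abs] at hthis
  rw [abs_of_pos ha, abs_zero, Real.zero_rpow hppos.ne', mul_zero, add_zero] at hthis
  exact hthis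

end Scaled

section SpanDeriv

variable {E : Type*} [NormedAddCommGroup E] [InnerProductSpace ℝ E]

lemma span_deriv {T : ℝ} {u u' : ℝ → E} {e : E}
    (hu : ∀ t ∈ Icc (0:ℝ) T, HasDerivWithinAt u (u' t) (Icc 0 T) t)
    {c d : ℝ} (hcd : c < d) (hc : 0 ≤ c) (hd : d ≤ T)
    (hspan : ∀ t ∈ Icc c d, u t = ⟪u t, e⟫ • e) :
    ∀ t ∈ Icc c d, u' t = ⟪u' t, e⟫ • e := by
  intro t ht
  have htT : t ∈ Icc (0:ℝ) T := ⟨le_trans hc ht.1, le_trans ht.2 hd⟩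
  have hsub : Icc c d ⊆ Icc (0:ℝ) T := Icc_subset_Icc hc hd
  have h1 : HasDerivWithinAt u (u' t) (Icc c d) t := (hu t htT).mono hsub
  have hin : HasDerivWithinAt (fun s => ⟪u s, e⟫) ⟪u' t, e⟫ (Icc c d) t := by
    have := ((hu t htT).mono hsub).inner ℝ (hasDerivWithinAt_const t _ e)
    simpa using this
  have h2 : HasDerivWithinAt (fun s => ⟪u s, e⟫ • e) (⟪u' t, e⟫ • e) (Icc c d) t :=
    hin.smul_const e
  have h3 : HasDerivWithinAt u (⟪u' t, e⟫ • e) (Icc c d) t :=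
    h2.congr (fun s hs => hspan s hs) (hspan t ht)
  have hud := uniqueDiffOn_Icc hcd t ht
  have h4 := h1.derivWithin hud
  have h5 := h3.derivWithin hud
  conv_lhs => rw [← h4]
  exact h5

end SpanDeriv

/-- Classification of vectorial Dirichlet eigenfunctions in one dimension. -/
theorem classification_1d_eigenfunctions (p Λ : ℝ) (hp : 1 < p) (hΛ : 0 < Λ)
    (N : ℕ) (hN : 1 ≤ N)
    (ω ω' : ℝ → ℝ)
    (hω : ∀ t ∈ Set.Ici (0:ℝ), HasDerivWithinAt ω (ω' t) (Set.Ici 0) t)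
    (hω' : ContinuousOn ω' (Set.Ici 0))
    (hωode : ∀ t ∈ Set.Ici (0:ℝ),
      HasDerivWithinAt (fun s => |ω' s| ^ (p - 2) * ω' s)
        (-(|ω t| ^ (p - 2) * ω t)) (Set.Ici 0) t)
    (hω0 : ω 0 = 0) (hω'0 : ω' 0 = 1)
    (u u' : ℝ → EuclideanSpace ℝ (Fin N))
    (hu : ∀ t ∈ Set.Icc (0:ℝ) 1, HasDerivWithinAt u (u' t) (Set.Icc 0 1) t)
    (hu' : ContinuousOn u' (Set.Icc 0 1))
    (hnontriv : ∃ t ∈ Set.Icc (0:ℝ) 1, u t ≠ 0)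
    (huode : ∀ t ∈ Set.Icc (0:ℝ) 1,
      HasDerivWithinAt (fun s => ‖u' s‖ ^ (p - 2) • u' s)
        (-(Λ • (‖u t‖ ^ (p - 2) • u t))) (Set.Icc 0 1) t)
    (hu0 : u 0 = 0) (hu1 : u 1 = 0) :
    (∀ t ∈ Set.Icc (0:ℝ) 1, u t = (Λ ^ (-(1 / p)) * ω (Λ ^ (1 / p) * t)) • u' 0) ∧
    u' 0 ≠ 0 ∧ ω (Λ ^ (1 / p)) = 0 := by
  have hppos : (0:ℝ) < p := by linarith
  have hp1 : (0:ℝ) < p - 1 := by linarith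
  -- energy conservation
  have hEn0 := energy_conserved hp one_pos hu huode
  have hu0n : ‖u (0:ℝ)‖ ^ p = 0 := by rw [hu0, norm_zero, Real.zero_rpow hppos.ne']
  have hEn : ∀ t ∈ Icc (0:ℝ) 1, (p-1) * ‖u' t‖ ^ p + Λ * ‖u t‖ ^ p
      = (p-1) * ‖u' 0‖ ^ p := by
    intro t ht
    have h := hEn0 t ht
    rwa [hu0n, mul_zero, add_zero] at h
  -- u' 0 ≠ 0
  have ha : u' 0 ≠ 0 := by
    intro h0
    obtain ⟨t, ht, hne⟩ := hnontriv
    have h := hEn t ht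
    rw [h0, norm_zero, Real.zero_rpow hppos.ne', mul_zero] at h
    have h1 : 0 ≤ (p-1) * ‖u' t‖ ^ p := by positivity
    have h2 : (0:ℝ) < ‖u t‖ ^ p := Real.rpow_pos_of_pos (norm_pos_iff.mpr hne) _
    nlinarith
  set a := ‖u' 0‖ with hadef
  have hapos : 0 < a := norm_pos_iff.mpr ha
  set e : EuclideanSpace ℝ (Fin N) := a⁻¹ • u' 0 with hedef
  have he1 : ‖e‖ = 1 := by
    rw [hedef, norm_smul, Real.norm_eq_abs, abs_of_pos (inv_pos.mpr hapos)]
    exact inv_mul_cancel₀ hapos.ne'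
  have he : ⟪e, e⟫ = 1 := by
    rw [real_inner_self_eq_norm_mul_norm, he1, one_mul]
  have hu'0e : u' 0 = a • e := by
    rw [hedef, smul_smul, mul_inv_cancel₀ hapos.ne', one_smul]
  -- angular momentum / parallelism
  have hNid := angular_momentum hp one_pos hu huode hu0
  -- candidate scalar solution
  set E0 := (p-1) * a ^ p with hE0def
  have hE0 : 0 < E0 := mul_pos hp1 (Real.rpow_pos_of_pos hapos _)
  set ρc : ℝ → ℝ := fun t => (Λ ^ (-(1/p)) * ω (Λ ^ (1/p) * t)) * a with hρcdef
  set σc : ℝ → ℝ := fun t => ω' (Λ ^ (1/p) * t) * a with hσcdef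
  have hSc : SSol p Λ E0 0 1 ρc σc := SSol_scaled hp hΛ hapos hω hω' hωode hω0 hω'0
  have hρc0 : ρc 0 = 0 := by
    show (Λ ^ (-(1/p)) * ω (Λ ^ (1/p) * 0)) * a = 0
    rw [mul_zero, hω0, mul_zero, zero_mul]
  have hσc0 : σc 0 = a := by
    show ω' (Λ ^ (1/p) * 0) * a = a
    rw [mul_zero, hω'0, one_mul]
  have hEnE0 : ∀ t ∈ Icc (0:ℝ) 1, (p-1) * ‖u' t‖ ^ p + Λ * ‖u t‖ ^ p = E0 := by
    intro t ht; rw [hE0def]; exact hEn t ht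
  -- the induction set
  set D := {t : ℝ | t ∈ Icc (0:ℝ) 1 ∧
    ∀ s ∈ Icc (0:ℝ) t, u s = ρc s • e ∧ u' s = σc s • e} with hDdef
  have hD0 : (0:ℝ) ∈ D := by
    refine ⟨⟨le_rfl, zero_le_one⟩, ?_⟩
    intro s hs
    have hs0 : s = 0 := le_antisymm hs.2 hs.1
    subst hs0
    exact ⟨by rw [hu0, hρc0, zero_smul], by rw [hu'0e, hσc0]⟩
  have hDbdd : BddAbove D := ⟨1, fun t ht => ht.1.2⟩
  have hDne : D.Nonempty := ⟨0, hD0⟩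
  set c0 := sSup D with hc0def
  have hc0mem : c0 ∈ Icc (0:ℝ) 1 := ⟨le_csSup hDbdd hD0, csSup_le hDne (fun t ht => ht.1.2)⟩
  have hprop : ∀ s ∈ Icc (0:ℝ) 1, s < c0 → (u s = ρc s • e ∧ u' s = σc s • e) := by
    intro s hs hlt
    obtain ⟨t, htD, hst⟩ := exists_lt_of_lt_csSup hDne hlt
    exact htD.2 s ⟨hs.1, hst.le⟩
  have hucont : ContinuousOn u (Icc (0:ℝ) 1) := fun t ht => (hu t ht).continuousWithinAt
  have hc0D : c0 ∈ D := by
    refine ⟨hc0mem, ?_⟩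
    intro s hs
    rcases lt_or_eq_of_le hs.2 with hlt | hseq
    · exact hprop s ⟨hs.1, le_trans hs.2 hc0mem.2⟩ hlt
    · subst hseq
      rcases eq_or_lt_of_le hs.1 with h0s | h0s
      · rw [← h0s]
        exact ⟨by rw [hu0, hρc0, zero_smul], by rw [hu'0e, hσc0]⟩
      · -- continuity from the left
        have hlim : ∀ (F G : ℝ → EuclideanSpace ℝ (Fin N)), ContinuousOn F (Icc 0 1) →
            ContinuousOn G (Icc 0 1) → (∀ x ∈ Ico (0:ℝ) c0, F x = G x) → F c0 = G c0 := by
          intro F G hF hG hFG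
          have hsub : Ico (0:ℝ) c0 ⊆ Icc 0 1 :=
            fun x hx => ⟨hx.1, le_trans hx.2.le hc0mem.2⟩
          have hne : (𝓝[Ico (0:ℝ) c0] c0).NeBot := by
            rw [nhdsWithin_Ico_eq_nhdsLT h0s]
            infer_instance
          have h1 : Filter.Tendsto F (𝓝[Ico (0:ℝ) c0] c0) (𝓝 (F c0)) :=
            ((hF c0 hc0mem).mono_left (nhdsWithin_mono _ hsub))
          have h2 : Filter.Tendsto G (𝓝[Ico (0:ℝ) c0] c0) (𝓝 (G c0)) :=
            ((hG c0 hc0mem).mono_left (nhdsWithin_mono _ hsub))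
          have hEq : ∀ᶠ x in 𝓝[Ico (0:ℝ) c0] c0, G x = F x := by
            filter_upwards [self_mem_nhdsWithin] with x hx
            exact (hFG x hx).symm
          exact tendsto_nhds_unique h1 (h2.congr' hEq)
        constructor
        · exact hlim u (fun x => ρc x • e) hucont (hSc.contρ.smul continuousOn_const)
            (fun x hx => (hprop x ⟨hx.1, le_trans hx.2.le hc0mem.2⟩ hx.2).1)
        · exact hlim u' (fun x => σc x • e) hu' (hSc.cont.smul continuousOn_const)
            (fun x hx => (hprop x ⟨hx.1, le_trans hx.2.le hc0mem.2⟩ hx.2).2)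
  rcases eq_or_lt_of_le hc0mem.2 with hc01 | hc01
  · -- c0 = 1: conclude
    have hall : ∀ t ∈ Icc (0:ℝ) 1, u t = ρc t • e ∧ u' t = σc t • e := by
      intro t ht
      exact hc0D.2 t ⟨ht.1, by rw [hc01]; exact ht.2⟩
    refine ⟨?_, ha, ?_⟩
    · intro t ht
      calc u t = ρc t • e := (hall t ht).1
        _ = ((Λ ^ (-(1/p)) * ω (Λ ^ (1/p) * t)) * a) • e := rfl
        _ = (Λ ^ (-(1/p)) * ω (Λ ^ (1/p) * t)) • (a • e) := by rw [mul_smul]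
        _ = (Λ ^ (-(1/p)) * ω (Λ ^ (1/p) * t)) • u' 0 := by rw [← hu'0e]
    · have h1 := (hall 1 ⟨zero_le_one, le_rfl⟩).1
      rw [hu1] at h1
      have h2 : ρc 1 = 0 := by
        rcases smul_eq_zero.mp h1.symm with h | h
        · exact h
        · exfalso
          rw [h, norm_zero] at he1
          exact one_ne_zero he1.symm
      have h3 : (Λ ^ (-(1/p)) * ω (Λ ^ (1/p) * 1)) * a = 0 := h2
      rw [mul_one] at h3
      have hΛne : Λ ^ (-(1/p) : ℝ) ≠ 0 := (Real.rpow_pos_of_pos hΛ _).ne'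
      rcases mul_eq_zero.mp h3 with h | h
      · rcases mul_eq_zero.mp h with h' | h'
        · exact absurd h' hΛne
        · exact h'
      · exact absurd h hapos.ne'
  · -- c0 < 1: extend, contradiction
    exfalso
    have hspan0 := hc0D.2 c0 ⟨hc0mem.1, le_rfl⟩
    have hne0 : ρc c0 ≠ 0 ∨ σc c0 ≠ 0 := by
      by_contra hcon
      push_neg at hcon
      have hE := hSc.energy c0 ⟨hc0mem.1, hc01.le⟩
      rw [hcon.1, hcon.2] at hE
      simp [Real.zero_rpow hppos.ne'] at hE
      linarith
    obtain ⟨b1, hb1, hspan⟩ := span_step he hu hNid ⟨hc0mem.1, hc01⟩ hspan0.1 hspan0.2 hne0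
    have hspan' := span_deriv hu hb1.1 hc0mem.1 hb1.2 hspan
    have hSu : SSol p Λ E0 c0 b1 (fun s => ⟪u s, e⟫) (fun s => ⟪u' s, e⟫) :=
      SSol_of_span hp he he1 hu hu' huode hEnE0 hc0mem.1 hb1.2 hb1.1 hspan hspan'
    have hSc' : SSol p Λ E0 c0 b1 ρc σc := hSc.mono hc0mem.1 hb1.2 hb1.1.le
    have hinit1 : ⟪u c0, e⟫ = ρc c0 := by
      rw [hspan0.1, real_inner_smul_left, he, mul_one]
    have hinit2 : ⟪u' c0, e⟫ = σc c0 := by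
      rw [hspan0.2, real_inner_smul_left, he, mul_one]
    obtain ⟨b, hb, heq⟩ := scalar_local_unique hp hΛ hE0 hb1.1 hSu hSc' hinit1 hinit2
    have hbD : b ∈ D := by
      refine ⟨⟨le_trans hc0mem.1 hb.1.le, hb.2.trans hb1.2⟩, ?_⟩
      intro s hs
      rcases le_or_gt s c0 with hsc | hsc
      · exact hc0D.2 s ⟨hs.1, hsc⟩
      · have hsIcc : s ∈ Icc c0 b := ⟨hsc.le, hs.2⟩
        obtain ⟨hρe, hσe⟩ := heq s hsIcc
        have hsIcc1 : s ∈ Icc c0 b1 := ⟨hsc.le, le_trans hs.2 hb.2⟩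
        exact ⟨by rw [hspan s hsIcc1, hρe], by rw [hspan' s hsIcc1, hσe]⟩
    have := le_csSup hDbdd hbD
    have hbc0 : c0 < b := hb.1
    linarith
end

section
/- Equality of the vectorial and scalar fractional Rayleigh infima: let s ∈ (0, 1), 1 < p < ∞, n ≥ 1, N ≥ 1, and let Ω ⊂ ℝ^n be a bounded open set. For each M ≥ 1 let A_M be the set of measurable functions v : ℝ^n → ℝ^M with v = 0 almost everywhere on ℝ^n ∖ Ω and 0 < ∫_Ω ‖v‖^p dx < ∞, and let Λ^M_s = inf { E(v) / ∫_Ω ‖v‖^p dx : v ∈ A_M } (an infimum in [0, ∞]). Then Λ^N_s = Λ^1_s. -/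
open MeasureTheory
open scoped ENNReal

/-- The Gagliardo energy of a function `v : ℝⁿ → ℝᴹ`, valued in `[0, ∞]`. -/
noncomputable def gagliardoEnergy (s p : ℝ) (n M : ℕ)
    (v : EuclideanSpace ℝ (Fin n) → EuclideanSpace ℝ (Fin M)) : ℝ≥0∞ :=
  ∫⁻ x, ∫⁻ y,
    ENNReal.ofReal (‖v x - v y‖ ^ p) / ENNReal.ofReal (‖x - y‖ ^ ((n : ℝ) + s * p))

/-- The admissible class `A_M`: measurable functions vanishing a.e. outside `Ω`
with `0 < ∫_Ω ‖v‖^p < ∞`. -/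
def admissible (p : ℝ) (n M : ℕ) (Ω : Set (EuclideanSpace ℝ (Fin n)))
    (v : EuclideanSpace ℝ (Fin n) → EuclideanSpace ℝ (Fin M)) : Prop :=
  Measurable v ∧ (∀ᵐ x ∂(volume.restrict Ωᶜ), v x = 0) ∧
    0 < (∫⁻ x in Ω, ENNReal.ofReal (‖v x‖ ^ p)) ∧
    (∫⁻ x in Ω, ENNReal.ofReal (‖v x‖ ^ p)) < ⊤

/-- The infimum of the fractional Rayleigh quotient over `A_M`, in `[0, ∞]`. -/
noncomputable def fracRayleighInf (s p : ℝ) (n M : ℕ)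
    (Ω : Set (EuclideanSpace ℝ (Fin n))) : ℝ≥0∞ :=
  sInf {r : ℝ≥0∞ | ∃ v : EuclideanSpace ℝ (Fin n) → EuclideanSpace ℝ (Fin M),
    admissible p n M Ω v ∧
      r = gagliardoEnergy s p n M v / ∫⁻ x in Ω, ENNReal.ofReal (‖v x‖ ^ p)}


lemma aux_frac_rayleigh_le (s p : ℝ) (hp : 0 ≤ p) (n M M' : ℕ) (hM : 0 < M)
    (Ω : Set (EuclideanSpace ℝ (Fin n))) :
    fracRayleighInf s p n M Ω ≤ fracRayleighInf s p n M' Ω := by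
  apply le_sInf
  rintro r ⟨w, ⟨hwm, hw0, hpos, hfin⟩, rfl⟩
  set j : Fin M := ⟨0, hM⟩
  set v : EuclideanSpace ℝ (Fin n) → EuclideanSpace ℝ (Fin M) :=
    fun x => EuclideanSpace.single j ‖w x‖ with hv
  have hvm : Measurable v := by
    have : Isometry (fun a : ℝ => EuclideanSpace.single j a) := by
      intro a b
      simp [edist_dist, EuclideanSpace.dist_single_same]
    exact this.continuous.measurable.comp hwm.norm
  have hnorm : ∀ x, ‖v x‖ = ‖w x‖ := by
    intro x; simp [hv, EuclideanSpace.norm_single]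
  have hint : (∫⁻ x in Ω, ENNReal.ofReal (‖v x‖ ^ p))
      = ∫⁻ x in Ω, ENNReal.ofReal (‖w x‖ ^ p) := by
    apply lintegral_congr; intro x; rw [hnorm]
  have hsub : ∀ x y, ‖v x - v y‖ ≤ ‖w x - w y‖ := by
    intro x y
    have h1 : ‖v x - v y‖ = dist (v x) (v y) := (dist_eq_norm _ _).symm
    rw [h1, hv]
    simp only [EuclideanSpace.dist_single_same]
    rw [Real.dist_eq]
    exact (abs_norm_sub_norm_le _ _).trans (le_of_eq rfl)
  have hE : gagliardoEnergy s p n M v ≤ gagliardoEnergy s p n M' w := by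
    refine lintegral_mono fun x => lintegral_mono fun y => ?_
    gcongr
    exact hsub x y
  have hv0 : ∀ᵐ x ∂(volume.restrict Ωᶜ), v x = 0 := by
    filter_upwards [hw0] with x hx
    rw [hv]; simp only [hx, norm_zero]
    ext i; simp [EuclideanSpace.single_apply]
  calc fracRayleighInf s p n M Ω
      ≤ gagliardoEnergy s p n M v / ∫⁻ x in Ω, ENNReal.ofReal (‖v x‖ ^ p) :=
        sInf_le ⟨v, ⟨hvm, hv0, by rw [hint]; exact hpos, by rw [hint]; exact hfin⟩, rfl⟩
    _ ≤ gagliardoEnergy s p n M' w / ∫⁻ x in Ω, ENNReal.ofReal (‖w x‖ ^ p) := by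
        rw [hint]; exact ENNReal.div_le_div_right hE _

/-- Equality of the vectorial and scalar fractional Rayleigh infima. -/
theorem frac_rayleigh_inf_eq (s p : ℝ) (hs : s ∈ Set.Ioo (0:ℝ) 1) (hp : 1 < p)
    (n N : ℕ) (hn : 1 ≤ n) (hN : 1 ≤ N)
    (Ω : Set (EuclideanSpace ℝ (Fin n))) (hΩo : IsOpen Ω)
    (hΩb : Bornology.IsBounded Ω) :
    fracRayleighInf s p n N Ω = fracRayleighInf s p n 1 Ω := by
  have hp0 : (0:ℝ) ≤ p := le_of_lt (lt_trans one_pos hp)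
  exact le_antisymm (aux_frac_rayleigh_le s p hp0 n N 1 hN Ω)
    (aux_frac_rayleigh_le s p hp0 n 1 N one_pos Ω)
end
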